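/- arXiv:2203.16360 — 5 statements merged into one kernel-verified Lean document; each statement's English description precedes it below -/
import Mathlib

section
/- If a 2-vector ω ∈ ⋀²V decomposes as ω = σ + ω', where σ = v∧w is simple (nonzero) and the span of {v,w} is in direct sum with spt(ω'), then rank(ω) = rank(ω') + 1. -/
open scoped BigOperators

variable {V : Type*} [AddCommGroup V] [Module ℝ V]

/-- The wedge of two vectors, as an element of the exterior algebra. -/
noncomputable def wedge (v w : V) : ExteriorAlgebra ℝ V :=
  ExteriorAlgebra.ι ℝ v * ExteriorAlgebra.ι ℝ w

/-- The rank of a 2-vector: the smallest `k` such that it is a sum of `k` simple 2-vectors. -/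
noncomputable def rank2 (ω : ExteriorAlgebra ℝ V) : ℕ :=
  sInf {k | ∃ a b : Fin k → V, ω = ∑ i, wedge (a i) (b i)}

/-- The span of the vectors appearing in a decomposition. -/
noncomputable def sptOf {k : ℕ} (a b : Fin k → V) : Submodule ℝ V :=
  Submodule.span ℝ (Set.range a ∪ Set.range b)

/-- `⋀²W`, the subspace of the exterior algebra spanned by wedges of elements of `W`. -/
def wedgeSpan (W : Submodule ℝ V) : Submodule ℝ (ExteriorAlgebra ℝ V) :=
  Submodule.span ℝ {x | ∃ v ∈ W, ∃ w ∈ W, x = wedge v w}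

/-- The support of a 2-vector: the smallest subspace `W` with `ω ∈ ⋀²W`. -/
noncomputable def spt (ω : ExteriorAlgebra ℝ V) : Submodule ℝ V :=
  sInf {W | ω ∈ wedgeSpan W}

section PowLemmas
variable {A : Type*} [Ring A]

lemma sum_sq_zero_pow_succ :
    ∀ (n : ℕ) (σ : Fin n → A), (∀ i j, Commute (σ i) (σ j)) → (∀ i, σ i * σ i = 0) →
      (∑ i, σ i) ^ (n + 1) = 0 := by
  intro n
  induction n with
  | zero => intro σ _ _; simp
  | succ n ih =>
    intro σ hc hsq
    rw [Fin.sum_univ_succ]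
    have hy : (∑ i : Fin n, σ i.succ) ^ (n + 1) = 0 := ih _ (fun i j => hc _ _) fun i => hsq _
    have hcom : Commute (σ 0) (∑ i : Fin n, σ i.succ) :=
      Commute.sum_right _ _ _ fun i _ => hc _ _
    rw [Commute.add_pow hcom]
    apply Finset.sum_eq_zero
    intro k hk
    rcases lt_or_ge k 2 with h2 | h2
    · have hek : (n + 1 + 1) - k = (n + 1) + ((n + 2) - k - (n + 1)) := by omega
      rw [hek, pow_add, hy, zero_mul, mul_zero, zero_mul]
    · have hek : k = 2 + (k - 2) := by omega
      have : σ 0 ^ k = 0 := by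
        rw [hek, pow_add, pow_two, hsq 0, zero_mul]
      rw [this, zero_mul, zero_mul]

lemma sum_sq_zero_pow_eq :
    ∀ (n : ℕ) (σ : Fin n → A), (∀ i j, Commute (σ i) (σ j)) → (∀ i, σ i * σ i = 0) →
      (∑ i, σ i) ^ n = Nat.factorial n • (List.ofFn σ).prod := by
  intro n
  induction n with
  | zero => intro σ _ _; simp
  | succ n ih =>
    intro σ hc hsq
    have hy : (∑ i : Fin n, σ i.succ) ^ (n + 1) = 0 :=
      sum_sq_zero_pow_succ n _ (fun i j => hc _ _) fun i => hsq _
    have hcom : Commute (σ 0) (∑ i : Fin n, σ i.succ) :=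
      Commute.sum_right _ _ _ fun i _ => hc _ _
    rw [Fin.sum_univ_succ, Commute.add_pow hcom]
    rw [Finset.sum_eq_single_of_mem 1 (by simp)]
    · rw [pow_one]
      have h1 : (n + 1) - 1 = n := by omega
      rw [h1, ih _ (fun i j => hc _ _) (fun i => hsq _)]
      have hcast : ∀ z : A, z * ((n + 1).choose 1 : A) = (n + 1) • z := by
        intro z
        rw [← (Nat.cast_commute ((n + 1).choose 1) z).eq, Nat.choose_one_right, nsmul_eq_mul]
      rw [hcast, mul_smul_comm, smul_smul, List.ofFn_succ, List.prod_cons, Nat.factorial_succ]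
    · intro k hk hne
      rcases lt_or_ge k 2 with h2 | h2
      · have hk0 : k = 0 := by omega
        subst hk0
        have : (n + 1) - 0 = n + 1 := by omega
        rw [this, pow_zero, one_mul, hy, zero_mul]
      · have hek : k = 2 + (k - 2) := by omega
        have : σ 0 ^ k = 0 := by rw [hek, pow_add, pow_two, hsq 0, zero_mul]
        rw [this, zero_mul, zero_mul]

end PowLemmas

namespace Stmt5Aux
open ExteriorAlgebra

local notation "ιι" => ExteriorAlgebra.ι ℝ

lemma swapι (x y : V) : ιι x * ιι y = -(ιι y * ιι x) :=
  eq_neg_of_add_eq_zero_left (ι_add_mul_swap x y)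

lemma ι_comm_ww (b x y : V) : ιι b * (ιι x * ιι y) = (ιι x * ιι y) * ιι b := by
  rw [← mul_assoc, swapι b x, neg_mul, mul_assoc, swapι b y, mul_neg, neg_neg, ← mul_assoc]

lemma wedge_commute (a b x y : V) : Commute (wedge a b) (wedge x y) := by
  unfold Commute SemiconjBy wedge
  calc ιι a * ιι b * (ιι x * ιι y) = ιι a * (ιι b * (ιι x * ιι y)) := mul_assoc _ _ _
    _ = ιι a * (ιι x * ιι y) * ιι b := by rw [ι_comm_ww b x y, ← mul_assoc]
    _ = ιι x * ιι y * ιι a * ιι b := by rw [ι_comm_ww a x y]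
    _ = ιι x * ιι y * (ιι a * ιι b) := mul_assoc _ _ _

lemma wedge_sq (v w : V) : wedge v w * wedge v w = 0 := by
  unfold wedge
  rw [mul_assoc, ← mul_assoc (ιι w), swapι w v, neg_mul, mul_assoc, ι_sq_zero, mul_zero,
    neg_zero, mul_zero]


/-- Contraction by a dual vector. -/
noncomputable abbrev ctr (f : Module.Dual ℝ V) :
    ExteriorAlgebra ℝ V →ₗ[ℝ] ExteriorAlgebra ℝ V :=
  CliffordAlgebra.contractLeft f

lemma ctr_ι_mul (f : Module.Dual ℝ V) (a : V) (x : ExteriorAlgebra ℝ V) :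
    ctr f (ιι a * x) = f a • x - ιι a * ctr f x :=
  CliffordAlgebra.contractLeft_ι_mul f a x

lemma ctr_ι (f : Module.Dual ℝ V) (a : V) :
    ctr f (ιι a) = algebraMap ℝ _ (f a) :=
  CliffordAlgebra.contractLeft_ι _ _ _

lemma ctr_one (f : Module.Dual ℝ V) : ctr f 1 = 0 :=
  CliffordAlgebra.contractLeft_one _ _

lemma ctr_wedge_mul (f : Module.Dual ℝ V) (u w : V) (x : ExteriorAlgebra ℝ V) :
    ctr f (wedge u w * x) =
      f u • (ιι w * x) - f w • (ιι u * x) + wedge u w * ctr f x := by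
  rw [wedge, mul_assoc, ctr_ι_mul, ctr_ι_mul, mul_sub, mul_smul_comm, ← mul_assoc]
  abel

lemma ctr_wedge (f : Module.Dual ℝ V) (u w : V) :
    ctr f (wedge u w) = f u • ιι w - f w • ιι u := by
  have h := ctr_wedge_mul f u w 1
  simpa [ctr_one] using h

/-- Existence of a dual functional that is 1 on `u` and vanishes on `W`. -/
lemma exists_dual (W : Submodule ℝ V) (u : V) (hu : u ∉ W) :
    ∃ f : Module.Dual ℝ V, f u = 1 ∧ ∀ y ∈ W, f y = 0 := by
  have hq : W.mkQ u ≠ 0 := by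
    simpa [Submodule.Quotient.mk_eq_zero] using hu
  have := (Module.forall_dual_apply_eq_zero_iff ℝ (W.mkQ u)).not.2 hq
  push_neg at this
  obtain ⟨g, hg⟩ := this
  refine ⟨(g (W.mkQ u))⁻¹ • (g.comp W.mkQ), ?_, ?_⟩
  · simpa using inv_mul_cancel₀ hg
  · intro y hy
    simp [(Submodule.Quotient.mk_eq_zero W).2 hy, Submodule.mkQ_apply]

lemma exists_dual_family {ι : Type*} (x : ι → V) (hx : LinearIndependent ℝ x) (i₀ : ι) :
    ∃ f : Module.Dual ℝ V, f (x i₀) = 1 ∧ ∀ j ≠ i₀, f (x j) = 0 := by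
  have h := hx.notMem_span_image (x := i₀) (s := ({i₀}ᶜ : Set ι)) (by simp)
  obtain ⟨f, hf1, hf0⟩ := exists_dual _ _ h
  exact ⟨f, hf1, fun j hj => hf0 _ (Submodule.subset_span ⟨j, by simpa using hj, rfl⟩)⟩

/-- Ordered product of a family of wedges. -/
noncomputable def wprod {k : ℕ} (a b : Fin k → V) : ExteriorAlgebra ℝ V :=
  (List.ofFn fun i => wedge (a i) (b i)).prod

lemma wprod_zero (a b : Fin 0 → V) : wprod a b = 1 := by simp [wprod]

lemma wprod_succ {k : ℕ} (a b : Fin (k + 1) → V) :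
    wprod a b = wedge (a 0) (b 0) * wprod (fun i => a i.succ) (fun i => b i.succ) := by
  rw [wprod, List.ofFn_succ, List.prod_cons]; rfl

lemma ctr_wprod_zero (f : Module.Dual ℝ V) :
    ∀ {k : ℕ} (a b : Fin k → V), (∀ i, f (a i) = 0) → (∀ i, f (b i) = 0) →
      ctr f (wprod a b) = 0 := by
  intro k
  induction k with
  | zero => intro a b _ _; rw [wprod_zero]; exact ctr_one f
  | succ k ih =>
    intro a b ha hb
    rw [wprod_succ, ctr_wedge_mul, ha 0, hb 0,
      ih _ _ (fun i => ha i.succ) (fun i => hb i.succ)]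
    simp

lemma wprod_ne_zero : ∀ {k : ℕ} (a b : Fin k → V),
    LinearIndependent ℝ (Sum.elim a b) → wprod a b ≠ 0 := by
  intro k
  induction k with
  | zero => intro a b _; rw [wprod_zero]; exact one_ne_zero
  | succ k ih =>
    intro a b hLI
    have htail : LinearIndependent ℝ
        (Sum.elim (fun i : Fin k => a i.succ) (fun i : Fin k => b i.succ)) := by
      have hinj : Function.Injective (Sum.map (Fin.succ : Fin k → Fin (k+1)) Fin.succ) :=
        Function.Injective.sumMap (Fin.succ_injective k) (Fin.succ_injective k)
      have := hLI.comp _ hinj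
      convert this using 1
      ext j; cases j <;> simp
    obtain ⟨g, hg1, hg0⟩ := exists_dual_family _ hLI (Sum.inl 0)
    obtain ⟨h, hh1, hh0⟩ := exists_dual_family _ hLI (Sum.inr 0)
    set T := wprod (fun i : Fin k => a i.succ) (fun i : Fin k => b i.succ) with hT
    have hhT : ctr h T = 0 :=
      ctr_wprod_zero h _ _ (fun i => hh0 (Sum.inl i.succ) (by simp))
        (fun i => hh0 (Sum.inr i.succ) (by simp [Fin.succ_ne_zero]))
    have hgT : ctr g T = 0 :=
      ctr_wprod_zero g _ _ (fun i => hg0 (Sum.inl i.succ) (by simp [Fin.succ_ne_zero]))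
        (fun i => hg0 (Sum.inr i.succ) (by simp))
    have ha0 : h (a 0) = 0 := hh0 (Sum.inl 0) (by simp)
    have hb0g : g (b 0) = 0 := hg0 (Sum.inr 0) (by simp)
    have ha0g : g (a 0) = 1 := hg1
    have hb0 : h (b 0) = 1 := hh1
    intro h0
    have hc1 : ctr h (wprod a b) = -(ιι (a 0) * T) := by
      rw [wprod_succ, ctr_wedge_mul, ha0, hb0, hhT, mul_zero]
      simp
      rfl
    have hc2 : ctr g (ctr h (wprod a b)) = -T := by
      rw [hc1, map_neg, ctr_ι_mul, ha0g, hgT, mul_zero, one_smul, sub_zero]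
    rw [h0, map_zero, map_zero] at hc2
    exact ih _ _ htail (by rw [← neg_eq_zero, ← hc2])


lemma ctr_mem_wedgeSpan_zero (f : Module.Dual ℝ V) (W : Submodule ℝ V)
    (hf : ∀ y ∈ W, f y = 0) {x : ExteriorAlgebra ℝ V} (hx : x ∈ wedgeSpan W) :
    ctr f x = 0 := by
  induction hx using Submodule.span_induction with
  | mem z hz =>
    obtain ⟨u, hu, w, hw, rfl⟩ := hz
    rw [ctr_wedge, hf u hu, hf w hw]; simp
  | zero => simp
  | add x y _ _ hx hy => rw [map_add, hx, hy, add_zero]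
  | smul c x _ hx => rw [map_smul, hx, smul_zero]

lemma ctr_sum_wedge (f : Module.Dual ℝ V) {k : ℕ} (a b : Fin k → V) :
    ctr f (∑ i, wedge (a i) (b i)) = ιι (∑ i, (f (a i) • b i - f (b i) • a i)) := by
  rw [map_sum, map_sum]
  refine Finset.sum_congr rfl fun i _ => ?_
  rw [ctr_wedge, map_sub, map_smul, map_smul]

lemma decomp_vectors_mem {k : ℕ} (a b : Fin k → V)
    (hLI : LinearIndependent ℝ (Sum.elim a b)) (W : Submodule ℝ V)
    (hW : (∑ i, wedge (a i) (b i)) ∈ wedgeSpan W) :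
    ∀ i, a i ∈ W ∧ b i ∈ W := by
  have key : ∀ f : Module.Dual ℝ V, (∀ y ∈ W, f y = 0) →
      ∀ i, f (a i) = 0 ∧ f (b i) = 0 := by
    intro f hf
    have h0 : ctr f (∑ i, wedge (a i) (b i)) = 0 := ctr_mem_wedgeSpan_zero f W hf hW
    rw [ctr_sum_wedge] at h0
    have hv : (∑ i, (f (a i) • b i - f (b i) • a i)) = 0 := by
      have h0' : ιι (∑ i, (f (a i) • b i - f (b i) • a i)) = ιι (0 : V) := by
        rw [h0, map_zero]
      exact (ExteriorAlgebra.ι_inj (R := ℝ) _ _).1 h0'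
    have hco := Fintype.linearIndependent_iff.1 hLI
        (Sum.elim (fun i => -(f (b i))) (fun i => f (a i))) ?side
    case side =>
      rw [Fintype.sum_sum_type]
      simp only [Sum.elim_inl, Sum.elim_inr]
      rw [Finset.sum_sub_distrib] at hv
      simp only [neg_smul]
      rw [Finset.sum_neg_distrib, add_comm, ← sub_eq_add_neg]
      exact hv
    intro i
    refine ⟨by simpa using hco (Sum.inr i), ?_⟩
    have := hco (Sum.inl i)
    simpa using neg_eq_zero.1 this
  intro i
  constructor
  · by_contra hmem
    obtain ⟨f, hf1, hf0⟩ := exists_dual W (a i) hmem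
    have := (key f hf0 i).1
    rw [hf1] at this; exact one_ne_zero this
  · by_contra hmem
    obtain ⟨f, hf1, hf0⟩ := exists_dual W (b i) hmem
    have := (key f hf0 i).2
    rw [hf1] at this; exact one_ne_zero this

lemma pair_cond_of_wedge_ne_zero {v w : V} (h : wedge v w ≠ 0) :
    ∀ c d : ℝ, c • v + d • w = 0 → c = 0 ∧ d = 0 := by
  intro c d hcd
  by_cases hd : d = 0
  · subst hd
    refine ⟨?_, rfl⟩
    rw [zero_smul, add_zero] at hcd
    rcases smul_eq_zero.1 hcd with h0 | h0
    · exact h0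
    · exact absurd (by rw [wedge, h0, map_zero, zero_mul]) h
  · exfalso
    apply h
    have h1 : d • w = -(c • v) := by
      rw [eq_neg_iff_add_eq_zero, add_comm]; exact hcd
    have hw : w = (d⁻¹ * (-c)) • v := by
      rw [mul_smul, neg_smul, ← h1, inv_smul_smul₀ hd]
    rw [wedge, hw, map_smul, mul_smul_comm, ExteriorAlgebra.ι_sq_zero, smul_zero]

lemma li_cons_sum {k : ℕ} (v w : V) (a b : Fin k → V)
    (h1 : LinearIndependent ℝ (Sum.elim a b))
    (h2 : ∀ c d : ℝ, c • v + d • w = 0 → c = 0 ∧ d = 0)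
    (hd : Disjoint (Submodule.span ℝ {v, w})
      (Submodule.span ℝ (Set.range a ∪ Set.range b))) :
    LinearIndependent ℝ (Sum.elim (Fin.cons v a) (Fin.cons w b)) := by
  rw [Fintype.linearIndependent_iff]
  intro c hc
  rw [Fintype.sum_sum_type] at hc
  simp only [Sum.elim_inl, Sum.elim_inr] at hc
  rw [Fin.sum_univ_succ, Fin.sum_univ_succ] at hc
  simp only [Fin.cons_zero, Fin.cons_succ] at hc
  set u0 : V := c (Sum.inl 0) • v + c (Sum.inr 0) • w with hu0
  set s0 : V := (∑ i : Fin k, c (Sum.inl i.succ) • a i)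
      + ∑ i : Fin k, c (Sum.inr i.succ) • b i with hs0
  have hsum : u0 + s0 = 0 := by rw [hu0, hs0, ← hc]; abel
  have hu0mem : u0 ∈ Submodule.span ℝ ({v, w} : Set V) := by
    refine add_mem (Submodule.smul_mem _ _ (Submodule.subset_span ?_))
      (Submodule.smul_mem _ _ (Submodule.subset_span ?_)) <;> simp
  have hs0mem : s0 ∈ Submodule.span ℝ (Set.range a ∪ Set.range b) := by
    refine add_mem (Submodule.sum_mem _ fun i _ =>
        Submodule.smul_mem _ _ (Submodule.subset_span (Or.inl ⟨i, rfl⟩)))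
      (Submodule.sum_mem _ fun i _ =>
        Submodule.smul_mem _ _ (Submodule.subset_span (Or.inr ⟨i, rfl⟩)))
  have hu0mem2 : u0 ∈ Submodule.span ℝ (Set.range a ∪ Set.range b) := by
    have : u0 = -s0 := eq_neg_of_add_eq_zero_left hsum
    rw [this]; exact neg_mem hs0mem
  have hu0zero : u0 = 0 := by
    have := hd.le_bot ⟨hu0mem, hu0mem2⟩
    simpa using this
  have hs0zero : s0 = 0 := by
    rw [hu0zero, zero_add] at hsum; exact hsum
  obtain ⟨hc0, hd0⟩ := h2 _ _ hu0zero
  have htail := Fintype.linearIndependent_iff.1 h1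
      (Sum.elim (fun i => c (Sum.inl i.succ)) (fun i => c (Sum.inr i.succ))) ?side
  case side =>
    rw [Fintype.sum_sum_type]
    simp only [Sum.elim_inl, Sum.elim_inr]
    exact hs0zero
  rintro (i | i)
  · refine Fin.cases ?_ ?_ i
    · exact hc0
    · intro j; simpa using htail (Sum.inl j)
  · refine Fin.cases ?_ ?_ i
    · exact hd0
    · intro j; simpa using htail (Sum.inr j)

lemma wedge_key (x y u : V) (α β : ℝ) :
    wedge (y + β • x) (u - α • x)
      = wedge y u + α • (ιι x * ιι y) + β • (ιι x * ιι u) := by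
  simp only [wedge, map_add, map_sub, map_smul, mul_add, add_mul, mul_sub, sub_mul,
    smul_mul_assoc, mul_smul_comm, smul_smul, ExteriorAlgebra.ι_sq_zero, smul_zero]
  rw [swapι y x]
  rw [add_zero, smul_neg, sub_neg_eq_add]
  abel

lemma shorten_at {k : ℕ} (a b : Fin (k + 1) → V) (c d : Fin (k + 1) → ℝ) (j₀ : Fin (k + 1))
    (hrel : ∑ i, (c i • a i + d i • b i) = 0) (hdj : d j₀ ≠ 0) :
    ∃ a' b' : Fin k → V, ∑ i, wedge (a i) (b i) = ∑ i, wedge (a' i) (b' i) := by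
  set x := a j₀ with hx
  set α : Fin k → ℝ := fun i => (d j₀)⁻¹ * (-(c (j₀.succAbove i))) with hα
  set β : Fin k → ℝ := fun i => (d j₀)⁻¹ * (-(d (j₀.succAbove i))) with hβ
  refine ⟨fun i => a (j₀.succAbove i) + β i • x, fun i => b (j₀.succAbove i) - α i • x, ?_⟩
  have h3 : c j₀ • a j₀ + d j₀ • b j₀
      = -∑ i : Fin k, (c (j₀.succAbove i) • a (j₀.succAbove i)
          + d (j₀.succAbove i) • b (j₀.succAbove i)) := by
    rw [Fin.sum_univ_succAbove _ j₀] at hrel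
    exact eq_neg_of_add_eq_zero_left hrel
  have hcore : wedge x (b j₀)
      = ∑ i : Fin k, α i • (ιι x * ιι (a (j₀.succAbove i)))
        + ∑ i : Fin k, β i • (ιι x * ιι (b (j₀.succAbove i))) := by
    apply smul_right_injective (ExteriorAlgebra ℝ V) hdj
    show d j₀ • _ = d j₀ • _
    have hL : d j₀ • wedge x (b j₀) = ιι x * ιι (c j₀ • a j₀ + d j₀ • b j₀) := by
      rw [map_add, map_smul, map_smul, mul_add, mul_smul_comm, mul_smul_comm, wedge, ← hx,
        ExteriorAlgebra.ι_sq_zero, smul_zero, zero_add]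
    rw [hL, h3, map_neg, mul_neg, map_sum, Finset.mul_sum, ← Finset.sum_neg_distrib,
      smul_add, Finset.smul_sum, Finset.smul_sum, ← Finset.sum_add_distrib]
    refine Finset.sum_congr rfl fun i _ => ?_
    rw [map_add, map_smul, map_smul, mul_add, mul_smul_comm, mul_smul_comm, neg_add,
      smul_smul, smul_smul, hα, hβ, mul_inv_cancel_left₀ hdj, mul_inv_cancel_left₀ hdj,
      neg_smul, neg_smul]
  rw [Fin.sum_univ_succAbove _ j₀]
  have hrhs : ∀ i : Fin k,
      wedge (a (j₀.succAbove i) + β i • x) (b (j₀.succAbove i) - α i • x)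
      = wedge (a (j₀.succAbove i)) (b (j₀.succAbove i))
        + α i • (ιι x * ιι (a (j₀.succAbove i))) + β i • (ιι x * ιι (b (j₀.succAbove i))) :=
    fun i => wedge_key x _ _ _ _
  calc wedge (a j₀) (b j₀) + ∑ i : Fin k, wedge (a (j₀.succAbove i)) (b (j₀.succAbove i))
      = (∑ i : Fin k, α i • (ιι x * ιι (a (j₀.succAbove i)))
          + ∑ i : Fin k, β i • (ιι x * ιι (b (j₀.succAbove i))))
        + ∑ i : Fin k, wedge (a (j₀.succAbove i)) (b (j₀.succAbove i)) := by
        rw [← hcore, hx]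
    _ = ∑ i : Fin k, (wedge (a (j₀.succAbove i)) (b (j₀.succAbove i))
          + α i • (ιι x * ιι (a (j₀.succAbove i))) + β i • (ιι x * ιι (b (j₀.succAbove i)))) := by
        rw [Finset.sum_add_distrib, Finset.sum_add_distrib]
        abel
    _ = ∑ i : Fin k, wedge (a (j₀.succAbove i) + β i • x) (b (j₀.succAbove i) - α i • x) := by
        exact Finset.sum_congr rfl fun i _ => (hrhs i).symm

lemma exists_shorter {k : ℕ} (a b : Fin (k + 1) → V)
    (h : ¬ LinearIndependent ℝ (Sum.elim a b)) :
    ∃ a' b' : Fin k → V, ∑ i, wedge (a i) (b i) = ∑ i, wedge (a' i) (b' i) := by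
  rw [Fintype.linearIndependent_iff] at h
  push_neg at h
  obtain ⟨g, hg0, j, hj⟩ := h
  have hrel : ∑ i, (g (Sum.inl i) • a i + g (Sum.inr i) • b i) = 0 := by
    rw [Fintype.sum_sum_type] at hg0
    simp only [Sum.elim_inl, Sum.elim_inr] at hg0
    rw [Finset.sum_add_distrib]
    exact hg0
  rcases j with j | j
  · set abar := Function.update a j (b j) with habar
    set bbar := Function.update b j (-(a j)) with hbbar
    set cbar := Function.update (fun i => g (Sum.inl i)) j (g (Sum.inr j)) with hcbar
    set dbar := Function.update (fun i => g (Sum.inr i)) j (-(g (Sum.inl j))) with hdbar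
    have hswap : ∀ i, wedge (abar i) (bbar i) = wedge (a i) (b i) := by
      intro i
      by_cases hij : i = j
      · subst hij
        simp only [habar, hbbar, Function.update_self]
        rw [wedge, wedge, map_neg, mul_neg, swapι, neg_neg]
      · simp [habar, hbbar, Function.update_of_ne hij]
    have hrelbar : ∑ i, (cbar i • abar i + dbar i • bbar i) = 0 := by
      rw [← hrel]
      refine Finset.sum_congr rfl fun i _ => ?_
      by_cases hij : i = j
      · subst hij
        simp only [habar, hbbar, hcbar, hdbar, Function.update_self]
        rw [smul_neg, neg_smul, neg_neg]
        abel
      · simp [habar, hbbar, hcbar, hdbar, Function.update_of_ne hij]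
    have hdbarj : dbar j ≠ 0 := by
      rw [hdbar]
      simpa using hj
    obtain ⟨a', b', he⟩ := shorten_at abar bbar cbar dbar j hrelbar hdbarj
    refine ⟨a', b', ?_⟩
    rw [← he]
    exact Finset.sum_congr rfl fun i _ => (hswap i).symm
  · exact shorten_at a b _ _ j hrel hj

lemma min_decomp_li {n : ℕ} {ω' : ExteriorAlgebra ℝ V} (a b : Fin n → V)
    (hab : ω' = ∑ i, wedge (a i) (b i))
    (hmin : ∀ (m : ℕ) (p q : Fin m → V), ω' = ∑ i, wedge (p i) (q i) → n ≤ m) :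
    LinearIndependent ℝ (Sum.elim a b) := by
  by_contra hni
  cases n with
  | zero => exact hni linearIndependent_empty_type
  | succ m =>
    obtain ⟨a', b', he⟩ := exists_shorter a b hni
    have := hmin m a' b' (hab.trans he)
    omega

end Stmt5Aux

open Stmt5Aux in
/-- If ω = v∧w + ω' with v∧w simple nonzero and span{v,w} in direct sum with spt ω',
then rank ω = rank ω' + 1. -/
theorem stmt5 [FiniteDimensional ℝ V] (ω ω' : ExteriorAlgebra ℝ V) (v w : V)
    (hσ : wedge v w ≠ 0) (hω : ω = wedge v w + ω')
    (hrk : ∃ k, ∃ a b : Fin k → V, ω' = ∑ i, wedge (a i) (b i))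
    (hdisj : Disjoint (Submodule.span ℝ {v, w}) (spt ω')) :
    rank2 ω = rank2 ω' + 1 := by
  classical
  have hne' : {k | ∃ a b : Fin k → V, ω' = ∑ i, wedge (a i) (b i)}.Nonempty := hrk
  obtain ⟨a, b, hab⟩ : ∃ a b : Fin (rank2 ω') → V, ω' = ∑ i, wedge (a i) (b i) :=
    Nat.sInf_mem hne'
  have hLIab : LinearIndependent ℝ (Sum.elim a b) :=
    min_decomp_li a b hab fun m p q hdec => Nat.sInf_le ⟨p, q, hdec⟩
  have hspt : Submodule.span ℝ (Set.range a ∪ Set.range b) ≤ spt ω' := by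
    refine le_sInf fun W hW => ?_
    rw [Submodule.span_le]
    have hW' : (∑ i, wedge (a i) (b i)) ∈ wedgeSpan W := by rw [← hab]; exact hW
    rintro z (⟨i, rfl⟩ | ⟨i, rfl⟩)
    · exact (decomp_vectors_mem a b hLIab W hW' i).1
    · exact (decomp_vectors_mem a b hLIab W hW' i).2
  have hdisj2 : Disjoint (Submodule.span ℝ {v, w})
      (Submodule.span ℝ (Set.range a ∪ Set.range b)) := hdisj.mono_right hspt
  have hLIA : LinearIndependent ℝ (Sum.elim (Fin.cons v a) (Fin.cons w b)) :=
    li_cons_sum v w a b hLIab (pair_cond_of_wedge_ne_zero hσ) hdisj2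
  have hdecω : ω = ∑ i : Fin (rank2 ω' + 1), wedge (Fin.cons v a i) (Fin.cons w b i) := by
    rw [Fin.sum_univ_succ]
    simp only [Fin.cons_zero, Fin.cons_succ]
    rw [hω]
    exact congrArg (fun z => wedge v w + z) hab
  have hub : rank2 ω ≤ rank2 ω' + 1 := Nat.sInf_le ⟨_, _, hdecω⟩
  have hneS : {k | ∃ p q : Fin k → V, ω = ∑ i, wedge (p i) (q i)}.Nonempty :=
    ⟨_, _, _, hdecω⟩
  obtain ⟨p, q, hpq⟩ : ∃ p q : Fin (rank2 ω) → V, ω = ∑ i, wedge (p i) (q i) :=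
    Nat.sInf_mem hneS
  have hpow0 : ω ^ (rank2 ω + 1) = 0 := by
    have h := sum_sq_zero_pow_succ (rank2 ω) (fun i => wedge (p i) (q i))
      (fun i j => wedge_commute _ _ _ _) fun i => wedge_sq _ _
    rw [← hpq] at h
    exact h
  have hpowne : ω ^ (rank2 ω' + 1) ≠ 0 := by
    rw [hdecω, sum_sq_zero_pow_eq _ _ (fun i j => wedge_commute _ _ _ _) fun i => wedge_sq _ _]
    have hw : wprod (Fin.cons v a) (Fin.cons w b) ≠ 0 := wprod_ne_zero _ _ hLIA
    intro h0
    apply hw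
    have h1 : ((rank2 ω' + 1).factorial : ℝ) • wprod (Fin.cons v a) (Fin.cons w b) = 0 := by
      rw [Nat.cast_smul_eq_nsmul]
      exact h0
    have hfne : ((rank2 ω' + 1).factorial : ℝ) ≠ 0 :=
      Nat.cast_ne_zero.2 (Nat.factorial_ne_zero _)
    exact (smul_eq_zero.1 h1).resolve_left hfne
  have hlb : rank2 ω' + 1 ≤ rank2 ω := by
    by_contra hlt
    push_neg at hlt
    apply hpowne
    have he : rank2 ω' + 1 = (rank2 ω + 1) + (rank2 ω' - rank2 ω) := by omega
    rw [he, pow_add, hpow0, zero_mul]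
  omega
end

section
/- Let G be a step-2 Carnot group with Lie algebra g = g₁ ⊕ g₂, and let γ be a horizontal curve from the identity with control u. Let P_γ = span{π₁(γ(t)) : t ∈ [0,1]} ⊂ g₁. Then γ is abnormal (i.e., u is a singular control for the endpoint map) if and only if [P_γ, g₁] ≠ g₂. -/
open MeasureTheory

/-- Lebesgue measure restricted to the time interval [0,1]. -/
noncomputable def μ01 : Measure ℝ := volume.restrict (Set.Icc 0 1)

instance : IsFiniteMeasure μ01 := by
  unfold μ01; infer_instance

instance : Fact ((1 : ENNReal) ≤ 1) := ⟨le_rfl⟩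

variable {r m : ℕ}

/-- The first-layer component of the horizontal curve driven by `u`: its projection
`π₁(γ(t)) = ∫₀ᵗ u`. -/
noncomputable def pi1Curve (u : Lp (Fin r → ℝ) 1 μ01) (t : ℝ) : Fin r → ℝ :=
  ∫ τ in Set.Ioc 0 t, u τ ∂μ01

/-- The endpoint map of the step-2 Carnot group with first layer ℝ^r, second layer ℝ^m
and bracket given by the skew-symmetric bilinear map `B`, in exponential coordinates:
the group product is (x,z)·(x',z') = (x+x', z+z'+½B(x,x')). -/
noncomputable def endpoint2 (B : (Fin r → ℝ) →ₗ[ℝ] (Fin r → ℝ) →ₗ[ℝ] (Fin m → ℝ))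
    (u : Lp (Fin r → ℝ) 1 μ01) : (Fin r → ℝ) × (Fin m → ℝ) :=
  (pi1Curve u 1, ∫ τ in Set.Ioc (0:ℝ) 1, (1/2 : ℝ) • B (pi1Curve u τ) (u τ) ∂μ01)

/-- The subspace P_γ = span{π₁(γ(t)) : t ∈ [0,1]} of the first layer. -/
noncomputable def Pgamma (u : Lp (Fin r → ℝ) 1 μ01) : Submodule ℝ (Fin r → ℝ) :=
  Submodule.span ℝ {p | ∃ t ∈ Set.Icc (0:ℝ) 1, p = pi1Curve u t}


section AuxStmt9

open Set Filter Topology Asymptotics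

variable {r m : ℕ}

instance : NullSingletonClass μ01 := by
  constructor
  intro x
  have h : μ01 {x} = volume ({x} ∩ Set.Icc 0 1) :=
    Measure.restrict_apply (measurableSet_singleton x)
  have h2 : volume ({x} ∩ Set.Icc (0:ℝ) 1) ≤ volume {x} :=
    measure_mono Set.inter_subset_left
  have h3 : μ01 {x} ≤ 0 := by
    rw [h]; simpa using h2
  exact le_antisymm h3 (zero_le)

lemma integrable_coe (u : Lp (Fin r → ℝ) 1 μ01) : Integrable (⇑u) μ01 :=
  L1.integrable_coeFn u

/-- continuous bilinear version of B -/
noncomputable def Bcont (B : (Fin r → ℝ) →ₗ[ℝ] (Fin r → ℝ) →ₗ[ℝ] (Fin m → ℝ)) :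
    (Fin r → ℝ) →L[ℝ] (Fin r → ℝ) →L[ℝ] (Fin m → ℝ) :=
  LinearMap.toContinuousLinearMap
    { toFun := fun x => LinearMap.toContinuousLinearMap (B x)
      map_add' := by intro a b; ext y; simp
      map_smul' := by intro c a; ext y; simp }

@[simp] lemma Bcont_apply (B : (Fin r → ℝ) →ₗ[ℝ] (Fin r → ℝ) →ₗ[ℝ] (Fin m → ℝ))
    (x y : Fin r → ℝ) : Bcont B x y = B x y := rfl

lemma Iic_ae_eq_Ioc {t : ℝ} (ht : 0 ≤ t) : (Set.Iic t : Set ℝ) =ᵐ[μ01] Set.Ioc 0 t := by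
  rw [MeasureTheory.ae_eq_set]
  constructor
  · have hsub : Set.Iic t \ Set.Ioc 0 t ⊆ {(0:ℝ)} ∪ Set.Iio 0 := by
      intro x hx
      rcases hx with ⟨hx1, hx2⟩
      simp only [Set.mem_Ioc, not_and_or, not_lt, not_le] at hx2
      rcases hx2 with h | h
      · rcases lt_or_eq_of_le h with h' | h'
        · exact Or.inr h'
        · exact Or.inl (by simp [h'.symm])
      · exact absurd hx1 (not_le.2 h)
    have hnull : μ01 ({(0:ℝ)} ∪ Set.Iio 0) = 0 := by
      have heq : μ01 ({(0:ℝ)} ∪ Set.Iio 0) = volume (({(0:ℝ)} ∪ Set.Iio 0) ∩ Set.Icc 0 1) :=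
        Measure.restrict_apply ((measurableSet_singleton 0).union measurableSet_Iio)
      have hsub2 : (({(0:ℝ)} ∪ Set.Iio 0) ∩ Set.Icc 0 1) ⊆ {(0:ℝ)} := by
        rintro x ⟨hx1 | hx1, hx2⟩
        · exact hx1
        · exact absurd hx2.1 (not_le.2 hx1)
      have h4 : volume (({(0:ℝ)} ∪ Set.Iio 0) ∩ Set.Icc 0 1) ≤ volume {(0:ℝ)} :=
        measure_mono hsub2
      rw [heq]
      simpa using h4.antisymm (by simp)
    exact measure_mono_null hsub hnull
  · have hd : Set.Ioc 0 t \ Set.Iic t = ∅ :=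
      Set.diff_eq_empty.2 (fun x hx => hx.2)
    simp [hd]

lemma pi1Curve_eq_Iic (u : Lp (Fin r → ℝ) 1 μ01) {t : ℝ} (ht : 0 ≤ t) :
    pi1Curve u t = ∫ τ in Set.Iic t, u τ ∂μ01 := by
  unfold pi1Curve
  exact (setIntegral_congr_set (Iic_ae_eq_Ioc ht)).symm

lemma pi1Curve_add (v w : Lp (Fin r → ℝ) 1 μ01) (t : ℝ) :
    pi1Curve (v + w) t = pi1Curve v t + pi1Curve w t := by
  unfold pi1Curve
  rw [← integral_add ((integrable_coe v).integrableOn) ((integrable_coe w).integrableOn)]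
  refine setIntegral_congr_ae measurableSet_Ioc ?_
  filter_upwards [Lp.coeFn_add v w] with τ hτ _
  simp only [hτ, Pi.add_apply]

lemma pi1Curve_smul (c : ℝ) (v : Lp (Fin r → ℝ) 1 μ01) (t : ℝ) :
    pi1Curve (c • v) t = c • pi1Curve v t := by
  unfold pi1Curve
  rw [← integral_smul]
  refine setIntegral_congr_ae measurableSet_Ioc ?_
  filter_upwards [Lp.coeFn_smul c v] with τ hτ _
  simp only [hτ, Pi.smul_apply]

lemma norm_pi1Curve_le (v : Lp (Fin r → ℝ) 1 μ01) (t : ℝ) :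
    ‖pi1Curve v t‖ ≤ ‖v‖ := by
  unfold pi1Curve
  calc ‖∫ τ in Set.Ioc 0 t, v τ ∂μ01‖ ≤ ∫ τ in Set.Ioc 0 t, ‖v τ‖ ∂μ01 :=
        norm_integral_le_integral_norm _
    _ ≤ ∫ τ, ‖v τ‖ ∂μ01 :=
        setIntegral_le_integral (integrable_coe v).norm
          (Filter.Eventually.of_forall fun τ => norm_nonneg _)
    _ = ‖v‖ := (L1.norm_eq_integral_norm v).symm

lemma pi1Curve_zero_t (v : Lp (Fin r → ℝ) 1 μ01) : pi1Curve v 0 = 0 := by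
  unfold pi1Curve; simp

lemma pi1Curve_eq_primitive (v : Lp (Fin r → ℝ) 1 μ01) {t : ℝ} (ht : 0 ≤ t) :
    pi1Curve v t = ∫ τ in (0:ℝ)..t, Set.indicator (Set.Icc 0 1) (⇑v) τ := by
  unfold pi1Curve
  rw [intervalIntegral.integral_of_le ht, setIntegral_indicator measurableSet_Icc]
  show ∫ τ in Set.Ioc 0 t, v τ ∂(volume.restrict (Set.Icc 0 1)) = _
  rw [Measure.restrict_restrict measurableSet_Ioc]

lemma integrable_indicator_coe (v : Lp (Fin r → ℝ) 1 μ01) :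
    Integrable (Set.indicator (Set.Icc 0 1) (⇑v)) volume :=
  (integrable_indicator_iff measurableSet_Icc).2 (integrable_coe v)

lemma continuous_pi1Curve (v : Lp (Fin r → ℝ) 1 μ01) : Continuous (pi1Curve v) := by
  have hg := integrable_indicator_coe v
  have hcont := intervalIntegral.continuous_primitive
    (fun a b => hg.intervalIntegrable) (0:ℝ)
  refine hcont.congr fun t => ?_
  rcases le_or_gt 0 t with ht | ht
  · exact (pi1Curve_eq_primitive v ht).symm
  · have h1 : pi1Curve v t = 0 := by
      unfold pi1Curve
      rw [Set.Ioc_eq_empty (by linarith)]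
      simp
    have h2 : ∫ τ in (0:ℝ)..t, Set.indicator (Set.Icc 0 1) (⇑v) τ = 0 := by
      rw [intervalIntegral.integral_symm, intervalIntegral.integral_of_le ht.le,
        setIntegral_indicator measurableSet_Icc]
      have hnull : volume (Set.Ioc t 0 ∩ Set.Icc 0 1) = 0 := by
        have hsub : Set.Ioc t 0 ∩ Set.Icc (0:ℝ) 1 ⊆ {0} := by
          rintro x ⟨⟨_, hx2⟩, hx3, _⟩
          simp [le_antisymm hx2 hx3]
        have h5 : volume (Set.Ioc t 0 ∩ Set.Icc (0:ℝ) 1) ≤ volume {(0:ℝ)} :=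
          measure_mono hsub
        simpa using h5.antisymm (by simp)
      rw [Measure.restrict_eq_zero.2 hnull]
      simp
    rw [h1, h2]

lemma integrable_Bval (B : (Fin r → ℝ) →ₗ[ℝ] (Fin r → ℝ) →ₗ[ℝ] (Fin m → ℝ))
    (v w : Lp (Fin r → ℝ) 1 μ01) :
    Integrable (fun τ => B (pi1Curve v τ) (w τ)) μ01 := by
  have hsm : StronglyMeasurable (fun τ => Bcont B (pi1Curve v τ) (w τ)) :=
    (Bcont B).isBoundedBilinearMap.continuous.comp_stronglyMeasurable
      ((continuous_pi1Curve v).stronglyMeasurable.prodMk (Lp.stronglyMeasurable w))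
  refine Integrable.mono' (((integrable_coe w).norm.const_mul (‖Bcont B‖ * ‖v‖)))
    hsm.aestronglyMeasurable ?_
  refine Filter.Eventually.of_forall fun τ => ?_
  calc ‖Bcont B (pi1Curve v τ) (w τ)‖ ≤ ‖Bcont B‖ * ‖pi1Curve v τ‖ * ‖w τ‖ :=
        (Bcont B).le_opNorm₂ _ _
    _ ≤ ‖Bcont B‖ * ‖v‖ * ‖w τ‖ :=
        mul_le_mul_of_nonneg_right
          (mul_le_mul_of_nonneg_left (norm_pi1Curve_le v τ) (norm_nonneg (Bcont B)))
          (norm_nonneg _)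


lemma ae_mem_Icc01 : ∀ᵐ τ ∂μ01, τ ∈ Set.Icc (0:ℝ) 1 :=
  ae_restrict_mem measurableSet_Icc

lemma setIntegral_Iic_eq_pi1Curve (v : Lp (Fin r → ℝ) 1 μ01) {τ : ℝ}
    (hτ : τ ∈ Set.Icc (0:ℝ) 1) :
    ∫ s in Set.Iic τ, v s ∂μ01 = pi1Curve v τ :=
  (pi1Curve_eq_Iic v hτ.1).symm

lemma integral_eq_pi1Curve_one (v : Lp (Fin r → ℝ) 1 μ01) :
    ∫ τ, v τ ∂μ01 = pi1Curve v 1 := by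
  rw [pi1Curve_eq_Iic v zero_le_one]
  have h : μ01.restrict (Set.Iic 1) = μ01 := by
    show (volume.restrict (Set.Icc 0 1)).restrict (Set.Iic 1) = volume.restrict (Set.Icc 0 1)
    rw [Measure.restrict_restrict measurableSet_Iic]
    congr 1
    ext x
    simp only [Set.mem_inter_iff, Set.mem_Iic, Set.mem_Icc]
    exact ⟨fun ⟨_, h2⟩ => h2, fun h2 => ⟨h2.2, h2⟩⟩
  rw [show ∫ τ in Set.Iic 1, v τ ∂μ01 = ∫ τ, v τ ∂(μ01.restrict (Set.Iic 1)) from rfl, h]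

lemma setIntegral_Ioc_eq_total (f : ℝ → (Fin m → ℝ)) :
    ∫ τ in Set.Ioc (0:ℝ) 1, f τ ∂μ01 = ∫ τ, f τ ∂μ01 := by
  show ∫ τ, f τ ∂(μ01.restrict (Set.Ioc 0 1)) = ∫ τ, f τ ∂μ01
  congr 1
  show (volume.restrict (Set.Icc 0 1)).restrict (Set.Ioc 0 1) = volume.restrict (Set.Icc 0 1)
  rw [Measure.restrict_restrict measurableSet_Ioc,
    Set.inter_eq_left.2 Set.Ioc_subset_Icc_self]
  exact Measure.restrict_congr_set Ioc_ae_eq_Icc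

section Fubini

variable (B : (Fin r → ℝ) →ₗ[ℝ] (Fin r → ℝ) →ₗ[ℝ] (Fin m → ℝ))

lemma sq_integrable (v w : Lp (Fin r → ℝ) 1 μ01) (S : Set (ℝ × ℝ)) (hS : MeasurableSet S) :
    Integrable (S.indicator (fun p => B (v p.1) (w p.2))) (μ01.prod μ01) := by
  have hsm : StronglyMeasurable (fun p : ℝ × ℝ => Bcont B (v p.1) (w p.2)) :=
    (Bcont B).isBoundedBilinearMap.continuous.comp_stronglyMeasurable
      (((Lp.stronglyMeasurable v).comp_measurable measurable_fst).prodMk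
        ((Lp.stronglyMeasurable w).comp_measurable measurable_snd))
  have hdom : Integrable (fun p : ℝ × ℝ => (‖Bcont B‖ * ‖v p.1‖) * ‖w p.2‖) (μ01.prod μ01) :=
    Integrable.mul_prod ((integrable_coe v).norm.const_mul _) (integrable_coe w).norm
  refine hdom.mono' (hsm.indicator hS).aestronglyMeasurable ?_
  refine Filter.Eventually.of_forall fun p => ?_
  calc ‖S.indicator (fun p : ℝ × ℝ => B (v p.1) (w p.2)) p‖
      ≤ ‖Bcont B (v p.1) (w p.2)‖ := norm_indicator_le_norm_self _ p
    _ ≤ ‖Bcont B‖ * ‖v p.1‖ * ‖w p.2‖ := (Bcont B).le_opNorm₂ _ _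

/-- lower triangle (p.2 ≤ p.1), outer variable is the first coordinate -/
lemma lower_tri (a b : Lp (Fin r → ℝ) 1 μ01) :
    ∫ p, ({q : ℝ × ℝ | q.2 ≤ q.1}).indicator (fun q => B (a q.2) (b q.1)) p ∂(μ01.prod μ01)
      = ∫ τ, B (pi1Curve a τ) (b τ) ∂μ01 := by
  have hS : MeasurableSet {q : ℝ × ℝ | q.2 ≤ q.1} :=
    measurableSet_le measurable_snd measurable_fst
  have hint : Integrable (({q : ℝ × ℝ | q.2 ≤ q.1}).indicator
      (fun p => B.flip (b p.1) (a p.2))) (μ01.prod μ01) := sq_integrable B.flip b a _ hS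
  have hint' : Integrable (({q : ℝ × ℝ | q.2 ≤ q.1}).indicator
      (fun p => B (a p.2) (b p.1))) (μ01.prod μ01) := hint
  rw [integral_prod _ hint']
  refine integral_congr_ae ?_
  filter_upwards [ae_mem_Icc01] with τ hτ
  have h1 : (fun s => ({q : ℝ × ℝ | q.2 ≤ q.1}).indicator
      (fun p : ℝ × ℝ => B (a p.2) (b p.1)) (τ, s))
      = fun s => (Set.Iic τ).indicator (fun s => B (a s) (b τ)) s := by
    funext s
    by_cases h : s ≤ τ
    · rw [Set.indicator_of_mem (by exact h : (τ, s) ∈ {q : ℝ × ℝ | q.2 ≤ q.1}),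
        Set.indicator_of_mem (by exact h)]
    · rw [Set.indicator_of_notMem (by exact h : ¬ (τ, s) ∈ {q : ℝ × ℝ | q.2 ≤ q.1}),
        Set.indicator_of_notMem (by exact h)]
  rw [h1, integral_indicator measurableSet_Iic]
  have h2 : ∫ s in Set.Iic τ, B (a s) (b τ) ∂μ01
      = ((Bcont B).flip (b τ)) (∫ s in Set.Iic τ, a s ∂μ01) := by
    rw [← ContinuousLinearMap.integral_comp_comm _ (integrable_coe a).integrableOn]
    rfl
  rw [h2, setIntegral_Iic_eq_pi1Curve a hτ]
  rfl

/-- upper triangle (p.1 ≤ p.2), outer variable is the first coordinate -/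
lemma upper_tri (a b : Lp (Fin r → ℝ) 1 μ01) :
    ∫ p, ({q : ℝ × ℝ | q.1 ≤ q.2}).indicator (fun q => B (a q.2) (b q.1)) p ∂(μ01.prod μ01)
      = ∫ s, B (a s) (pi1Curve b s) ∂μ01 := by
  have hS : MeasurableSet {q : ℝ × ℝ | q.1 ≤ q.2} :=
    measurableSet_le measurable_fst measurable_snd
  have hint : Integrable (({q : ℝ × ℝ | q.1 ≤ q.2}).indicator
      (fun p => B.flip (b p.1) (a p.2))) (μ01.prod μ01) := sq_integrable B.flip b a _ hS
  have hint' : Integrable (({q : ℝ × ℝ | q.1 ≤ q.2}).indicator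
      (fun p => B (a p.2) (b p.1))) (μ01.prod μ01) := hint
  rw [integral_prod_symm _ hint']
  refine integral_congr_ae ?_
  filter_upwards [ae_mem_Icc01] with s hs
  have h1 : (fun τ => ({q : ℝ × ℝ | q.1 ≤ q.2}).indicator
      (fun p : ℝ × ℝ => B (a p.2) (b p.1)) (τ, s))
      = fun τ => (Set.Iic s).indicator (fun τ => B (a s) (b τ)) τ := by
    funext τ
    by_cases h : τ ≤ s
    · rw [Set.indicator_of_mem (by exact h : (τ, s) ∈ {q : ℝ × ℝ | q.1 ≤ q.2}),
        Set.indicator_of_mem (by exact h)]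
    · rw [Set.indicator_of_notMem (by exact h : ¬ (τ, s) ∈ {q : ℝ × ℝ | q.1 ≤ q.2}),
        Set.indicator_of_notMem (by exact h)]
  rw [h1, integral_indicator measurableSet_Iic]
  have h2 : ∫ τ in Set.Iic s, B (a s) (b τ) ∂μ01
      = (Bcont B (a s)) (∫ τ in Set.Iic s, b τ ∂μ01) := by
    rw [← ContinuousLinearMap.integral_comp_comm _ (integrable_coe b).integrableOn]
    rfl
  rw [h2, setIntegral_Iic_eq_pi1Curve b hs]
  rfl

lemma diag_null : (μ01.prod μ01) {q : ℝ × ℝ | q.1 = q.2} = 0 := by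
  have hD : MeasurableSet {q : ℝ × ℝ | q.1 = q.2} :=
    measurableSet_eq_fun measurable_fst measurable_snd
  rw [Measure.prod_apply hD]
  have : ∀ x : ℝ, μ01 (Prod.mk x ⁻¹' {q : ℝ × ℝ | q.1 = q.2}) = 0 := by
    intro x
    have : Prod.mk x ⁻¹' {q : ℝ × ℝ | q.1 = q.2} = {x} := by
      ext y; simp [eq_comm]
    rw [this, measure_singleton]
  simp [this]

lemma full_square (a b : Lp (Fin r → ℝ) 1 μ01) :
    ∫ p : ℝ × ℝ, B (a p.2) (b p.1) ∂(μ01.prod μ01)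
      = B (pi1Curve a 1) (pi1Curve b 1) := by
  have hint : Integrable (fun p : ℝ × ℝ => B.flip (b p.1) (a p.2)) (μ01.prod μ01) := by
    have := sq_integrable B.flip b a Set.univ MeasurableSet.univ
    simpa [Set.indicator_univ] using this
  have hint' : Integrable (fun p : ℝ × ℝ => B (a p.2) (b p.1)) (μ01.prod μ01) := hint
  rw [integral_prod _ hint']
  have h1 : ∀ τ : ℝ, ∫ s, B (a s) (b τ) ∂μ01 = B (pi1Curve a 1) (b τ) := by
    intro τ
    have h2 : ∫ s, B (a s) (b τ) ∂μ01 = ((Bcont B).flip (b τ)) (∫ s, a s ∂μ01) := by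
      rw [← ContinuousLinearMap.integral_comp_comm _ (integrable_coe a)]
      rfl
    rw [h2, integral_eq_pi1Curve_one]
    rfl
  simp only [h1]
  have h3 : ∫ τ, B (pi1Curve a 1) (b τ) ∂μ01
      = (Bcont B (pi1Curve a 1)) (∫ τ, b τ ∂μ01) := by
    rw [← ContinuousLinearMap.integral_comp_comm _ (integrable_coe b)]
    rfl
  rw [h3, integral_eq_pi1Curve_one]
  rfl

/-- Integration by parts. -/
lemma ibp (hskew : ∀ v w, B v w = - B w v) (u v : Lp (Fin r → ℝ) 1 μ01) :
    ∫ τ, B (pi1Curve v τ) (u τ) ∂μ01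
      = B (pi1Curve v 1) (pi1Curve u 1) + ∫ τ, B (pi1Curve u τ) (v τ) ∂μ01 := by
  have hS1 : MeasurableSet {q : ℝ × ℝ | q.2 ≤ q.1} :=
    measurableSet_le measurable_snd measurable_fst
  have hS2 : MeasurableSet {q : ℝ × ℝ | q.1 ≤ q.2} :=
    measurableSet_le measurable_fst measurable_snd
  have hint1 : Integrable (({q : ℝ × ℝ | q.2 ≤ q.1}).indicator
      (fun p => B (v p.2) (u p.1))) (μ01.prod μ01) := sq_integrable B.flip u v _ hS1
  have hint2 : Integrable (({q : ℝ × ℝ | q.1 ≤ q.2}).indicator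
      (fun p => B (v p.2) (u p.1))) (μ01.prod μ01) := sq_integrable B.flip u v _ hS2
  have key : ∫ p : ℝ × ℝ, B (v p.2) (u p.1) ∂(μ01.prod μ01)
      = (∫ p, ({q : ℝ × ℝ | q.2 ≤ q.1}).indicator (fun q => B (v q.2) (u q.1)) p ∂(μ01.prod μ01))
        + ∫ p, ({q : ℝ × ℝ | q.1 ≤ q.2}).indicator (fun q => B (v q.2) (u q.1)) p ∂(μ01.prod μ01) := by
    rw [← integral_add hint1 hint2]
    refine integral_congr_ae ?_
    have hae : ∀ᵐ p ∂(μ01.prod μ01), (p : ℝ × ℝ).1 ≠ p.2 := by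
      rw [ae_iff]
      convert diag_null using 2
      ext p; simp
    filter_upwards [hae] with p hp
    rcases lt_or_gt_of_ne hp with h | h
    · rw [Set.indicator_of_notMem (by exact not_le.2 h : ¬ p ∈ {q : ℝ × ℝ | q.2 ≤ q.1}),
        Set.indicator_of_mem (by exact h.le : p ∈ {q : ℝ × ℝ | q.1 ≤ q.2}), zero_add]
    · rw [Set.indicator_of_mem (by exact h.le : p ∈ {q : ℝ × ℝ | q.2 ≤ q.1}),
        Set.indicator_of_notMem (by exact not_le.2 h : ¬ p ∈ {q : ℝ × ℝ | q.1 ≤ q.2}), add_zero]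
  rw [full_square B v u, lower_tri B v u, upper_tri B v u] at key
  have hflip : ∫ s, B (v s) (pi1Curve u s) ∂μ01 = - ∫ s, B (pi1Curve u s) (v s) ∂μ01 := by
    rw [← integral_neg]
    exact integral_congr_ae (Filter.Eventually.of_forall fun s => hskew _ _)
  rw [hflip] at key
  rw [key]
  abel

end Fubini


section Deriv

variable (B : (Fin r → ℝ) →ₗ[ℝ] (Fin r → ℝ) →ₗ[ℝ] (Fin m → ℝ)) (u : Lp (Fin r → ℝ) 1 μ01)

lemma norm_integral_Bval_le (v w : Lp (Fin r → ℝ) 1 μ01) :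
    ‖∫ τ, B (pi1Curve v τ) (w τ) ∂μ01‖ ≤ ‖Bcont B‖ * ‖v‖ * ‖w‖ := by
  calc ‖∫ τ, B (pi1Curve v τ) (w τ) ∂μ01‖
      ≤ ∫ τ, ‖B (pi1Curve v τ) (w τ)‖ ∂μ01 := norm_integral_le_integral_norm _
    _ ≤ ∫ τ, (‖Bcont B‖ * ‖v‖) * ‖w τ‖ ∂μ01 := by
        refine integral_mono (integrable_Bval B v w).norm
          ((integrable_coe w).norm.const_mul _) fun τ => ?_
        calc ‖B (pi1Curve v τ) (w τ)‖ = ‖Bcont B (pi1Curve v τ) (w τ)‖ := rfl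
          _ ≤ ‖Bcont B‖ * ‖pi1Curve v τ‖ * ‖w τ‖ := (Bcont B).le_opNorm₂ _ _
          _ ≤ (‖Bcont B‖ * ‖v‖) * ‖w τ‖ :=
            mul_le_mul_of_nonneg_right
              (mul_le_mul_of_nonneg_left (norm_pi1Curve_le v τ) (norm_nonneg (Bcont B)))
              (norm_nonneg _)
    _ = (‖Bcont B‖ * ‖v‖) * ∫ τ, ‖w τ‖ ∂μ01 := integral_const_mul _ _
    _ = ‖Bcont B‖ * ‖v‖ * ‖w‖ := by rw [← L1.norm_eq_integral_norm]

/-- The linear part of the derivative of the endpoint map, in integrated-by-parts form. -/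
noncomputable def LmapFun (v : Lp (Fin r → ℝ) 1 μ01) : (Fin r → ℝ) × (Fin m → ℝ) :=
  (pi1Curve v 1,
    (1/2 : ℝ) • B (pi1Curve v 1) (pi1Curve u 1) + ∫ τ, B (pi1Curve u τ) (v τ) ∂μ01)

lemma LmapFun_add (v w : Lp (Fin r → ℝ) 1 μ01) :
    LmapFun B u (v + w) = LmapFun B u v + LmapFun B u w := by
  unfold LmapFun
  have h1 : ∫ τ, B (pi1Curve u τ) ((v + w) τ) ∂μ01
      = (∫ τ, B (pi1Curve u τ) (v τ) ∂μ01) + ∫ τ, B (pi1Curve u τ) (w τ) ∂μ01 := by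
    rw [← integral_add (integrable_Bval B u v) (integrable_Bval B u w)]
    refine integral_congr_ae ?_
    filter_upwards [Lp.coeFn_add v w] with τ hτ
    simp only [hτ, Pi.add_apply, map_add]
  rw [Prod.mk_add_mk]
  refine Prod.ext ?_ ?_
  · simp [pi1Curve_add]
  · simp only [h1, pi1Curve_add, map_add, LinearMap.add_apply, smul_add]
    abel

lemma LmapFun_smul (c : ℝ) (v : Lp (Fin r → ℝ) 1 μ01) :
    LmapFun B u (c • v) = c • LmapFun B u v := by
  unfold LmapFun
  have h1 : ∫ τ, B (pi1Curve u τ) ((c • v) τ) ∂μ01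
      = c • ∫ τ, B (pi1Curve u τ) (v τ) ∂μ01 := by
    rw [← integral_smul]
    refine integral_congr_ae ?_
    filter_upwards [Lp.coeFn_smul c v] with τ hτ
    simp only [hτ, Pi.smul_apply, _root_.map_smul]
  refine Prod.ext ?_ ?_
  · simp [pi1Curve_smul]
  · simp only [h1, pi1Curve_smul, LinearMap.map_smul₂, Prod.smul_mk]
    generalize B (pi1Curve v 1) (pi1Curve u 1) = X
    generalize (∫ τ, B (pi1Curve u τ) (v τ) ∂μ01) = Y
    rw [smul_add]
    module

/-- The derivative of the endpoint map, as a continuous linear map. -/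
noncomputable def Lmap : Lp (Fin r → ℝ) 1 μ01 →L[ℝ] (Fin r → ℝ) × (Fin m → ℝ) :=
  LinearMap.mkContinuous
    { toFun := LmapFun B u
      map_add' := LmapFun_add B u
      map_smul' := LmapFun_smul B u }
    (1 + (‖Bcont B‖ * ‖u‖ + ‖Bcont B‖ * ‖u‖))
    (by
      intro v
      have hB : (0:ℝ) ≤ ‖Bcont B‖ := norm_nonneg (Bcont B)
      have hu : (0:ℝ) ≤ ‖u‖ := norm_nonneg u
      have hv : (0:ℝ) ≤ ‖v‖ := norm_nonneg v
      rw [Prod.norm_def]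
      refine max_le ?_ ?_
      · calc ‖(LmapFun B u v).1‖ = ‖pi1Curve v 1‖ := rfl
          _ ≤ ‖v‖ := norm_pi1Curve_le v 1
          _ ≤ (1 + (‖Bcont B‖ * ‖u‖ + ‖Bcont B‖ * ‖u‖)) * ‖v‖ :=
              le_mul_of_one_le_left hv (by nlinarith [mul_nonneg hB hu])
      · have h1 : ‖(1/2 : ℝ) • B (pi1Curve v 1) (pi1Curve u 1)‖
            ≤ ‖Bcont B‖ * ‖v‖ * ‖u‖ := by
          rw [norm_smul]
          have h2 : ‖Bcont B (pi1Curve v 1) (pi1Curve u 1)‖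
              ≤ ‖Bcont B‖ * ‖pi1Curve v 1‖ * ‖pi1Curve u 1‖ := (Bcont B).le_opNorm₂ _ _
          have h3 := norm_pi1Curve_le v 1
          have h4 := norm_pi1Curve_le u 1
          have h5 : ‖(1/2 : ℝ)‖ = 1/2 := by norm_num [Real.norm_eq_abs]
          rw [h5]
          have h6 : ‖B (pi1Curve v 1) (pi1Curve u 1)‖ ≤ ‖Bcont B‖ * ‖v‖ * ‖u‖ := by
            refine le_trans (le_of_eq (rfl :
              ‖B (pi1Curve v 1) (pi1Curve u 1)‖ = ‖Bcont B (pi1Curve v 1) (pi1Curve u 1)‖))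
              (h2.trans ?_)
            gcongr
          linarith [norm_nonneg (B (pi1Curve v 1) (pi1Curve u 1))]
        have h7 := norm_integral_Bval_le B u v
        calc ‖(LmapFun B u v).2‖
            ≤ ‖(1/2 : ℝ) • B (pi1Curve v 1) (pi1Curve u 1)‖
              + ‖∫ τ, B (pi1Curve u τ) (v τ) ∂μ01‖ := norm_add_le _ _
          _ ≤ ‖Bcont B‖ * ‖v‖ * ‖u‖ + ‖Bcont B‖ * ‖u‖ * ‖v‖ := add_le_add h1 h7
          _ ≤ (1 + (‖Bcont B‖ * ‖u‖ + ‖Bcont B‖ * ‖u‖)) * ‖v‖ := by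
              nlinarith [mul_nonneg (mul_nonneg hB hu) hv])

lemma Lmap_apply (v : Lp (Fin r → ℝ) 1 μ01) :
    Lmap B u v = (pi1Curve v 1,
      (1/2 : ℝ) • B (pi1Curve v 1) (pi1Curve u 1)
        + ∫ τ, B (pi1Curve u τ) (v τ) ∂μ01) := rfl

lemma Lmap_snd_sym (hskew : ∀ v w, B v w = - B w v) (v : Lp (Fin r → ℝ) 1 μ01) :
    (Lmap B u v).2 = ∫ τ, ((1/2 : ℝ) • B (pi1Curve v τ) (u τ)
      + (1/2 : ℝ) • B (pi1Curve u τ) (v τ)) ∂μ01 := by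
  have ha : Integrable (fun τ => (1/2 : ℝ) • B (pi1Curve v τ) (u τ)) μ01 :=
    (integrable_Bval B v u).smul (1/2 : ℝ)
  have hb : Integrable (fun τ => (1/2 : ℝ) • B (pi1Curve u τ) (v τ)) μ01 :=
    (integrable_Bval B u v).smul (1/2 : ℝ)
  rw [integral_add ha hb, integral_smul, integral_smul, ibp B hskew u v]
  show (1/2 : ℝ) • B (pi1Curve v 1) (pi1Curve u 1) + ∫ τ, B (pi1Curve u τ) (v τ) ∂μ01 = _
  generalize B (pi1Curve v 1) (pi1Curve u 1) = X
  generalize (∫ τ, B (pi1Curve u τ) (v τ) ∂μ01) = Y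
  rw [smul_add]
  module

lemma endpoint2_eq (w : Lp (Fin r → ℝ) 1 μ01) :
    endpoint2 B w = (pi1Curve w 1, ∫ τ, (1/2 : ℝ) • B (pi1Curve w τ) (w τ) ∂μ01) := by
  unfold endpoint2
  rw [setIntegral_Ioc_eq_total]

set_option maxHeartbeats 1000000 in
lemma hasFDerivAt_endpoint2 (hskew : ∀ v w, B v w = - B w v) :
    HasFDerivAt (endpoint2 B) (Lmap B u) u := by
  rw [hasFDerivAt_iff_isLittleO_nhds_zero]
  have key : ∀ h : Lp (Fin r → ℝ) 1 μ01,
      endpoint2 B (u + h) - endpoint2 B u - Lmap B u h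
        = ((0 : Fin r → ℝ), ∫ τ, (1/2 : ℝ) • B (pi1Curve h τ) (h τ) ∂μ01) := by
    intro h
    have e1 := endpoint2_eq B (u + h)
    have e2 := endpoint2_eq B u
    have hexp : ∫ τ, (1/2 : ℝ) • B (pi1Curve (u + h) τ) ((u + h) τ) ∂μ01
        = (∫ τ, (1/2 : ℝ) • B (pi1Curve u τ) (u τ) ∂μ01)
          + ((∫ τ, ((1/2 : ℝ) • B (pi1Curve h τ) (u τ)
              + (1/2 : ℝ) • B (pi1Curve u τ) (h τ)) ∂μ01)
            + ∫ τ, (1/2 : ℝ) • B (pi1Curve h τ) (h τ) ∂μ01) := by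
      have i1 : Integrable (fun τ => (1/2:ℝ) • B (pi1Curve u τ) (u τ)) μ01 :=
        (integrable_Bval B u u).smul (1/2:ℝ)
      have i2 : Integrable (fun τ => (1/2:ℝ) • B (pi1Curve h τ) (u τ)
          + (1/2:ℝ) • B (pi1Curve u τ) (h τ)) μ01 :=
        ((integrable_Bval B h u).smul (1/2:ℝ)).add ((integrable_Bval B u h).smul (1/2:ℝ))
      have i3 : Integrable (fun τ => (1/2:ℝ) • B (pi1Curve h τ) (h τ)) μ01 :=
        (integrable_Bval B h h).smul (1/2:ℝ)
      have i23 : Integrable (fun τ => ((1/2:ℝ) • B (pi1Curve h τ) (u τ)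
          + (1/2:ℝ) • B (pi1Curve u τ) (h τ)) + (1/2:ℝ) • B (pi1Curve h τ) (h τ)) μ01 :=
        i2.add i3
      rw [← integral_add i2 i3, ← integral_add i1 i23]
      refine integral_congr_ae ?_
      filter_upwards [Lp.coeFn_add u h] with τ hτ
      rw [pi1Curve_add, hτ]
      simp only [Pi.add_apply, map_add, LinearMap.add_apply, smul_add]
      abel
    refine Prod.ext ?_ ?_
    · show (endpoint2 B (u+h)).1 - (endpoint2 B u).1 - (Lmap B u h).1 = 0
      rw [e1, e2]
      show pi1Curve (u+h) 1 - pi1Curve u 1 - pi1Curve h 1 = 0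
      rw [pi1Curve_add]; abel
    · show (endpoint2 B (u+h)).2 - (endpoint2 B u).2 - (Lmap B u h).2 = _
      rw [e1, e2, Lmap_snd_sym B u hskew h]
      show (∫ τ, (1/2 : ℝ) • B (pi1Curve (u+h) τ) ((u+h) τ) ∂μ01)
          - (∫ τ, (1/2 : ℝ) • B (pi1Curve u τ) (u τ) ∂μ01)
          - (∫ τ, ((1/2 : ℝ) • B (pi1Curve h τ) (u τ)
              + (1/2 : ℝ) • B (pi1Curve u τ) (h τ)) ∂μ01) = _
      rw [hexp]
      abel
  have hbound : ∀ h : Lp (Fin r → ℝ) 1 μ01,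
      ‖∫ τ, (1/2:ℝ) • B (pi1Curve h τ) (h τ) ∂μ01‖
        ≤ (1/2) * ‖Bcont B‖ * (‖h‖ * ‖h‖) := by
    intro h
    have hb := norm_integral_Bval_le B h h
    have h5 : ‖(1/2 : ℝ)‖ = 1/2 := by norm_num [Real.norm_eq_abs]
    calc ‖∫ τ, (1/2:ℝ) • B (pi1Curve h τ) (h τ) ∂μ01‖
        = ‖(1/2:ℝ) • ∫ τ, B (pi1Curve h τ) (h τ) ∂μ01‖ := by rw [integral_smul]
      _ = (1/2) * ‖∫ τ, B (pi1Curve h τ) (h τ) ∂μ01‖ := by rw [norm_smul, h5]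
      _ ≤ (1/2) * ‖Bcont B‖ * (‖h‖ * ‖h‖) := by nlinarith
  refine Asymptotics.isLittleO_iff.2 fun c hc => ?_
  have hCpos : (0:ℝ) < (1/2) * ‖Bcont B‖ + 1 := by positivity
  filter_upwards [Metric.ball_mem_nhds (0 : Lp (Fin r → ℝ) 1 μ01) (div_pos hc hCpos)]
    with h hh
  rw [key h]
  rw [mem_ball_zero_iff] at hh
  have h2 : ((1/2) * ‖Bcont B‖ + 1) * ‖h‖ ≤ c := by
    rw [← le_div_iff₀' hCpos]
    exact hh.le
  have h1 : ‖((0 : Fin r → ℝ), ∫ τ, (1/2:ℝ) • B (pi1Curve h τ) (h τ) ∂μ01)‖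
      = ‖∫ τ, (1/2:ℝ) • B (pi1Curve h τ) (h τ) ∂μ01‖ := by
    rw [Prod.norm_def]
    simp [max_eq_right (norm_nonneg _)]
  rw [h1]
  nlinarith [hbound h, norm_nonneg h, norm_nonneg (Bcont B),
    norm_nonneg (∫ τ, (1/2:ℝ) • B (pi1Curve h τ) (h τ) ∂μ01)]

lemma fderiv_endpoint2 (hskew : ∀ v w, B v w = - B w v) :
    fderiv ℝ (endpoint2 B) u = Lmap B u :=
  (hasFDerivAt_endpoint2 B u hskew).fderiv

end Deriv


section RangeChar

variable (B : (Fin r → ℝ) →ₗ[ℝ] (Fin r → ℝ) →ₗ[ℝ] (Fin m → ℝ)) (u : Lp (Fin r → ℝ) 1 μ01)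

lemma integral_mem_submodule (S : Submodule ℝ (Fin m → ℝ)) {f : ℝ → (Fin m → ℝ)}
    (hf : Integrable f μ01) (hmem : ∀ᵐ τ ∂μ01, f τ ∈ S) : (∫ τ, f τ ∂μ01) ∈ S := by
  obtain ⟨S', hc⟩ := Submodule.exists_isCompl S
  set P : (Fin m → ℝ) →ₗ[ℝ] (Fin m → ℝ) := S.subtype ∘ₗ S.projectionOnto S' hc with hPdef
  have hP : ∀ z ∈ S, P z = z := by
    intro z hz
    show ((S.projectionOnto S' hc) z : Fin m → ℝ) = z
    rw [show z = ((⟨z, hz⟩ : S) : Fin m → ℝ) from rfl,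
      Submodule.projectionOnto_apply_left hc ⟨z, hz⟩]
  have hPS : ∀ z, P z ∈ S := fun z => (S.projectionOnto S' hc z).2
  set Pc := LinearMap.toContinuousLinearMap P with hPc
  have h1 : ∫ τ, Pc (f τ) ∂μ01 = Pc (∫ τ, f τ ∂μ01) :=
    ContinuousLinearMap.integral_comp_comm Pc hf
  have h2 : ∫ τ, Pc (f τ) ∂μ01 = ∫ τ, f τ ∂μ01 := by
    refine integral_congr_ae ?_
    filter_upwards [hmem] with τ hτ
    exact hP _ hτ
  rw [← h2, h1]
  exact hPS _

lemma pi1Curve_mem_Pgamma (τ : ℝ) : pi1Curve u τ ∈ Pgamma u := by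
  rcases lt_or_ge τ 0 with h | h
  · have : pi1Curve u τ = 0 := by
      unfold pi1Curve
      rw [Set.Ioc_eq_empty (by linarith)]
      simp
    rw [this]; exact Submodule.zero_mem _
  rcases le_or_gt τ 1 with h1 | h1
  · exact Submodule.subset_span ⟨τ, ⟨h, h1⟩, rfl⟩
  · have : pi1Curve u τ = pi1Curve u 1 := by
      unfold pi1Curve
      show ∫ s, u s ∂(μ01.restrict (Set.Ioc 0 τ)) = ∫ s, u s ∂(μ01.restrict (Set.Ioc 0 1))
      congr 1
      show (volume.restrict (Set.Icc 0 1)).restrict (Set.Ioc 0 τ)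
          = (volume.restrict (Set.Icc 0 1)).restrict (Set.Ioc 0 1)
      rw [Measure.restrict_restrict measurableSet_Ioc,
        Measure.restrict_restrict measurableSet_Ioc]
      congr 1
      ext x
      simp only [Set.mem_inter_iff, Set.mem_Ioc, Set.mem_Icc]
      constructor
      · rintro ⟨⟨hx1, _⟩, hx3, hx4⟩; exact ⟨⟨hx1, hx4⟩, hx3, hx4⟩
      · rintro ⟨⟨hx1, hx2⟩, hx3, hx4⟩; exact ⟨⟨hx1, hx2.trans h1.le⟩, hx3, hx4⟩
    rw [this]
    exact Submodule.subset_span ⟨1, ⟨zero_le_one, le_refl 1⟩, rfl⟩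

lemma Lmap_snd_mem (hskew : ∀ v w, B v w = - B w v) (v : Lp (Fin r → ℝ) 1 μ01) :
    (Lmap B u v).2 ∈ Submodule.span ℝ {z | ∃ p ∈ Pgamma u, ∃ w, z = B p w} := by
  set S := Submodule.span ℝ {z | ∃ p ∈ Pgamma u, ∃ w, z = B p w} with hSdef
  rw [Lmap_apply]
  refine Submodule.add_mem _ ?_ ?_
  · refine Submodule.smul_mem _ _ ?_
    rw [hskew]
    refine Submodule.neg_mem _ (Submodule.subset_span ?_)
    exact ⟨pi1Curve u 1, pi1Curve_mem_Pgamma u 1, pi1Curve v 1, rfl⟩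
  · refine integral_mem_submodule S (integrable_Bval B u v) ?_
    refine Filter.Eventually.of_forall fun τ => ?_
    exact Submodule.subset_span ⟨pi1Curve u τ, pi1Curve_mem_Pgamma u τ, v τ, rfl⟩

lemma span_eq_top_of_surjective (hskew : ∀ v w, B v w = - B w v)
    (hsurj : Function.Surjective ⇑(Lmap B u)) :
    Submodule.span ℝ {z | ∃ p ∈ Pgamma u, ∃ w, z = B p w} = ⊤ := by
  rw [eq_top_iff]
  intro z _
  obtain ⟨v, hv⟩ := hsurj ((0 : Fin r → ℝ), z)
  have : (Lmap B u v).2 = z := by rw [hv]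
  rw [← this]
  exact Lmap_snd_mem B u hskew v

/-- indicator control -/
noncomputable def indLp (s : Set ℝ) (hs : MeasurableSet s) (w : Fin r → ℝ) :
    Lp (Fin r → ℝ) 1 μ01 :=
  indicatorConstLp 1 hs (measure_ne_top μ01 s) w

lemma pi1Curve_indLp (s : Set ℝ) (hs : MeasurableSet s) (w : Fin r → ℝ) (τ : ℝ) :
    pi1Curve (indLp s hs w) τ = (μ01 (Set.Ioc 0 τ ∩ s)).toReal • w := by
  unfold pi1Curve
  have h1 : ∫ σ in Set.Ioc 0 τ, (indLp s hs w) σ ∂μ01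
      = ∫ σ in Set.Ioc 0 τ, s.indicator (fun _ => w) σ ∂μ01 := by
    have hc := indicatorConstLp_coeFn (p := 1) (hs := hs) (hμs := measure_ne_top μ01 s) (c := w)
    exact integral_congr_ae hc.restrict
  rw [h1, setIntegral_indicator hs, setIntegral_const]
  rfl

lemma μ01_Ioc {t : ℝ} (h0 : 0 ≤ t) (h1 : t ≤ 1) : (μ01 (Set.Ioc 0 t)).toReal = t := by
  have : μ01 (Set.Ioc 0 t) = volume (Set.Ioc 0 t ∩ Set.Icc 0 1) :=
    Measure.restrict_apply measurableSet_Ioc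
  rw [this, Set.inter_eq_left.2 (fun x hx => Set.mem_Icc.2 ⟨hx.1.le, hx.2.trans h1⟩), Real.volume_Ioc]
  simp [ENNReal.toReal_ofReal h0]

lemma Lmap_indLp (s : Set ℝ) (hs : MeasurableSet s) (w : Fin r → ℝ) :
    Lmap B u (indLp s hs w) = ((μ01 (Set.Ioc 0 1 ∩ s)).toReal • w,
      (1/2 : ℝ) • B ((μ01 (Set.Ioc 0 1 ∩ s)).toReal • w) (pi1Curve u 1)
        + ∫ τ in s, B (pi1Curve u τ) w ∂μ01) := by
  rw [Lmap_apply, pi1Curve_indLp]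
  refine Prod.ext rfl ?_
  show _ + ∫ τ, B (pi1Curve u τ) ((indLp s hs w) τ) ∂μ01 = _
  congr 1
  have h1 : ∫ τ, B (pi1Curve u τ) ((indLp s hs w) τ) ∂μ01
      = ∫ τ, s.indicator (fun τ => B (pi1Curve u τ) w) τ ∂μ01 := by
    refine integral_congr_ae ?_
    filter_upwards [indicatorConstLp_coeFn (p := 1) (hs := hs)
      (hμs := measure_ne_top μ01 s) (c := w)] with τ hτ
    unfold indLp
    rw [hτ]
    by_cases h : τ ∈ s
    · rw [Set.indicator_of_mem h, Set.indicator_of_mem h]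
    · rw [Set.indicator_of_notMem h, Set.indicator_of_notMem h, map_zero]
  rw [h1, integral_indicator hs]

/-- the subspace of second components reachable with zero first component -/
noncomputable def Tsub : Submodule ℝ (Fin m → ℝ) :=
  (LinearMap.range (Lmap B u : Lp (Fin r → ℝ) 1 μ01 →ₗ[ℝ] (Fin r → ℝ) × (Fin m → ℝ))).comap (LinearMap.inr ℝ (Fin r → ℝ) (Fin m → ℝ))

lemma mem_Tsub {z : Fin m → ℝ} :
    z ∈ Tsub B u ↔ ∃ v, Lmap B u v = ((0 : Fin r → ℝ), z) := by
  simp [Tsub, Submodule.mem_comap, LinearMap.mem_range, LinearMap.inr_apply]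

lemma psi_sub_mem_T (w : Fin r → ℝ) {t : ℝ} (ht : t ∈ Set.Icc (0:ℝ) 1) :
    ((∫ τ in Set.Ioc (0:ℝ) t, B (pi1Curve u τ) w ∂μ01)
      - t • ∫ τ in Set.Ioc (0:ℝ) 1, B (pi1Curve u τ) w ∂μ01) ∈ Tsub B u := by
  refine (mem_Tsub B u).2
    ⟨indLp (Set.Ioc 0 t) measurableSet_Ioc w - t • indLp (Set.Ioc 0 1) measurableSet_Ioc w, ?_⟩
  have hm1 : (μ01 (Set.Ioc 0 1 ∩ Set.Ioc 0 t)).toReal = t := by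
    rw [Set.Ioc_inter_Ioc, max_self, min_eq_right ht.2]
    exact μ01_Ioc ht.1 ht.2
  have hm2 : (μ01 (Set.Ioc 0 1 ∩ Set.Ioc 0 1)).toReal = 1 := by
    rw [Set.inter_self]
    exact μ01_Ioc zero_le_one le_rfl
  rw [map_sub, _root_.map_smul, Lmap_indLp, Lmap_indLp, hm1, hm2]
  refine Prod.ext ?_ ?_
  · show t • w - t • ((1:ℝ) • w) = 0
    rw [one_smul, sub_self]
  · show ((1/2 : ℝ) • B (t • w) (pi1Curve u 1) + ∫ τ in Set.Ioc (0:ℝ) t, B (pi1Curve u τ) w ∂μ01)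
        - t • ((1/2 : ℝ) • B ((1:ℝ) • w) (pi1Curve u 1)
          + ∫ τ in Set.Ioc (0:ℝ) 1, B (pi1Curve u τ) w ∂μ01) = _
    rw [one_smul, LinearMap.map_smul₂]
    generalize B w (pi1Curve u 1) = X
    generalize (∫ τ in Set.Ioc (0:ℝ) t, B (pi1Curve u τ) w ∂μ01) = Y
    generalize (∫ τ in Set.Ioc (0:ℝ) 1, B (pi1Curve u τ) w ∂μ01) = Z
    rw [smul_add]
    module

lemma setIntegral_Ioc_primitive (f : ℝ → (Fin m → ℝ)) {t : ℝ} (ht : 0 ≤ t) :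
    ∫ τ in Set.Ioc 0 t, f τ ∂μ01
      = ∫ τ in (0:ℝ)..t, Set.indicator (Set.Icc 0 1) f τ := by
  rw [intervalIntegral.integral_of_le ht, setIntegral_indicator measurableSet_Icc]
  show ∫ τ in Set.Ioc 0 t, f τ ∂(volume.restrict (Set.Icc 0 1)) = _
  rw [Measure.restrict_restrict measurableSet_Ioc]

lemma BXw_mem_T (w : Fin r → ℝ) {t : ℝ} (ht : t ∈ Set.Icc (0:ℝ) 1) :
    B (pi1Curve u t) w ∈ Tsub B u := by
  set T := Tsub B u with hTdef
  have hclosed : IsClosed (T : Set (Fin m → ℝ)) := Submodule.closed_of_finiteDimensional _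
  set g : ℝ → (Fin m → ℝ) := fun τ => B (pi1Curve u τ) w with hgdef
  have hg : Continuous g := by
    have : Continuous fun τ => ((Bcont B).flip w) (pi1Curve u τ) :=
      ((Bcont B).flip w).continuous.comp (continuous_pi1Curve u)
    exact this
  set g1 : ℝ → (Fin m → ℝ) := Set.indicator (Set.Icc 0 1) g with hg1def
  have hg1 : Integrable g1 volume :=
    (integrable_indicator_iff measurableSet_Icc).2 (hg.integrableOn_Icc)
  set ψ : ℝ → (Fin m → ℝ) := fun t => ∫ τ in Set.Ioc (0:ℝ) t, g τ ∂μ01 with hψdef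
  have hψ : ∀ {s : ℝ}, 0 ≤ s → ψ s = ∫ τ in (0:ℝ)..s, g1 τ := fun hs =>
    setIntegral_Ioc_primitive g hs
  have hmemT : ∀ s ∈ Set.Icc (0:ℝ) 1, ψ s - s • ψ 1 ∈ T := fun s hs =>
    psi_sub_mem_T B u w hs
  have hT1 : ∀ t', t' ∈ Set.Ioo (0:ℝ) 1 → g t' - ψ 1 ∈ T := by
    intro t' ht'
    have hg1meas : StronglyMeasurable g1 :=
      hg.stronglyMeasurable.indicator measurableSet_Icc
    have hcont' : ContinuousAt g1 t' := by
      refine hg.continuousAt.congr ?_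
      refine Filter.eventuallyEq_of_mem (Ioo_mem_nhds ht'.1 ht'.2) fun x hx => ?_
      exact (Set.indicator_of_mem (Set.Ioo_subset_Icc_self hx) g).symm
    have hd1 : HasDerivAt (fun s => ∫ τ in (0:ℝ)..s, g1 τ) (g1 t') t' :=
      intervalIntegral.integral_hasDerivAt_right hg1.intervalIntegrable
        hg1meas.stronglyMeasurableAtFilter hcont'
    have hd2 : HasDerivAt (fun s : ℝ => s • ψ 1) (ψ 1) t' := by
      simpa using (hasDerivAt_id t').smul_const (ψ 1)
    have hF : HasDerivAt (fun s => (∫ τ in (0:ℝ)..s, g1 τ) - s • ψ 1) (g1 t' - ψ 1) t' :=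
      hd1.sub hd2
    have htend := hasDerivAt_iff_tendsto_slope.1 hF
    have hg1t : g1 t' - ψ 1 = g t' - ψ 1 := by
      rw [hg1def, Set.indicator_of_mem (Set.Ioo_subset_Icc_self ht') g]
    rw [hg1t] at htend
    refine hclosed.mem_of_tendsto htend ?_
    have hIoo : Set.Ioo (0:ℝ) 1 ∈ nhdsWithin t' {t'}ᶜ :=
      nhdsWithin_le_nhds (Ioo_mem_nhds ht'.1 ht'.2)
    filter_upwards [hIoo] with s hs
    rw [slope_def_module]
    have h1 : (∫ τ in (0:ℝ)..s, g1 τ) - s • ψ 1 = ψ s - s • ψ 1 := by rw [hψ hs.1.le]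
    have h2 : (∫ τ in (0:ℝ)..t', g1 τ) - t' • ψ 1 = ψ t' - t' • ψ 1 := by rw [hψ ht'.1.le]
    rw [h1, h2]
    refine Submodule.smul_mem _ _ (Submodule.sub_mem _ ?_ ?_)
    · exact hmemT s (Set.Ioo_subset_Icc_self hs)
    · exact hmemT t' (Set.Ioo_subset_Icc_self ht')
  have hg0 : g 0 = 0 := by
    rw [hgdef]
    show B (pi1Curve u 0) w = 0
    rw [pi1Curve_zero_t, LinearMap.map_zero₂]
  have hψ1 : ψ 1 ∈ T := by
    haveI : (nhdsWithin (0:ℝ) (Set.Ioo (0:ℝ) 1)).NeBot := by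
      refine mem_closure_iff_nhdsWithin_neBot.1 ?_
      rw [closure_Ioo (by norm_num : (0:ℝ) ≠ 1)]
      exact ⟨le_rfl, zero_le_one⟩
    have htd : Filter.Tendsto (fun s => g s - ψ 1) (nhdsWithin 0 (Set.Ioo (0:ℝ) 1))
        (nhds (g 0 - ψ 1)) :=
      ((hg.sub continuous_const).tendsto 0).mono_left nhdsWithin_le_nhds
    have h0 : g 0 - ψ 1 ∈ T := by
      refine hclosed.mem_of_tendsto htd ?_
      filter_upwards [self_mem_nhdsWithin] with s hs
      exact hT1 s hs
    rw [hg0, zero_sub] at h0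
    simpa using Submodule.neg_mem _ h0
  have hT2 : ∀ t', t' ∈ Set.Ioo (0:ℝ) 1 → g t' ∈ T := by
    intro t' ht'
    have := Submodule.add_mem _ (hT1 t' ht') hψ1
    simpa using this
  rcases eq_or_lt_of_le ht.1 with h0 | h0
  · rw [← h0]
    show g 0 ∈ T
    rw [hg0]; exact Submodule.zero_mem _
  rcases eq_or_lt_of_le ht.2 with h1 | h1
  · rw [h1]
    haveI : (nhdsWithin (1:ℝ) (Set.Ioo (0:ℝ) 1)).NeBot := by
      refine mem_closure_iff_nhdsWithin_neBot.1 ?_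
      rw [closure_Ioo (by norm_num : (0:ℝ) ≠ 1)]
      exact ⟨zero_le_one, le_rfl⟩
    have htd : Filter.Tendsto g (nhdsWithin 1 (Set.Ioo (0:ℝ) 1)) (nhds (g 1)) :=
      (hg.tendsto 1).mono_left nhdsWithin_le_nhds
    refine hclosed.mem_of_tendsto htd ?_
    filter_upwards [self_mem_nhdsWithin] with s hs
    exact hT2 s hs
  · exact hT2 t ⟨h0, h1⟩

lemma span_le_Tsub :
    Submodule.span ℝ {z | ∃ p ∈ Pgamma u, ∃ w, z = B p w} ≤ Tsub B u := by
  rw [Submodule.span_le]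
  rintro z ⟨p, hp, w, rfl⟩
  have key : ∀ q, q ∈ Pgamma u → ∀ w', B q w' ∈ Tsub B u := by
    intro q hq
    refine Submodule.span_induction
      (p := fun q _ => ∀ w', B q w' ∈ Tsub B u) ?_ ?_ ?_ ?_ hq
    · rintro x ⟨t, ht, rfl⟩ w'
      exact BXw_mem_T B u w' ht
    · intro w'
      rw [LinearMap.map_zero₂]
      exact Submodule.zero_mem _
    · intro x y _ _ hx hy w'
      rw [LinearMap.map_add₂]
      exact Submodule.add_mem _ (hx w') (hy w')
    · intro c x _ hx w'
      rw [LinearMap.map_smul₂]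
      exact Submodule.smul_mem _ _ (hx w')
  exact key p hp w

lemma surjective_of_span_eq_top
    (hS : Submodule.span ℝ {z | ∃ p ∈ Pgamma u, ∃ w, z = B p w} = ⊤) :
    Function.Surjective ⇑(Lmap B u) := by
  have hT : ∀ z : Fin m → ℝ, z ∈ Tsub B u := by
    intro z
    have h2 : Tsub B u = ⊤ := le_antisymm le_top (hS ▸ span_le_Tsub B u)
    rw [h2]; exact Submodule.mem_top
  rintro ⟨a, z⟩
  set x := Lmap B u (indLp (Set.Ioc 0 1) measurableSet_Ioc a) with hxdef
  have hx1 : x.1 = a := by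
    rw [hxdef, Lmap_indLp]
    show (μ01 (Set.Ioc 0 1 ∩ Set.Ioc 0 1)).toReal • a = a
    rw [Set.inter_self, μ01_Ioc zero_le_one le_rfl, one_smul]
  obtain ⟨v2, hv2⟩ := (mem_Tsub B u).1 (hT (z - x.2))
  refine ⟨indLp (Set.Ioc 0 1) measurableSet_Ioc a + v2, ?_⟩
  rw [map_add, hv2]
  refine Prod.ext ?_ ?_
  · show x.1 + 0 = a
    rw [hx1, add_zero]
  · show x.2 + (z - x.2) = z
    rw [add_sub_cancel]

end RangeChar

end AuxStmt9

/-- In a step-2 Carnot group, a horizontal curve γ from the identity with control u is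
abnormal (u is a singular control of the endpoint map) if and only if [P_γ, g₁] ≠ g₂. -/
theorem stmt9 (B : (Fin r → ℝ) →ₗ[ℝ] (Fin r → ℝ) →ₗ[ℝ] (Fin m → ℝ))
    (hskew : ∀ v w, B v w = - B w v)
    (hgen : Submodule.span ℝ {z | ∃ v w, z = B v w} = (⊤ : Submodule ℝ (Fin m → ℝ)))
    (u : Lp (Fin r → ℝ) 1 μ01) :
    ¬ Function.Surjective (fderiv ℝ (endpoint2 B) u) ↔
      Submodule.span ℝ {z | ∃ p ∈ Pgamma u, ∃ v, z = B p v}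
        ≠ (⊤ : Submodule ℝ (Fin m → ℝ)) := by
  rw [fderiv_endpoint2 B u hskew]
  exact not_iff_not.2
    ⟨span_eq_top_of_surjective B u hskew, surjective_of_span_eq_top B u⟩
end

section
/- Let ω₁ = X₁∧X₂ + X₃∧X₄ and ω₂ = X₁∧X₄ + X₂∧X₃ in ⋀²V, where X₁,...,X₄ is a basis of a 4-dimensional real vector space V. Then for all (t,s) ≠ (0,0), the 2-vector tω₁ + sω₂ has rank 2; equivalently, the determinant of the associated 4×4 skew-symmetric matrix equals (t² + s²)², which is nonzero. -/
open scoped BigOperators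

variable {V : Type*} [AddCommGroup V] [Module ℝ V]

/-- The 2-vector `Σ_{i<j} A_{ij} e_i ∧ e_j` associated to a matrix `A` via a basis `e`. -/
noncomputable def omegaOf {r : ℕ} (e : Module.Basis (Fin r) ℝ V) (A : Matrix (Fin r) (Fin r) ℝ) :
    ExteriorAlgebra ℝ V :=
  ∑ i, ∑ j, if i < j then A i j • wedge (e i) (e j) else 0

lemma iswap (x y : V) :
    ExteriorAlgebra.ι ℝ y * ExteriorAlgebra.ι ℝ x
      = -(ExteriorAlgebra.ι ℝ x * ExteriorAlgebra.ι ℝ y) :=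
  eq_neg_of_add_eq_zero_right (by rw [add_comm]; exact ExteriorAlgebra.ι_add_mul_swap (R := ℝ) y x)

lemma iswap' (x y : V) (z : ExteriorAlgebra ℝ V) :
    ExteriorAlgebra.ι ℝ y * (ExteriorAlgebra.ι ℝ x * z)
      = -(ExteriorAlgebra.ι ℝ x * (ExteriorAlgebra.ι ℝ y * z)) := by
  rw [← mul_assoc, iswap, ← mul_assoc, neg_mul]

lemma isq' (x : V) (z : ExteriorAlgebra ℝ V) :
    ExteriorAlgebra.ι ℝ x * (ExteriorAlgebra.ι ℝ x * z) = 0 := by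
  rw [← mul_assoc, ExteriorAlgebra.ι_sq_zero, zero_mul]

-- target: nonvanishing of 4-fold wedge of basis vectors

lemma wedge4_ne (X : Module.Basis (Fin 4) ℝ V) :
    ExteriorAlgebra.ι ℝ (X 0) * (ExteriorAlgebra.ι ℝ (X 1) *
      (ExteriorAlgebra.ι ℝ (X 2) * ExteriorAlgebra.ι ℝ (X 3))) ≠ 0 := by
  set g : V [⋀^Fin 4]→ₗ[ℝ] ℝ :=
    (Matrix.detRowAlternating).compLinearMap X.equivFun.toLinearMap with hg
  set f : ∀ i, V [⋀^Fin i]→ₗ[ℝ] ℝ :=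
    Function.update (fun i => (0 : V [⋀^Fin i]→ₗ[ℝ] ℝ)) 4 g with hf
  intro h
  have h1 : ExteriorAlgebra.ιMulti ℝ 4 ![X 0, X 1, X 2, X 3]
      = ExteriorAlgebra.ι ℝ (X 0) * (ExteriorAlgebra.ι ℝ (X 1) *
      (ExteriorAlgebra.ι ℝ (X 2) * ExteriorAlgebra.ι ℝ (X 3))) := by
    simp [ExteriorAlgebra.ιMulti_apply, List.ofFn_succ, mul_assoc]
  have h2 := ExteriorAlgebra.liftAlternating_apply_ιMulti f ![X 0, X 1, X 2, X 3]
  rw [h1, h] at h2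
  simp only [map_zero] at h2
  have h3 : f 4 = g := Function.update_self _ _ _
  rw [h3] at h2
  have h4 : g ![X 0, X 1, X 2, X 3] = 1 := by
    have : (Matrix.of fun i j => X.equivFun (![X 0, X 1, X 2, X 3] i) j)
        = (1 : Matrix (Fin 4) (Fin 4) ℝ) := by
      ext i j
      fin_cases i <;>
        simp [Module.Basis.equivFun_self, Matrix.one_apply, Finsupp.single_apply, eq_comm]
    have h5 : g ![X 0, X 1, X 2, X 3]
        = Matrix.det (Matrix.of fun i j => X.equivFun (![X 0, X 1, X 2, X 3] i) j) := rfl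
    rw [h5, this, Matrix.det_one]
  rw [h4] at h2
  exact one_ne_zero h2.symm

lemma omegasq (X : Module.Basis (Fin 4) ℝ V) (t s : ℝ) :
    (t • (wedge (X 0) (X 1) + wedge (X 2) (X 3))
        + s • (wedge (X 0) (X 3) + wedge (X 1) (X 2)))
      * (t • (wedge (X 0) (X 1) + wedge (X 2) (X 3))
        + s • (wedge (X 0) (X 3) + wedge (X 1) (X 2)))
      = (2 * (t ^ 2 + s ^ 2)) • (ExteriorAlgebra.ι ℝ (X 0) * (ExteriorAlgebra.ι ℝ (X 1) *
          (ExteriorAlgebra.ι ℝ (X 2) * ExteriorAlgebra.ι ℝ (X 3)))) := by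
  simp only [wedge, smul_add, add_mul, mul_add, smul_mul_assoc, mul_smul_comm, mul_assoc,
    iswap (X 0) (X 1), iswap (X 0) (X 2), iswap (X 0) (X 3), iswap (X 1) (X 2),
    iswap (X 1) (X 3), iswap (X 2) (X 3),
    iswap' (X 0) (X 1), iswap' (X 0) (X 2), iswap' (X 0) (X 3), iswap' (X 1) (X 2),
    iswap' (X 1) (X 3), iswap' (X 2) (X 3),
    isq' (X 0), isq' (X 1), isq' (X 2), isq' (X 3),
    ExteriorAlgebra.ι_sq_zero, mul_neg, neg_mul, smul_neg, neg_neg, mul_zero, smul_zero,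
    zero_mul]
  module

lemma wedge_sq (v w : V) : wedge v w * wedge v w = 0 := by
  simp [wedge, mul_assoc, iswap' v w, isq']

/-- For ω₁ = X₁∧X₂ + X₃∧X₄ and ω₂ = X₁∧X₄ + X₂∧X₃, every nontrivial combination
tω₁ + sω₂ has rank 2; the determinant of the associated skew matrix is (t²+s²)². -/
theorem stmt10 (X : Module.Basis (Fin 4) ℝ V) (t s : ℝ)
    (M : Matrix (Fin 4) (Fin 4) ℝ)
    (hM : M = !![0, t, 0, s; -t, 0, s, 0; 0, -s, 0, t; -s, 0, -t, 0]) :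
    omegaOf X M
        = t • (wedge (X 0) (X 1) + wedge (X 2) (X 3))
          + s • (wedge (X 0) (X 3) + wedge (X 1) (X 2)) ∧
    M.det = (t ^ 2 + s ^ 2) ^ 2 ∧
    ((t, s) ≠ (0, 0) →
      rank2 (t • (wedge (X 0) (X 1) + wedge (X 2) (X 3))
        + s • (wedge (X 0) (X 3) + wedge (X 1) (X 2))) = 2) := by
  subst hM
  refine ⟨?_, ?_, ?_⟩
  · simp only [omegaOf, Fin.sum_univ_four]
    norm_num [Fin.lt_def]
    norm_num [show ((3:Fin 4) : ℕ) = 3 from rfl]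
    simp [Matrix.cons_val]
    module
  · simp [Matrix.det_succ_row_zero, Fin.sum_univ_succ]
    rw [show Fin.succAbove (1 : Fin 4) 2 = 3 from rfl, show Fin.succAbove (3 : Fin 4) 2 = 2 from rfl]
    simp
    ring
  · intro hts
    set ω := t • (wedge (X 0) (X 1) + wedge (X 2) (X 3))
        + s • (wedge (X 0) (X 3) + wedge (X 1) (X 2)) with hω
    have hts' : t ^ 2 + s ^ 2 ≠ 0 := by
      rcases (not_and_or.mp (by simpa [Prod.ext_iff] using hts)) with h | h <;> positivity
    have hne : ω * ω ≠ 0 := by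
      rw [hω, omegasq]
      exact smul_ne_zero (by positivity) (wedge4_ne X)
    have h2mem : 2 ∈ {k | ∃ a b : Fin k → V, ω = ∑ i, wedge (a i) (b i)} := by
      refine ⟨![X 0, s • X 1 - t • X 3], ![t • X 1 + s • X 3, X 2], ?_⟩
      simp only [hω, Fin.sum_univ_two, Matrix.cons_val_zero, Matrix.cons_val_one, Matrix.head_cons,
        wedge, map_add, map_sub, map_smul, mul_add, add_mul, sub_mul, mul_sub,
        smul_mul_assoc, mul_smul_comm, smul_add,
        iswap (X 2) (X 3)]
      module
    refine le_antisymm (Nat.sInf_le h2mem) (le_csInf ⟨2, h2mem⟩ ?_)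
    rintro k ⟨a, b, hab⟩
    match k with
    | 0 => exact absurd (by simpa using hab) (fun h => hne (by rw [h, zero_mul]))
    | 1 =>
      exfalso
      apply hne
      rw [hab]
      simp [Fin.sum_univ_one, wedge_sq]
    | (n + 2) => omega
end

section
/- Let G be a type I filiform group of step s ≥ 3 with stratified Lie algebra generated by X₁, X₂ and relations X_{j+1} = [X₁, X_j] for j = 2,...,s (all other brackets zero). Then a control u = (u₁,u₂) ∈ L¹([0,1], g₁) is singular for the endpoint map if and only if u₁ = 0 almost everywhere on [0,1]. -/
open MeasureTheory

/-- The coordinates of the horizontal curve driven by the control `u` in the model of the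
type I filiform group of step `s`: `x₁' = u₁`, `x₂' = u₂`, `x_{k}' = -u₁ x_{k-1}`. -/
noncomputable def coordI (u : Lp (ℝ × ℝ) 1 μ01) : ℕ → ℝ → ℝ
  | 0, t => ∫ τ in Set.Ioc 0 t, (u τ).1 ∂μ01
  | 1, t => ∫ τ in Set.Ioc 0 t, (u τ).2 ∂μ01
  | (k+2), t => -∫ τ in Set.Ioc 0 t, (u τ).1 * coordI u (k+1) τ ∂μ01

/-- The endpoint map of the type I filiform group of step `s`. -/
noncomputable def endpointI (s : ℕ) (u : Lp (ℝ × ℝ) 1 μ01) : Fin (s+1) → ℝ :=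
  fun i => coordI u i 1

/-- A control is singular when the differential of the endpoint map at it fails to be
surjective. -/
def IsSingularI (s : ℕ) (u : Lp (ℝ × ℝ) 1 μ01) : Prop :=
  ¬ Function.Surjective (fderiv ℝ (endpointI s) u)
instance inst_s13 : NullSingletonClass μ01 := by unfold μ01; infer_instance

namespace Fil

noncomputable abbrev E := Lp (ℝ × ℝ) 1 μ01

/-- the primitive of `g` with respect to `μ01`. -/
noncomputable def prim (g : ℝ → ℝ) (t : ℝ) : ℝ := ∫ τ in Set.Ioc 0 t, g τ ∂μ01

lemma prim_congr {g g' : ℝ → ℝ} (h : g =ᵐ[μ01] g') : prim g = prim g' := by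
  funext t
  exact integral_congr_ae (ae_restrict_of_ae h)

lemma abs_prim_le {g : ℝ → ℝ} (hg : Integrable g μ01) (t : ℝ) :
    |prim g t| ≤ ∫ τ, |g τ| ∂μ01 := by
  rw [prim, ← Real.norm_eq_abs]
  refine le_trans (norm_integral_le_integral_norm _) ?_
  simp only [Real.norm_eq_abs]
  simpa using setIntegral_le_integral hg.abs (Filter.Eventually.of_forall fun x => abs_nonneg _)

lemma stronglyMeasurable_prim {g : ℝ → ℝ} (hg : AEStronglyMeasurable g μ01) :
    StronglyMeasurable (prim g) := by
  obtain ⟨g', hg', hgg'⟩ := hg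
  have heq : prim g = prim g' := prim_congr hgg'
  rw [heq]
  have : (prim g') = fun t => ∫ τ, (Set.Ioc (0:ℝ) t).indicator g' τ ∂μ01 := by
    funext t
    rw [prim, integral_indicator measurableSet_Ioc]
  rw [this]
  have hΦ : StronglyMeasurable (fun p : ℝ × ℝ => (Set.Ioc (0:ℝ) p.1).indicator g' p.2) := by
    have : (fun p : ℝ × ℝ => (Set.Ioc (0:ℝ) p.1).indicator g' p.2)
        = Set.indicator {p : ℝ × ℝ | 0 < p.2 ∧ p.2 ≤ p.1} (fun p => g' p.2) := by
      funext p
      by_cases h : p.2 ∈ Set.Ioc (0:ℝ) p.1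
      · rw [Set.indicator_of_mem h, Set.indicator_of_mem]
        exact ⟨h.1, h.2⟩
      · rw [Set.indicator_of_notMem h, Set.indicator_of_notMem]
        exact fun hc => h ⟨hc.1, hc.2⟩
    rw [this]
    refine StronglyMeasurable.indicator ?_ ?_
    · exact hg'.comp_measurable measurable_snd
    · exact MeasurableSet.inter
        (measurableSet_lt measurable_const measurable_snd)
        (measurableSet_le measurable_snd measurable_fst)
  exact hΦ.integral_prod_right'

lemma continuousOn_prim {g : ℝ → ℝ} (hg : Integrable g μ01) :
    ContinuousOn (prim g) (Set.Icc 0 1) := by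
  have h1 : Continuous fun t => ∫ x in (0:ℝ)..t, g x ∂μ01 :=
    hg.continuous_primitive 0
  refine (h1.continuousOn).congr ?_
  intro t ht
  show prim g t = ∫ x in (0:ℝ)..t, g x ∂μ01
  rw [prim, intervalIntegral.integral_of_le ht.1]

-- Part 2
lemma integrable_coe (w : E) : Integrable (fun τ => w τ) μ01 := L1.integrable_coeFn w

lemma integrable_fst (w : E) : Integrable (fun τ => (w τ).1) μ01 := (integrable_coe w).fst

lemma integrable_snd (w : E) : Integrable (fun τ => (w τ).2) μ01 := (integrable_coe w).snd

lemma norm_eq_N (w : E) : ‖w‖ = ∫ τ, ‖w τ‖ ∂μ01 := L1.norm_eq_integral_norm w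

lemma int_abs_fst_le (w : E) : ∫ τ, |(w τ).1| ∂μ01 ≤ ∫ τ, ‖w τ‖ ∂μ01 := by
  refine integral_mono (integrable_fst w).abs (integrable_coe w).norm fun τ => ?_
  exact norm_fst_le (w τ)

lemma int_abs_snd_le (w : E) : ∫ τ, |(w τ).2| ∂μ01 ≤ ∫ τ, ‖w τ‖ ∂μ01 := by
  refine integral_mono (integrable_snd w).abs (integrable_coe w).norm fun τ => ?_
  exact norm_snd_le (w τ)

lemma int_bdd_right {f φ : ℝ → ℝ} (hf : Integrable f μ01) (hφm : AEStronglyMeasurable φ μ01)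
    {B : ℝ} (hB : ∀ τ, |φ τ| ≤ B) : Integrable (fun τ => f τ * φ τ) μ01 := by
  have h := Integrable.bdd_mul hf hφm (c := B) (Filter.Eventually.of_forall (by simpa [Real.norm_eq_abs] using hB))
  simpa [mul_comm] using h

lemma primabs_bound {f φ : ℝ → ℝ} (hf : Integrable f μ01) (hφm : AEStronglyMeasurable φ μ01)
    {B : ℝ} (hB : ∀ τ, |φ τ| ≤ B) (t : ℝ) :
    |∫ τ in Set.Ioc 0 t, f τ * φ τ ∂μ01| ≤ B * ∫ τ, |f τ| ∂μ01 := by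
  have h1 : |prim (fun τ => f τ * φ τ) t| ≤ ∫ τ, |f τ * φ τ| ∂μ01 :=
    abs_prim_le (int_bdd_right hf hφm hB) t
  refine le_trans h1 ?_
  have h2 : ∫ τ, |f τ * φ τ| ∂μ01 ≤ ∫ τ, B * |f τ| ∂μ01 := by
    refine integral_mono (int_bdd_right hf hφm hB).abs ((hf.abs).const_mul B) fun τ => ?_
    rw [abs_mul]
    exact mul_le_mul_of_nonneg_left (hB τ) (abs_nonneg _) |>.trans
      (by rw [mul_comm])
  rwa [integral_const_mul] at h2

lemma coord_sm (w : E) : ∀ k, StronglyMeasurable (fun t => coordI w k t) := by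
  have key : ∀ k, StronglyMeasurable (fun t => coordI w k t) ∧
      StronglyMeasurable (fun t => coordI w (k+1) t) := by
    intro k
    induction k with
    | zero =>
      constructor
      · exact stronglyMeasurable_prim (integrable_fst w).1
      · exact stronglyMeasurable_prim (integrable_snd w).1
    | succ n ih =>
      refine ⟨ih.2, ?_⟩
      have : (fun t => coordI w (n+2) t)
          = fun t => -prim (fun τ => (w τ).1 * coordI w (n+1) τ) t := by
        funext t; simp [coordI, prim]
      rw [this]
      exact (stronglyMeasurable_prim ((integrable_fst w).1.mul
        ih.2.aestronglyMeasurable)).neg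
  exact fun k => (key k).1

lemma coord_bdd (w : E) {R : ℝ} (hR : 1 ≤ R) (hNR : ∫ τ, ‖w τ‖ ∂μ01 ≤ R) :
    ∀ k, ∀ t, |coordI w k t| ≤ R^(k+1) := by
  have hb0 : ∀ t, |coordI w 0 t| ≤ R := by
    intro t
    refine le_trans (abs_prim_le (integrable_fst w) t) (le_trans (int_abs_fst_le w) hNR)
  have hb1 : ∀ t, |coordI w 1 t| ≤ R := by
    intro t
    refine le_trans (abs_prim_le (integrable_snd w) t) (le_trans (int_abs_snd_le w) hNR)
  have key : ∀ k, (∀ t, |coordI w k t| ≤ R^(k+1)) ∧ (∀ t, |coordI w (k+1) t| ≤ R^(k+2)) := by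
    intro k
    induction k with
    | zero =>
      refine ⟨fun t => by simpa using hb0 t, fun t => ?_⟩
      refine le_trans (hb1 t) ?_
      calc R = R * 1 := by ring
        _ ≤ R * R := mul_le_mul le_rfl hR zero_le_one (by linarith)
        _ = R ^ (0+2) := by ring
    | succ n ih =>
      refine ⟨ih.2, fun t => ?_⟩
      have h1 : |coordI w (n+2) t| = |∫ τ in Set.Ioc 0 t, (w τ).1 * coordI w (n+1) τ ∂μ01| := by
        simp [coordI]
      rw [h1]
      have h2 := primabs_bound (integrable_fst w) (coord_sm w (n+1)).aestronglyMeasurable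
        (ih.2) t
      refine le_trans h2 ?_
      have h3 : ∫ τ, |(w τ).1| ∂μ01 ≤ R := le_trans (int_abs_fst_le w) hNR
      have h4 : (0:ℝ) ≤ R^(n+2) := by positivity
      calc R^(n+2) * ∫ τ, |(w τ).1| ∂μ01 ≤ R^(n+2) * R :=
            mul_le_mul_of_nonneg_left h3 h4
        _ = R^(n+3) := by ring
  exact fun k => (key k).1

lemma coord_integrand_int (w : E) (k : ℕ) :
    Integrable (fun τ => (w τ).1 * coordI w k τ) μ01 := by
  set R := max 1 (∫ τ, ‖w τ‖ ∂μ01) with hR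
  have h1 : (1:ℝ) ≤ R := le_max_left _ _
  have h2 : ∫ τ, ‖w τ‖ ∂μ01 ≤ R := le_max_right _ _
  exact int_bdd_right (integrable_fst w) (coord_sm w k).aestronglyMeasurable
    (coord_bdd w h1 h2 k)

-- Part 3
noncomputable def Dmap (u : E) : ℕ → ℝ → E → ℝ
  | 0, t, h => ∫ τ in Set.Ioc 0 t, (h τ).1 ∂μ01
  | 1, t, h => ∫ τ in Set.Ioc 0 t, (h τ).2 ∂μ01
  | (k+2), t, h => -∫ τ in Set.Ioc 0 t,
      ((h τ).1 * coordI u (k+1) τ + (u τ).1 * Dmap u (k+1) τ h) ∂μ01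

noncomputable def Ac (R : ℝ) : ℕ → ℝ
  | 0 => 1
  | 1 => 1
  | (k+2) => R^(k+2) + R * Ac R (k+1)

noncomputable def Cc (R : ℝ) : ℕ → ℝ
  | 0 => 0
  | 1 => 0
  | (k+2) => Ac R (k+1) + R * Cc R (k+1)

lemma Ac_nonneg {R : ℝ} (hR : 1 ≤ R) : ∀ k, 0 ≤ Ac R k := by
  have key : ∀ k, 0 ≤ Ac R k ∧ 0 ≤ Ac R (k+1) := by
    intro k
    induction k with
    | zero => exact ⟨by simp [Ac], by simp [Ac]⟩
    | succ n ih =>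
      refine ⟨ih.2, ?_⟩
      show 0 ≤ Ac R (n+2)
      have h1 : (0:ℝ) ≤ R^(n+2) := by positivity
      have : Ac R (n+2) = R^(n+2) + R * Ac R (n+1) := by simp [Ac]
      rw [this]
      nlinarith [ih.2]
  exact fun k => (key k).1

lemma Cc_nonneg {R : ℝ} (hR : 1 ≤ R) : ∀ k, 0 ≤ Cc R k := by
  have key : ∀ k, 0 ≤ Cc R k ∧ 0 ≤ Cc R (k+1) := by
    intro k
    induction k with
    | zero => exact ⟨le_rfl, le_rfl⟩
    | succ n ih =>
      refine ⟨ih.2, ?_⟩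
      show 0 ≤ Cc R (n+2)
      have : Cc R (n+2) = Ac R (n+1) + R * Cc R (n+1) := by simp [Cc]
      rw [this]
      nlinarith [ih.2, Ac_nonneg hR (n+1)]
  exact fun k => (key k).1

section Dfacts

variable (u h : E) {R : ℝ}

/-- strong measurability and boundedness of `Dmap`. -/
lemma dmap_sm_bdd (hR : 1 ≤ R) (hNu : ∫ τ, ‖u τ‖ ∂μ01 ≤ R) :
    ∀ k, StronglyMeasurable (fun t => Dmap u k t h) ∧
      (∀ t, |Dmap u k t h| ≤ Ac R k * ∫ τ, ‖h τ‖ ∂μ01) := by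
  have hNh0 : (0:ℝ) ≤ ∫ τ, ‖h τ‖ ∂μ01 := integral_nonneg fun τ => norm_nonneg _
  have base0 : StronglyMeasurable (fun t => Dmap u 0 t h) ∧
      (∀ t, |Dmap u 0 t h| ≤ Ac R 0 * ∫ τ, ‖h τ‖ ∂μ01) := by
    constructor
    · exact stronglyMeasurable_prim (integrable_fst h).1
    · intro t
      have := abs_prim_le (integrable_fst h) t
      simp only [Ac, one_mul]
      exact le_trans this (int_abs_fst_le h)
  have base1 : StronglyMeasurable (fun t => Dmap u 1 t h) ∧
      (∀ t, |Dmap u 1 t h| ≤ Ac R 1 * ∫ τ, ‖h τ‖ ∂μ01) := by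
    constructor
    · exact stronglyMeasurable_prim (integrable_snd h).1
    · intro t
      have := abs_prim_le (integrable_snd h) t
      simp only [Ac, one_mul]
      exact le_trans this (int_abs_snd_le h)
  have key : ∀ k, (StronglyMeasurable (fun t => Dmap u k t h) ∧
      (∀ t, |Dmap u k t h| ≤ Ac R k * ∫ τ, ‖h τ‖ ∂μ01)) ∧
      (StronglyMeasurable (fun t => Dmap u (k+1) t h) ∧
      (∀ t, |Dmap u (k+1) t h| ≤ Ac R (k+1) * ∫ τ, ‖h τ‖ ∂μ01)) := by
    intro k
    induction k with
    | zero => exact ⟨base0, base1⟩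
    | succ n ih =>
      refine ⟨ih.2, ?_⟩
      -- integrability of the two pieces
      have hint1 : Integrable (fun τ => (h τ).1 * coordI u (n+1) τ) μ01 :=
        int_bdd_right (integrable_fst h) (coord_sm u (n+1)).aestronglyMeasurable
          (coord_bdd u hR hNu (n+1))
      have hint2 : Integrable (fun τ => (u τ).1 * Dmap u (n+1) τ h) μ01 :=
        int_bdd_right (integrable_fst u) ih.2.1.aestronglyMeasurable ih.2.2
      have hsplit : ∀ t, Dmap u (n+2) t h
          = -(∫ τ in Set.Ioc 0 t, (h τ).1 * coordI u (n+1) τ ∂μ01)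
            - ∫ τ in Set.Ioc 0 t, (u τ).1 * Dmap u (n+1) τ h ∂μ01 := by
        intro t
        show -∫ τ in Set.Ioc 0 t,
            ((h τ).1 * coordI u (n+1) τ + (u τ).1 * Dmap u (n+1) τ h) ∂μ01 = _
        rw [integral_add hint1.integrableOn hint2.integrableOn]
        ring
      refine ⟨?_, ?_⟩
      · have hfun : (fun t => Dmap u (n+2) t h)
            = fun t => -(prim (fun τ => (h τ).1 * coordI u (n+1) τ) t)
              - prim (fun τ => (u τ).1 * Dmap u (n+1) τ h) t := by
          funext t; exact hsplit t
        show StronglyMeasurable (fun t => Dmap u (n+2) t h)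
        rw [hfun]
        exact ((stronglyMeasurable_prim hint1.1).neg).sub (stronglyMeasurable_prim hint2.1)
      · intro t
        show |Dmap u (n+2) t h| ≤ Ac R (n+2) * ∫ τ, ‖h τ‖ ∂μ01
        rw [hsplit t]
        have h1 : |∫ τ in Set.Ioc 0 t, (h τ).1 * coordI u (n+1) τ ∂μ01|
            ≤ R^(n+2) * ∫ τ, |(h τ).1| ∂μ01 :=
          primabs_bound (integrable_fst h) (coord_sm u (n+1)).aestronglyMeasurable
            (coord_bdd u hR hNu (n+1)) t
        have h2 : |∫ τ in Set.Ioc 0 t, (u τ).1 * Dmap u (n+1) τ h ∂μ01|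
            ≤ (Ac R (n+1) * ∫ τ, ‖h τ‖ ∂μ01) * ∫ τ, |(u τ).1| ∂μ01 :=
          primabs_bound (integrable_fst u) ih.2.1.aestronglyMeasurable ih.2.2 t
        have hA : Ac R (n+2) = R^(n+2) + R * Ac R (n+1) := by simp [Ac]
        rw [hA]
        have e1 : R^(n+2) * ∫ τ, |(h τ).1| ∂μ01 ≤ R^(n+2) * ∫ τ, ‖h τ‖ ∂μ01 :=
          mul_le_mul_of_nonneg_left (int_abs_fst_le h) (by positivity)
        have e2 : (Ac R (n+1) * ∫ τ, ‖h τ‖ ∂μ01) * ∫ τ, |(u τ).1| ∂μ01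
            ≤ (Ac R (n+1) * ∫ τ, ‖h τ‖ ∂μ01) * R := by
          refine mul_le_mul_of_nonneg_left (le_trans (int_abs_fst_le u) hNu) ?_
          exact mul_nonneg (Ac_nonneg hR (n+1)) hNh0
        calc |-(∫ τ in Set.Ioc 0 t, (h τ).1 * coordI u (n+1) τ ∂μ01)
              - ∫ τ in Set.Ioc 0 t, (u τ).1 * Dmap u (n+1) τ h ∂μ01|
            ≤ |∫ τ in Set.Ioc 0 t, (h τ).1 * coordI u (n+1) τ ∂μ01|
              + |∫ τ in Set.Ioc 0 t, (u τ).1 * Dmap u (n+1) τ h ∂μ01| := by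
              rw [sub_eq_add_neg]
              refine le_trans (abs_add_le _ _) ?_
              rw [abs_neg, abs_neg]
          _ ≤ R^(n+2) * ∫ τ, ‖h τ‖ ∂μ01 + (Ac R (n+1) * ∫ τ, ‖h τ‖ ∂μ01) * R := by
              exact add_le_add (le_trans h1 e1) (le_trans h2 e2)
          _ = (R^(n+2) + R * Ac R (n+1)) * ∫ τ, ‖h τ‖ ∂μ01 := by ring
  exact fun k => (key k).1

lemma dmap_integrand_int (hR : 1 ≤ R) (hNu : ∫ τ, ‖u τ‖ ∂μ01 ≤ R) (k : ℕ) :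
    Integrable (fun τ => (u τ).1 * Dmap u k τ h) μ01 :=
  int_bdd_right (integrable_fst u) (dmap_sm_bdd u h hR hNu k).1.aestronglyMeasurable
    (dmap_sm_bdd u h hR hNu k).2

lemma dmap_full_int (hR : 1 ≤ R) (hNu : ∫ τ, ‖u τ‖ ∂μ01 ≤ R) (k : ℕ) :
    Integrable (fun τ => (h τ).1 * coordI u (k+1) τ + (u τ).1 * Dmap u (k+1) τ h) μ01 :=
  (int_bdd_right (integrable_fst h) (coord_sm u (k+1)).aestronglyMeasurable
      (coord_bdd u hR hNu (k+1))).add (dmap_integrand_int u h hR hNu (k+1))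

end Dfacts

section Dlinear

variable (u : E)

lemma dmap_add (h h' : E) : ∀ k t, Dmap u k t (h + h') = Dmap u k t h + Dmap u k t h' := by
  set R := max 1 (∫ τ, ‖u τ‖ ∂μ01) with hRdef
  have hR : (1:ℝ) ≤ R := le_max_left _ _
  have hNu : ∫ τ, ‖u τ‖ ∂μ01 ≤ R := le_max_right _ _
  have hco : ∀ᵐ τ ∂μ01, (((h + h') : E) : ℝ → ℝ × ℝ) τ = h τ + h' τ := Lp.coeFn_add h h'
  have base0 : ∀ t, Dmap u 0 t (h + h') = Dmap u 0 t h + Dmap u 0 t h' := by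
    intro t
    show (∫ τ in Set.Ioc 0 t, (((h + h') : E) τ).1 ∂μ01) = _
    have e1 : ∫ τ in Set.Ioc 0 t, (((h + h') : E) τ).1 ∂μ01
        = ∫ τ in Set.Ioc 0 t, ((h τ).1 + (h' τ).1) ∂μ01 := by
      refine integral_congr_ae (ae_restrict_of_ae ?_)
      filter_upwards [hco] with τ hτ
      rw [hτ]; rfl
    rw [e1, integral_add (integrable_fst h).integrableOn (integrable_fst h').integrableOn]
    rfl
  have base1 : ∀ t, Dmap u 1 t (h + h') = Dmap u 1 t h + Dmap u 1 t h' := by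
    intro t
    show (∫ τ in Set.Ioc 0 t, (((h + h') : E) τ).2 ∂μ01) = _
    have e1 : ∫ τ in Set.Ioc 0 t, (((h + h') : E) τ).2 ∂μ01
        = ∫ τ in Set.Ioc 0 t, ((h τ).2 + (h' τ).2) ∂μ01 := by
      refine integral_congr_ae (ae_restrict_of_ae ?_)
      filter_upwards [hco] with τ hτ
      rw [hτ]; rfl
    rw [e1, integral_add (integrable_snd h).integrableOn (integrable_snd h').integrableOn]
    rfl
  have key : ∀ k, (∀ t, Dmap u k t (h + h') = Dmap u k t h + Dmap u k t h') ∧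
      (∀ t, Dmap u (k+1) t (h + h') = Dmap u (k+1) t h + Dmap u (k+1) t h') := by
    intro k
    induction k with
    | zero => exact ⟨base0, base1⟩
    | succ n ih =>
      refine ⟨ih.2, fun t => ?_⟩
      show Dmap u (n+2) t (h + h') = Dmap u (n+2) t h + Dmap u (n+2) t h'
      show -∫ τ in Set.Ioc 0 t,
          ((((h + h') : E) τ).1 * coordI u (n+1) τ + (u τ).1 * Dmap u (n+1) τ (h + h')) ∂μ01 = _
      have e1 : ∫ τ in Set.Ioc 0 t,
          ((((h + h') : E) τ).1 * coordI u (n+1) τ + (u τ).1 * Dmap u (n+1) τ (h + h')) ∂μ01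
          = ∫ τ in Set.Ioc 0 t,
            (((h τ).1 * coordI u (n+1) τ + (u τ).1 * Dmap u (n+1) τ h)
              + ((h' τ).1 * coordI u (n+1) τ + (u τ).1 * Dmap u (n+1) τ h')) ∂μ01 := by
        refine integral_congr_ae (ae_restrict_of_ae ?_)
        filter_upwards [hco] with τ hτ
        rw [hτ, ih.2 τ]
        show ((h τ + h' τ).1) * _ + _ = _
        rw [Prod.fst_add]
        ring
      rw [e1, integral_add (dmap_full_int u h hR hNu n).integrableOn
        (dmap_full_int u h' hR hNu n).integrableOn]
      show _ = (-∫ τ in Set.Ioc 0 t, _ ∂μ01) + (-∫ τ in Set.Ioc 0 t, _ ∂μ01)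
      ring
  exact fun k => (key k).1

lemma dmap_smul (c : ℝ) (h : E) : ∀ k t, Dmap u k t (c • h) = c * Dmap u k t h := by
  set R := max 1 (∫ τ, ‖u τ‖ ∂μ01) with hRdef
  have hR : (1:ℝ) ≤ R := le_max_left _ _
  have hNu : ∫ τ, ‖u τ‖ ∂μ01 ≤ R := le_max_right _ _
  have hco : ∀ᵐ τ ∂μ01, (((c • h) : E) : ℝ → ℝ × ℝ) τ = c • h τ := Lp.coeFn_smul c h
  have base0 : ∀ t, Dmap u 0 t (c • h) = c * Dmap u 0 t h := by
    intro t
    show (∫ τ in Set.Ioc 0 t, (((c • h) : E) τ).1 ∂μ01) = _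
    have e1 : ∫ τ in Set.Ioc 0 t, (((c • h) : E) τ).1 ∂μ01
        = ∫ τ in Set.Ioc 0 t, c * (h τ).1 ∂μ01 := by
      refine integral_congr_ae (ae_restrict_of_ae ?_)
      filter_upwards [hco] with τ hτ
      rw [hτ]; rfl
    rw [e1, integral_const_mul]
    rfl
  have base1 : ∀ t, Dmap u 1 t (c • h) = c * Dmap u 1 t h := by
    intro t
    show (∫ τ in Set.Ioc 0 t, (((c • h) : E) τ).2 ∂μ01) = _
    have e1 : ∫ τ in Set.Ioc 0 t, (((c • h) : E) τ).2 ∂μ01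
        = ∫ τ in Set.Ioc 0 t, c * (h τ).2 ∂μ01 := by
      refine integral_congr_ae (ae_restrict_of_ae ?_)
      filter_upwards [hco] with τ hτ
      rw [hτ]; rfl
    rw [e1, integral_const_mul]
    rfl
  have key : ∀ k, (∀ t, Dmap u k t (c • h) = c * Dmap u k t h) ∧
      (∀ t, Dmap u (k+1) t (c • h) = c * Dmap u (k+1) t h) := by
    intro k
    induction k with
    | zero => exact ⟨base0, base1⟩
    | succ n ih =>
      refine ⟨ih.2, fun t => ?_⟩
      show Dmap u (n+2) t (c • h) = c * Dmap u (n+2) t h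
      show -∫ τ in Set.Ioc 0 t,
          ((((c • h) : E) τ).1 * coordI u (n+1) τ + (u τ).1 * Dmap u (n+1) τ (c • h)) ∂μ01 = _
      have e1 : ∫ τ in Set.Ioc 0 t,
          ((((c • h) : E) τ).1 * coordI u (n+1) τ + (u τ).1 * Dmap u (n+1) τ (c • h)) ∂μ01
          = ∫ τ in Set.Ioc 0 t,
            (c * ((h τ).1 * coordI u (n+1) τ + (u τ).1 * Dmap u (n+1) τ h)) ∂μ01 := by
        refine integral_congr_ae (ae_restrict_of_ae ?_)
        filter_upwards [hco] with τ hτ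
        rw [hτ, ih.2 τ]
        show ((c • h τ).1) * _ + _ = _
        rw [Prod.smul_fst, smul_eq_mul]
        ring
      rw [e1, integral_const_mul]
      show _ = c * -∫ τ in Set.Ioc 0 t,
        ((h τ).1 * coordI u (n+1) τ + (u τ).1 * Dmap u (n+1) τ h) ∂μ01
      ring
  exact fun k => (key k).1

end Dlinear

section Diff

variable (u h : E) {R : ℝ}

lemma coord_zero_diff (t : ℝ) :
    coordI (u + h) 0 t - coordI u 0 t = ∫ τ in Set.Ioc 0 t, (h τ).1 ∂μ01 := by
  show (∫ τ in Set.Ioc 0 t, (((u + h) : E) τ).1 ∂μ01) - ∫ τ in Set.Ioc 0 t, (u τ).1 ∂μ01 = _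
  rw [← integral_sub (integrable_fst ((u + h) : E)).integrableOn (integrable_fst u).integrableOn]
  refine integral_congr_ae (ae_restrict_of_ae ?_)
  filter_upwards [Lp.coeFn_add u h] with τ hτ
  rw [hτ]
  show (u τ + h τ).1 - (u τ).1 = _
  rw [Prod.fst_add]; ring

lemma coord_one_diff (t : ℝ) :
    coordI (u + h) 1 t - coordI u 1 t = ∫ τ in Set.Ioc 0 t, (h τ).2 ∂μ01 := by
  show (∫ τ in Set.Ioc 0 t, (((u + h) : E) τ).2 ∂μ01) - ∫ τ in Set.Ioc 0 t, (u τ).2 ∂μ01 = _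
  rw [← integral_sub (integrable_snd ((u + h) : E)).integrableOn (integrable_snd u).integrableOn]
  refine integral_congr_ae (ae_restrict_of_ae ?_)
  filter_upwards [Lp.coeFn_add u h] with τ hτ
  rw [hτ]
  show (u τ + h τ).2 - (u τ).2 = _
  rw [Prod.snd_add]; ring

lemma coord_diff (hR : 1 ≤ R) (hNu : ∫ τ, ‖u τ‖ ∂μ01 ≤ R)
    (hNuh : ∫ τ, ‖((u + h) : E) τ‖ ∂μ01 ≤ R) :
    ∀ k t, |coordI (u + h) k t - coordI u k t| ≤ Ac R k * ∫ τ, ‖h τ‖ ∂μ01 := by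
  have hNh0 : (0:ℝ) ≤ ∫ τ, ‖h τ‖ ∂μ01 := integral_nonneg fun τ => norm_nonneg _
  have base0 : ∀ t, |coordI (u + h) 0 t - coordI u 0 t| ≤ Ac R 0 * ∫ τ, ‖h τ‖ ∂μ01 := by
    intro t
    rw [coord_zero_diff u h t]
    simp only [Ac, one_mul]
    exact le_trans (abs_prim_le (integrable_fst h) t) (int_abs_fst_le h)
  have base1 : ∀ t, |coordI (u + h) 1 t - coordI u 1 t| ≤ Ac R 1 * ∫ τ, ‖h τ‖ ∂μ01 := by
    intro t
    rw [coord_one_diff u h t]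
    simp only [Ac, one_mul]
    exact le_trans (abs_prim_le (integrable_snd h) t) (int_abs_snd_le h)
  have key : ∀ k, (∀ t, |coordI (u + h) k t - coordI u k t| ≤ Ac R k * ∫ τ, ‖h τ‖ ∂μ01) ∧
      (∀ t, |coordI (u + h) (k+1) t - coordI u (k+1) t| ≤ Ac R (k+1) * ∫ τ, ‖h τ‖ ∂μ01) := by
    intro k
    induction k with
    | zero => exact ⟨base0, base1⟩
    | succ n ih =>
      refine ⟨ih.2, fun t => ?_⟩
      show |coordI (u + h) (n+2) t - coordI u (n+2) t| ≤ Ac R (n+2) * ∫ τ, ‖h τ‖ ∂μ01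
      have hint1 : Integrable (fun τ => (h τ).1 * coordI (u + h) (n+1) τ) μ01 :=
        int_bdd_right (integrable_fst h) (coord_sm ((u+h) : E) (n+1)).aestronglyMeasurable
          (coord_bdd ((u+h) : E) hR hNuh (n+1))
      have hφm : AEStronglyMeasurable
          (fun τ => coordI (u + h) (n+1) τ - coordI u (n+1) τ) μ01 :=
        ((coord_sm ((u+h) : E) (n+1)).sub (coord_sm u (n+1))).aestronglyMeasurable
      have hint2 : Integrable
          (fun τ => (u τ).1 * (coordI (u + h) (n+1) τ - coordI u (n+1) τ)) μ01 :=
        int_bdd_right (integrable_fst u) hφm ih.2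
      have esplit : coordI (u + h) (n+2) t - coordI u (n+2) t
          = -((∫ τ in Set.Ioc 0 t, (h τ).1 * coordI (u + h) (n+1) τ ∂μ01)
            + ∫ τ in Set.Ioc 0 t, (u τ).1 * (coordI (u + h) (n+1) τ - coordI u (n+1) τ) ∂μ01) := by
        show (-∫ τ in Set.Ioc 0 t, (((u + h) : E) τ).1 * coordI (u + h) (n+1) τ ∂μ01)
          - (-∫ τ in Set.Ioc 0 t, (u τ).1 * coordI u (n+1) τ ∂μ01) = _
        rw [← integral_add hint1.integrableOn hint2.integrableOn]
        have : ∫ τ in Set.Ioc 0 t, (((u + h) : E) τ).1 * coordI (u + h) (n+1) τ ∂μ01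
            - ∫ τ in Set.Ioc 0 t, (u τ).1 * coordI u (n+1) τ ∂μ01
            = ∫ τ in Set.Ioc 0 t, ((h τ).1 * coordI (u + h) (n+1) τ
              + (u τ).1 * (coordI (u + h) (n+1) τ - coordI u (n+1) τ)) ∂μ01 := by
          rw [← integral_sub (int_bdd_right (integrable_fst ((u+h) : E))
            (coord_sm ((u+h) : E) (n+1)).aestronglyMeasurable
            (coord_bdd ((u+h) : E) hR hNuh (n+1))).integrableOn
            (coord_integrand_int u (n+1)).integrableOn]
          refine integral_congr_ae (ae_restrict_of_ae ?_)
          filter_upwards [Lp.coeFn_add u h] with τ hτ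
          rw [hτ]
          simp only [Pi.add_apply, Prod.fst_add]
          ring
        linarith [this]
      rw [esplit]
      rw [abs_neg]
      have h1 : |∫ τ in Set.Ioc 0 t, (h τ).1 * coordI (u + h) (n+1) τ ∂μ01|
          ≤ R^(n+2) * ∫ τ, |(h τ).1| ∂μ01 :=
        primabs_bound (integrable_fst h) (coord_sm ((u+h) : E) (n+1)).aestronglyMeasurable
          (coord_bdd ((u+h) : E) hR hNuh (n+1)) t
      have h2 : |∫ τ in Set.Ioc 0 t, (u τ).1 * (coordI (u + h) (n+1) τ - coordI u (n+1) τ) ∂μ01|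
          ≤ (Ac R (n+1) * ∫ τ, ‖h τ‖ ∂μ01) * ∫ τ, |(u τ).1| ∂μ01 :=
        primabs_bound (integrable_fst u) hφm ih.2 t
      have e1 : R^(n+2) * ∫ τ, |(h τ).1| ∂μ01 ≤ R^(n+2) * ∫ τ, ‖h τ‖ ∂μ01 :=
        mul_le_mul_of_nonneg_left (int_abs_fst_le h) (by positivity)
      have e2 : (Ac R (n+1) * ∫ τ, ‖h τ‖ ∂μ01) * ∫ τ, |(u τ).1| ∂μ01
          ≤ (Ac R (n+1) * ∫ τ, ‖h τ‖ ∂μ01) * R :=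
        mul_le_mul_of_nonneg_left (le_trans (int_abs_fst_le u) hNu)
          (mul_nonneg (Ac_nonneg hR (n+1)) hNh0)
      have hA : Ac R (n+2) = R^(n+2) + R * Ac R (n+1) := by simp [Ac]
      rw [hA]
      calc |(∫ τ in Set.Ioc 0 t, (h τ).1 * coordI (u + h) (n+1) τ ∂μ01)
            + ∫ τ in Set.Ioc 0 t, (u τ).1 * (coordI (u + h) (n+1) τ - coordI u (n+1) τ) ∂μ01|
          ≤ _ + _ := abs_add_le _ _
        _ ≤ R^(n+2) * ∫ τ, ‖h τ‖ ∂μ01 + (Ac R (n+1) * ∫ τ, ‖h τ‖ ∂μ01) * R :=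
            add_le_add (le_trans h1 e1) (le_trans h2 e2)
        _ = (R^(n+2) + R * Ac R (n+1)) * ∫ τ, ‖h τ‖ ∂μ01 := by ring
  exact fun k => (key k).1

lemma coord_quad (hR : 1 ≤ R) (hNu : ∫ τ, ‖u τ‖ ∂μ01 ≤ R)
    (hNuh : ∫ τ, ‖((u + h) : E) τ‖ ∂μ01 ≤ R) :
    ∀ k t, |coordI (u + h) k t - coordI u k t - Dmap u k t h|
      ≤ Cc R k * (∫ τ, ‖h τ‖ ∂μ01)^2 := by
  have hNh0 : (0:ℝ) ≤ ∫ τ, ‖h τ‖ ∂μ01 := integral_nonneg fun τ => norm_nonneg _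
  have base0 : ∀ t, |coordI (u + h) 0 t - coordI u 0 t - Dmap u 0 t h|
      ≤ Cc R 0 * (∫ τ, ‖h τ‖ ∂μ01)^2 := by
    intro t
    have : coordI (u + h) 0 t - coordI u 0 t - Dmap u 0 t h = 0 := by
      rw [coord_zero_diff u h t]; show _ - Dmap u 0 t h = 0; rw [sub_eq_zero]; rfl
    rw [this]
    simp [Cc]
  have base1 : ∀ t, |coordI (u + h) 1 t - coordI u 1 t - Dmap u 1 t h|
      ≤ Cc R 1 * (∫ τ, ‖h τ‖ ∂μ01)^2 := by
    intro t
    have : coordI (u + h) 1 t - coordI u 1 t - Dmap u 1 t h = 0 := by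
      rw [coord_one_diff u h t]; show _ - Dmap u 1 t h = 0; rw [sub_eq_zero]; rfl
    rw [this]
    simp [Cc]
  have key : ∀ k, (∀ t, |coordI (u + h) k t - coordI u k t - Dmap u k t h|
        ≤ Cc R k * (∫ τ, ‖h τ‖ ∂μ01)^2) ∧
      (∀ t, |coordI (u + h) (k+1) t - coordI u (k+1) t - Dmap u (k+1) t h|
        ≤ Cc R (k+1) * (∫ τ, ‖h τ‖ ∂μ01)^2) := by
    intro k
    induction k with
    | zero => exact ⟨base0, base1⟩
    | succ n ih =>
      refine ⟨ih.2, fun t => ?_⟩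
      show |coordI (u + h) (n+2) t - coordI u (n+2) t - Dmap u (n+2) t h|
        ≤ Cc R (n+2) * (∫ τ, ‖h τ‖ ∂μ01)^2
      -- integrands
      have hφ1m : AEStronglyMeasurable
          (fun τ => coordI (u + h) (n+1) τ - coordI u (n+1) τ) μ01 :=
        ((coord_sm ((u+h) : E) (n+1)).sub (coord_sm u (n+1))).aestronglyMeasurable
      have hφ2m : AEStronglyMeasurable
          (fun τ => coordI (u + h) (n+1) τ - coordI u (n+1) τ - Dmap u (n+1) τ h) μ01 :=
        (((coord_sm ((u+h) : E) (n+1)).sub (coord_sm u (n+1))).sub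
          (dmap_sm_bdd u h hR hNu (n+1)).1).aestronglyMeasurable
      have hint1 : Integrable
          (fun τ => (h τ).1 * (coordI (u + h) (n+1) τ - coordI u (n+1) τ)) μ01 :=
        int_bdd_right (integrable_fst h) hφ1m (coord_diff u h hR hNu hNuh (n+1))
      have hint2 : Integrable
          (fun τ => (u τ).1 * (coordI (u + h) (n+1) τ - coordI u (n+1) τ
            - Dmap u (n+1) τ h)) μ01 :=
        int_bdd_right (integrable_fst u) hφ2m ih.2
      have esplit : coordI (u + h) (n+2) t - coordI u (n+2) t - Dmap u (n+2) t h
          = -((∫ τ in Set.Ioc 0 t, (h τ).1 * (coordI (u + h) (n+1) τ - coordI u (n+1) τ) ∂μ01)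
            + ∫ τ in Set.Ioc 0 t, (u τ).1 * (coordI (u + h) (n+1) τ - coordI u (n+1) τ
              - Dmap u (n+1) τ h) ∂μ01) := by
        show (-∫ τ in Set.Ioc 0 t, (((u + h) : E) τ).1 * coordI (u + h) (n+1) τ ∂μ01)
          - (-∫ τ in Set.Ioc 0 t, (u τ).1 * coordI u (n+1) τ ∂μ01)
          - (-∫ τ in Set.Ioc 0 t, ((h τ).1 * coordI u (n+1) τ
              + (u τ).1 * Dmap u (n+1) τ h) ∂μ01) = _
        rw [← integral_add hint1.integrableOn hint2.integrableOn]
        have heq : ∫ τ in Set.Ioc 0 t, (((u + h) : E) τ).1 * coordI (u + h) (n+1) τ ∂μ01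
            = ∫ τ in Set.Ioc 0 t, (((h τ).1 * (coordI (u + h) (n+1) τ - coordI u (n+1) τ)
                + (u τ).1 * (coordI (u + h) (n+1) τ - coordI u (n+1) τ - Dmap u (n+1) τ h))
              + ((u τ).1 * coordI u (n+1) τ
                + ((h τ).1 * coordI u (n+1) τ + (u τ).1 * Dmap u (n+1) τ h))) ∂μ01 := by
          refine integral_congr_ae (ae_restrict_of_ae ?_)
          filter_upwards [Lp.coeFn_add u h] with τ hτ
          rw [hτ]
          simp only [Pi.add_apply, Prod.fst_add]
          ring
        have hintAB : Integrable (fun τ => (h τ).1 * (coordI (u + h) (n+1) τ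
            - coordI u (n+1) τ) + (u τ).1 * (coordI (u + h) (n+1) τ - coordI u (n+1) τ
            - Dmap u (n+1) τ h)) μ01 := hint1.add hint2
        have hintCD : Integrable (fun τ => (u τ).1 * coordI u (n+1) τ
            + ((h τ).1 * coordI u (n+1) τ + (u τ).1 * Dmap u (n+1) τ h)) μ01 :=
          (coord_integrand_int u (n+1)).add (dmap_full_int u h hR hNu n)
        rw [heq, integral_add hintAB.integrableOn hintCD.integrableOn,
          integral_add hint1.integrableOn hint2.integrableOn,
          integral_add (coord_integrand_int u (n+1)).integrableOn
            (dmap_full_int u h hR hNu n).integrableOn]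
        ring
      rw [esplit, abs_neg]
      have h1 : |∫ τ in Set.Ioc 0 t, (h τ).1 * (coordI (u + h) (n+1) τ
            - coordI u (n+1) τ) ∂μ01|
          ≤ (Ac R (n+1) * ∫ τ, ‖h τ‖ ∂μ01) * ∫ τ, |(h τ).1| ∂μ01 :=
        primabs_bound (integrable_fst h) hφ1m (coord_diff u h hR hNu hNuh (n+1)) t
      have h2 : |∫ τ in Set.Ioc 0 t, (u τ).1 * (coordI (u + h) (n+1) τ - coordI u (n+1) τ
            - Dmap u (n+1) τ h) ∂μ01|
          ≤ (Cc R (n+1) * (∫ τ, ‖h τ‖ ∂μ01)^2) * ∫ τ, |(u τ).1| ∂μ01 :=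
        primabs_bound (integrable_fst u) hφ2m ih.2 t
      have e1 : (Ac R (n+1) * ∫ τ, ‖h τ‖ ∂μ01) * ∫ τ, |(h τ).1| ∂μ01
          ≤ (Ac R (n+1) * ∫ τ, ‖h τ‖ ∂μ01) * ∫ τ, ‖h τ‖ ∂μ01 :=
        mul_le_mul_of_nonneg_left (int_abs_fst_le h)
          (mul_nonneg (Ac_nonneg hR (n+1)) hNh0)
      have e2 : (Cc R (n+1) * (∫ τ, ‖h τ‖ ∂μ01)^2) * ∫ τ, |(u τ).1| ∂μ01
          ≤ (Cc R (n+1) * (∫ τ, ‖h τ‖ ∂μ01)^2) * R :=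
        mul_le_mul_of_nonneg_left (le_trans (int_abs_fst_le u) hNu)
          (mul_nonneg (Cc_nonneg hR (n+1)) (by positivity))
      have hC : Cc R (n+2) = Ac R (n+1) + R * Cc R (n+1) := by simp [Cc]
      rw [hC]
      calc |(∫ τ in Set.Ioc 0 t, (h τ).1 * (coordI (u + h) (n+1) τ - coordI u (n+1) τ) ∂μ01)
            + ∫ τ in Set.Ioc 0 t, (u τ).1 * (coordI (u + h) (n+1) τ - coordI u (n+1) τ
              - Dmap u (n+1) τ h) ∂μ01|
          ≤ _ + _ := abs_add_le _ _
        _ ≤ (Ac R (n+1) * ∫ τ, ‖h τ‖ ∂μ01) * ∫ τ, ‖h τ‖ ∂μ01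
            + (Cc R (n+1) * (∫ τ, ‖h τ‖ ∂μ01)^2) * R :=
            add_le_add (le_trans h1 e1) (le_trans h2 e2)
        _ = (Ac R (n+1) + R * Cc R (n+1)) * (∫ τ, ‖h τ‖ ∂μ01)^2 := by ring
  exact fun k => (key k).1

end Diff

-- Part 4
noncomputable def Ru (u : E) : ℝ := max 1 (∫ τ, ‖u τ‖ ∂μ01) + 1

lemma Ru_ge_one (u : E) : 1 ≤ Ru u := by
  have : (1:ℝ) ≤ max 1 (∫ τ, ‖u τ‖ ∂μ01) := le_max_left _ _
  unfold Ru; linarith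

lemma Ru_ge_Nu (u : E) : ∫ τ, ‖u τ‖ ∂μ01 ≤ Ru u := by
  have : (∫ τ, ‖u τ‖ ∂μ01) ≤ max 1 (∫ τ, ‖u τ‖ ∂μ01) := le_max_right _ _
  unfold Ru; linarith

noncomputable def Dclm (u : E) (k : ℕ) : E →L[ℝ] ℝ :=
  LinearMap.mkContinuous
    { toFun := fun h => Dmap u k 1 h
      map_add' := fun h h' => dmap_add u h h' k 1
      map_smul' := fun c h => dmap_smul u c h k 1 }
    (Ac (Ru u) k)
    (fun h => by
      rw [Real.norm_eq_abs]
      have := (dmap_sm_bdd u h (Ru_ge_one u) (Ru_ge_Nu u) k).2 1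
      rwa [norm_eq_N h])

@[simp] lemma Dclm_apply (u : E) (k : ℕ) (h : E) : Dclm u k h = Dmap u k 1 h := rfl

noncomputable def Lfd (s : ℕ) (u : E) : E →L[ℝ] (Fin (s+1) → ℝ) :=
  ContinuousLinearMap.pi (fun i => Dclm u (i : ℕ))

@[simp] lemma Lfd_apply (s : ℕ) (u : E) (h : E) (i : Fin (s+1)) :
    Lfd s u h i = Dmap u (i : ℕ) 1 h := rfl

lemma hasFDerivAt_endpointI (s : ℕ) (u : E) :
    HasFDerivAt (endpointI s) (Lfd s u) u := by
  rw [hasFDerivAt_iff_isLittleO_nhds_zero]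
  rw [Asymptotics.isLittleO_iff]
  intro c hc
  set R := Ru u with hRdef
  have hR : (1:ℝ) ≤ R := Ru_ge_one u
  have hNu : ∫ τ, ‖u τ‖ ∂μ01 ≤ R := Ru_ge_Nu u
  set CC : ℝ := ∑ i : Fin (s+1), Cc R i with hCCdef
  have hCC0 : 0 ≤ CC := Finset.sum_nonneg fun i _ => Cc_nonneg hR i
  have hCCi : ∀ i : Fin (s+1), Cc R (i : ℕ) ≤ CC := by
    intro i
    exact Finset.single_le_sum (f := fun i : Fin (s+1) => Cc R (i : ℕ))
      (fun j _ => Cc_nonneg hR j) (Finset.mem_univ i)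
  set δ : ℝ := min 1 (c / (CC + 1)) with hδdef
  have hδ : 0 < δ := lt_min one_pos (div_pos hc (by linarith))
  have hball : ∀ᶠ h : E in nhds 0, ‖h‖ < δ := by
    filter_upwards [Metric.ball_mem_nhds (0 : E) hδ] with h hh
    simpa [dist_zero_right] using hh
  filter_upwards [hball] with h hh
  have hh1 : ‖h‖ ≤ 1 := le_trans hh.le (min_le_left _ _)
  have hNh : ∫ τ, ‖h τ‖ ∂μ01 = ‖h‖ := (norm_eq_N h).symm
  have hNuh : ∫ τ, ‖((u + h) : E) τ‖ ∂μ01 ≤ R := by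
    rw [← norm_eq_N]
    calc ‖u + h‖ ≤ ‖u‖ + ‖h‖ := norm_add_le u h
      _ ≤ max 1 (∫ τ, ‖u τ‖ ∂μ01) + 1 := by
          refine add_le_add ?_ hh1
          rw [norm_eq_N]; exact le_max_right _ _
      _ = R := rfl
  have hcoord : ∀ i : Fin (s+1),
      |endpointI s (u + h) i - endpointI s u i - Lfd s u h i| ≤ CC * ‖h‖^2 := by
    intro i
    have := coord_quad u h hR hNu hNuh (i : ℕ) 1
    rw [hNh] at this
    refine le_trans this ?_
    have h2 : (0:ℝ) ≤ ‖h‖^2 := sq_nonneg _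
    exact mul_le_mul_of_nonneg_right (hCCi i) h2
  have hnorm : ‖endpointI s (u + h) - endpointI s u - Lfd s u h‖ ≤ CC * ‖h‖^2 := by
    refine (pi_norm_le_iff_of_nonneg (by positivity)).2 fun i => ?_
    rw [Real.norm_eq_abs]
    exact hcoord i
  refine le_trans hnorm ?_
  have e1 : CC * ‖h‖^2 = (CC * ‖h‖) * ‖h‖ := by ring
  rw [e1]
  refine mul_le_mul_of_nonneg_right ?_ (norm_nonneg _)
  have hδ2 : ‖h‖ ≤ c / (CC + 1) := le_trans hh.le (min_le_right _ _)
  calc CC * ‖h‖ ≤ (CC + 1) * (c / (CC + 1)) := by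
        refine mul_le_mul (by linarith) hδ2 (norm_nonneg _) (by linarith)
    _ = c := by field_simp
  
lemma fderiv_endpointI (s : ℕ) (u : E) : fderiv ℝ (endpointI s) u = Lfd s u :=
  (hasFDerivAt_endpointI s u).fderiv

lemma isSingular_iff (s : ℕ) (u : E) :
    IsSingularI s u ↔ ¬ Function.Surjective (Lfd s u) := by
  unfold IsSingularI
  rw [fderiv_endpointI s u]

/-- The triangle Fubini swap for kernels of the form `f τ * g ρ * (A τ - A ρ)^k`. -/
lemma swapGen {f g A : ℝ → ℝ} (hf : Integrable f μ01) (hg : Integrable g μ01)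
    (hA : StronglyMeasurable A) {IA : ℝ} (hAbd : ∀ x, |A x| ≤ IA)
    (k : ℕ) (σ t : ℝ) :
    ∫ τ in Set.Ioc σ t, f τ * (∫ ρ in Set.Ioc σ τ, g ρ * (A τ - A ρ)^k ∂μ01) ∂μ01
      = ∫ ρ in Set.Ioc σ t, g ρ * (∫ τ in Set.Ioc ρ t, f τ * (A τ - A ρ)^k ∂μ01) ∂μ01 := by
  classical
  set T : Set (ℝ × ℝ) := {p | p.2 ∈ Set.Ioc σ p.1 ∧ p.1 ∈ Set.Ioc σ t} with hT
  have hTmeas : MeasurableSet T := by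
    have : T = {p : ℝ × ℝ | σ < p.2} ∩ {p | p.2 ≤ p.1} ∩ ({p | σ < p.1} ∩ {p | p.1 ≤ t}) := by
      ext p
      simp only [hT, Set.mem_setOf_eq, Set.mem_Ioc, Set.mem_inter_iff]
      all_goals tauto
    rw [this]
    exact (((measurableSet_lt measurable_const measurable_snd).inter
      (measurableSet_le measurable_snd measurable_fst)).inter
      ((measurableSet_lt measurable_const measurable_fst).inter
      (measurableSet_le measurable_fst measurable_const)))
  set G : ℝ × ℝ → ℝ := fun p => f p.1 * g p.2 * (A p.1 - A p.2)^k with hG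
  set F : ℝ × ℝ → ℝ := T.indicator G with hF
  have hGmeas : AEStronglyMeasurable G (μ01.prod μ01) := by
    have h1 : AEStronglyMeasurable (fun p : ℝ × ℝ => f p.1 * g p.2) (μ01.prod μ01) :=
      (hf.mul_prod hg).1
    have h2 : StronglyMeasurable (fun p : ℝ × ℝ => (A p.1 - A p.2)^k) :=
      ((hA.comp_measurable measurable_fst).sub (hA.comp_measurable measurable_snd)).pow _
    exact h1.mul h2.aestronglyMeasurable
  have hGint : Integrable G (μ01.prod μ01) := by
    have h1 : Integrable (fun p : ℝ × ℝ => f p.1 * g p.2) (μ01.prod μ01) := hf.mul_prod hg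
    have hker : StronglyMeasurable (fun p : ℝ × ℝ => (A p.1 - A p.2)^k) :=
      ((hA.comp_measurable measurable_fst).sub (hA.comp_measurable measurable_snd)).pow _
    have h2 := Integrable.bdd_mul h1 hker.aestronglyMeasurable
      (c := (2*IA)^k) (Filter.Eventually.of_forall fun p => by
        have e1 : |A p.1 - A p.2| ≤ 2 * IA := by
          have := hAbd p.1; have := hAbd p.2
          calc |A p.1 - A p.2| ≤ |A p.1| + |A p.2| := abs_sub _ _
            _ ≤ 2 * IA := by linarith
        rw [Real.norm_eq_abs, abs_pow]
        exact pow_le_pow_left₀ (abs_nonneg _) e1 k)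
    refine (h2.congr ?_)
    refine Filter.Eventually.of_forall fun p => ?_
    show ((A p.1 - A p.2)^k) * (f p.1 * g p.2) = G p
    rw [hG]; ring
  have hFint : Integrable F (μ01.prod μ01) := hGint.indicator hTmeas
  -- LHS as iterated integral of F
  have hLHS : ∫ τ, (∫ ρ, F (τ, ρ) ∂μ01) ∂μ01
      = ∫ τ in Set.Ioc σ t, f τ * (∫ ρ in Set.Ioc σ τ, g ρ * (A τ - A ρ)^k ∂μ01) ∂μ01 := by
    have hin : ∀ τ, (∫ ρ, F (τ, ρ) ∂μ01)
        = Set.indicator (Set.Ioc σ t)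
            (fun τ => f τ * (∫ ρ in Set.Ioc σ τ, g ρ * (A τ - A ρ)^k ∂μ01)) τ := by
      intro τ
      by_cases hτ : τ ∈ Set.Ioc σ t
      · rw [Set.indicator_of_mem hτ]
        have e1 : ∀ ρ, F (τ, ρ)
            = Set.indicator (Set.Ioc σ τ) (fun ρ => f τ * (g ρ * (A τ - A ρ)^k)) ρ := by
          intro ρ
          by_cases hρ : ρ ∈ Set.Ioc σ τ
          · rw [Set.indicator_of_mem hρ, hF, Set.indicator_of_mem, hG]
            · ring
            · exact ⟨hρ, hτ⟩
          · rw [Set.indicator_of_notMem hρ, hF, Set.indicator_of_notMem]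
            intro hc
            exact hρ hc.1
        rw [show (fun ρ => F (τ, ρ)) = fun ρ =>
            Set.indicator (Set.Ioc σ τ) (fun ρ => f τ * (g ρ * (A τ - A ρ)^k)) ρ
          from funext e1]
        rw [integral_indicator measurableSet_Ioc, integral_const_mul]
      · rw [Set.indicator_of_notMem hτ]
        have e1 : ∀ ρ, F (τ, ρ) = 0 := by
          intro ρ
          rw [hF, Set.indicator_of_notMem]
          intro hc
          exact hτ hc.2
        simp [funext e1]
    rw [funext hin, integral_indicator measurableSet_Ioc]
  -- RHS as iterated integral of F
  have hRHS : ∫ ρ, (∫ τ, F (τ, ρ) ∂μ01) ∂μ01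
      = ∫ ρ in Set.Ioc σ t, g ρ * (∫ τ in Set.Ioc ρ t, f τ * (A τ - A ρ)^k ∂μ01) ∂μ01 := by
    have hin : ∀ ρ, (∫ τ, F (τ, ρ) ∂μ01)
        = Set.indicator (Set.Ioc σ t)
            (fun ρ => g ρ * (∫ τ in Set.Ioc ρ t, f τ * (A τ - A ρ)^k ∂μ01)) ρ := by
      intro ρ
      by_cases hρ : ρ ∈ Set.Ioc σ t
      · rw [Set.indicator_of_mem hρ]
        have e1 : ∀ τ, F (τ, ρ)
            = Set.indicator (Set.Icc ρ t) (fun τ => g ρ * (f τ * (A τ - A ρ)^k)) τ := by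
          intro τ
          by_cases hτ : τ ∈ Set.Icc ρ t
          · rw [Set.indicator_of_mem hτ, hF, Set.indicator_of_mem, hG]
            · ring
            · exact ⟨⟨hρ.1, hτ.1⟩, lt_of_lt_of_le hρ.1 hτ.1, hτ.2⟩
          · rw [Set.indicator_of_notMem hτ, hF, Set.indicator_of_notMem]
            intro hc
            exact hτ ⟨hc.1.2, hc.2.2⟩
        rw [show (fun τ => F (τ, ρ)) = fun τ =>
            Set.indicator (Set.Icc ρ t) (fun τ => g ρ * (f τ * (A τ - A ρ)^k)) τ
          from funext e1]
        rw [integral_indicator measurableSet_Icc, integral_Icc_eq_integral_Ioc,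
          integral_const_mul]
      · rw [Set.indicator_of_notMem hρ]
        have e1 : ∀ τ, F (τ, ρ) = 0 := by
          intro τ
          rw [hF, Set.indicator_of_notMem]
          intro hc
          exact hρ ⟨hc.1.1, le_trans hc.1.2 hc.2.2⟩
        simp [funext e1]
    rw [funext hin, integral_indicator measurableSet_Ioc]
  rw [← hLHS, ← hRHS]
  exact integral_integral_swap (by exact hFint)

section Kid

variable (u : E)

/-- the primitive of the first component. -/
noncomputable def aF (t : ℝ) : ℝ := ∫ τ in Set.Ioc 0 t, (u τ).1 ∂μ01

lemma aF_sm : StronglyMeasurable (aF u) := stronglyMeasurable_prim (integrable_fst u).1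

lemma aF_bd : ∀ x, |aF u x| ≤ ∫ τ, |(u τ).1| ∂μ01 := fun x =>
  abs_prim_le (integrable_fst u) x

lemma aF_add {σ t : ℝ} (hσ : 0 ≤ σ) (hσt : σ ≤ t) :
    ∫ τ in Set.Ioc σ t, (u τ).1 ∂μ01 = aF u t - aF u σ := by
  have hu : Set.Ioc (0:ℝ) σ ∪ Set.Ioc σ t = Set.Ioc 0 t := Set.Ioc_union_Ioc_eq_Ioc hσ hσt
  have hd : Disjoint (Set.Ioc (0:ℝ) σ) (Set.Ioc σ t) := by
    refine Set.disjoint_left.2 fun x hx hx' => ?_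
    exact absurd hx'.1 (not_lt.2 hx.2)
  have := setIntegral_union hd measurableSet_Ioc
    (integrable_fst u).integrableOn (integrable_fst u).integrableOn
    (f := fun τ => (u τ).1) (μ := μ01)
  rw [hu] at this
  show _ = aF u t - aF u σ
  unfold aF
  rw [this]
  ring

/-- the bound constant for powers of differences of `aF`. -/
noncomputable def Mk (k : ℕ) : ℝ := (2 * ∫ τ, |(u τ).1| ∂μ01)^k

lemma aF_pow_bd (c : ℝ) (hc : ∃ x, c = aF u x) (k : ℕ) :
    ∀ ρ, |(aF u ρ - c)^k| ≤ Mk u k := by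
  intro ρ
  obtain ⟨x, rfl⟩ := hc
  rw [abs_pow]
  refine pow_le_pow_left₀ (abs_nonneg _) ?_ k
  calc |aF u ρ - aF u x| ≤ |aF u ρ| + |aF u x| := abs_sub _ _
    _ ≤ 2 * ∫ τ, |(u τ).1| ∂μ01 := by
        have h1 := aF_bd u ρ; have h2 := aF_bd u x; linarith

lemma gk_int (c : ℝ) (hc : ∃ x, c = aF u x) (k : ℕ) :
    Integrable (fun ρ => (u ρ).1 * (aF u ρ - c)^k) μ01 :=
  int_bdd_right (integrable_fst u)
    (((aF_sm u).sub stronglyMeasurable_const).pow _).aestronglyMeasurable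
    (aF_pow_bd u c hc k)

lemma Kid {σ : ℝ} (hσ : 0 ≤ σ) : ∀ k : ℕ, ∀ t : ℝ, σ ≤ t →
    ∫ τ in Set.Ioc σ t, (u τ).1 * (aF u τ - aF u σ)^k ∂μ01
      = (aF u t - aF u σ)^(k+1) / ((k : ℝ)+1) := by
  intro k
  induction k with
  | zero =>
    intro t ht
    simp only [pow_zero, mul_one, pow_one]
    rw [aF_add u hσ ht]
    norm_num
  | succ k ih =>
    intro t ht
    have hk1 : ((k:ℝ)+1) ≠ 0 := by positivity
    -- step 1: use ih pointwise
    have e1 : Set.EqOn (fun τ => (u τ).1 * (aF u τ - aF u σ)^(k+1))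
        (fun τ => ((k:ℝ)+1) * ((u τ).1 *
          (∫ ρ in Set.Ioc σ τ, (u ρ).1 * (aF u ρ - aF u σ)^k ∂μ01)))
        (Set.Ioc σ t) := by
      intro τ hτ
      have := ih τ (le_of_lt hτ.1)
      simp only
      rw [this]
      field_simp
    have h1 : ∫ τ in Set.Ioc σ t, (u τ).1 * (aF u τ - aF u σ)^(k+1) ∂μ01
        = ((k:ℝ)+1) * ∫ τ in Set.Ioc σ t, (u τ).1 *
            (∫ ρ in Set.Ioc σ τ, (u ρ).1 * (aF u ρ - aF u σ)^k ∂μ01) ∂μ01 := by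
      rw [setIntegral_congr_fun measurableSet_Ioc e1, integral_const_mul]
    -- step 2: swap
    have hswap := swapGen (integrable_fst u) (gk_int u (aF u σ) ⟨σ, rfl⟩ k)
      (aF_sm u) (aF_bd u) 0 σ t
    simp only [pow_zero, mul_one] at hswap
    -- step 3: inner integral
    have e3 : Set.EqOn
        (fun ρ => ((u ρ).1 * (aF u ρ - aF u σ)^k) * (∫ τ in Set.Ioc ρ t, (u τ).1 ∂μ01))
        (fun ρ => ((u ρ).1 * (aF u ρ - aF u σ)^k) * (aF u t - aF u σ)
          - (u ρ).1 * (aF u ρ - aF u σ)^(k+1))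
        (Set.Ioc σ t) := by
      intro ρ hρ
      simp only
      rw [aF_add u (le_trans hσ (le_of_lt hρ.1)) hρ.2]
      ring
    have hint1 : Integrable (fun ρ => ((u ρ).1 * (aF u ρ - aF u σ)^k)
        * (aF u t - aF u σ)) μ01 := (gk_int u (aF u σ) ⟨σ, rfl⟩ k).mul_const _
    have hint2 : Integrable (fun ρ => (u ρ).1 * (aF u ρ - aF u σ)^(k+1)) μ01 :=
      gk_int u (aF u σ) ⟨σ, rfl⟩ (k+1)
    have h3 : ∫ ρ in Set.Ioc σ t, ((u ρ).1 * (aF u ρ - aF u σ)^k)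
          * (∫ τ in Set.Ioc ρ t, (u τ).1 ∂μ01) ∂μ01
        = ((aF u t - aF u σ)^(k+1) / ((k:ℝ)+1)) * (aF u t - aF u σ)
          - ∫ ρ in Set.Ioc σ t, (u ρ).1 * (aF u ρ - aF u σ)^(k+1) ∂μ01 := by
      rw [setIntegral_congr_fun measurableSet_Ioc e3,
        integral_sub hint1.integrableOn hint2.integrableOn, integral_mul_const, ih t ht]
    rw [hswap, h3] at h1
    have hmain := h1
    set L := ∫ ρ in Set.Ioc σ t, (u ρ).1 * (aF u ρ - aF u σ)^(k+1) ∂μ01 with hL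
    set b := aF u t - aF u σ with hb
    have hk2 : ((k:ℝ)+1+1) ≠ 0 := by positivity
    push_cast
    have hexp : b^(k+1+1) = b^(k+1) * b := by ring
    rw [hexp]
    field_simp at hmain ⊢
    linarith
  
end Kid


section W

variable {w : ℝ → ℝ} {Cw : ℝ}

lemma w_int (hwm : Measurable w) (hwb : ∀ x, |w x| ≤ Cw) : Integrable w μ01 := by
  have h : Integrable (fun x => w x * (1:ℝ)) μ01 :=
    Integrable.bdd_mul (integrable_const 1) hwm.aestronglyMeasurable
      (c := Cw) (Filter.Eventually.of_forall fun x => by rw [Real.norm_eq_abs]; exact hwb x)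
  simpa using h

lemma w_pair_int (hwm : Measurable w) (hwb : ∀ x, |w x| ≤ Cw) : Integrable (fun τ => ((0:ℝ), w τ)) μ01 :=
  (integrable_const (0:ℝ)).prodMk (w_int hwm hwb)

noncomputable def mkW (hwm : Measurable w) (hwb : ∀ x, |w x| ≤ Cw) : E :=
  (memLp_one_iff_integrable.mpr (w_pair_int hwm hwb)).toLp _

lemma mkW_coe (hwm : Measurable w) (hwb : ∀ x, |w x| ≤ Cw) : (mkW hwm hwb : ℝ → ℝ × ℝ) =ᵐ[μ01] fun τ => ((0:ℝ), w τ) :=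
  MemLp.coeFn_toLp _

lemma mkW_fst (hwm : Measurable w) (hwb : ∀ x, |w x| ≤ Cw) : (fun τ => ((mkW hwm hwb : E) τ).1) =ᵐ[μ01] fun _ => (0:ℝ) := by
  filter_upwards [mkW_coe hwm hwb] with τ hτ
  rw [hτ]

lemma mkW_snd (hwm : Measurable w) (hwb : ∀ x, |w x| ≤ Cw) : (fun τ => ((mkW hwm hwb : E) τ).2) =ᵐ[μ01] w := by
  filter_upwards [mkW_coe hwm hwb] with τ hτ
  rw [hτ]

variable (u : E)

lemma dmap_w_zero (hwm : Measurable w) (hwb : ∀ x, |w x| ≤ Cw) (t : ℝ) : Dmap u 0 t (mkW hwm hwb) = 0 := by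
  show (∫ τ in Set.Ioc 0 t, ((mkW hwm hwb : E) τ).1 ∂μ01) = 0
  rw [integral_congr_ae (ae_restrict_of_ae (mkW_fst hwm hwb))]
  simp

lemma dmap_closed (hwm : Measurable w) (hwb : ∀ x, |w x| ≤ Cw) : ∀ k : ℕ, ∀ t : ℝ, Dmap u (k+1) t (mkW hwm hwb)
    = ((-1:ℝ)^k / (k.factorial : ℝ))
      * ∫ ρ in Set.Ioc 0 t, w ρ * (aF u t - aF u ρ)^k ∂μ01 := by
  intro k
  induction k with
  | zero =>
    intro t
    show (∫ τ in Set.Ioc 0 t, ((mkW hwm hwb : E) τ).2 ∂μ01) = _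
    rw [integral_congr_ae (ae_restrict_of_ae (mkW_snd hwm hwb))]
    simp
  | succ k ih =>
    intro t
    have hck : ((k.factorial : ℝ)) ≠ 0 := by
      exact_mod_cast Nat.factorial_ne_zero k
    have hk1 : ((k:ℝ)+1) ≠ 0 := by positivity
    show -∫ τ in Set.Ioc 0 t,
        (((mkW hwm hwb : E) τ).1 * coordI u (k+1) τ
          + (u τ).1 * Dmap u (k+1) τ (mkW hwm hwb)) ∂μ01 = _
    have ea : ∫ τ in Set.Ioc 0 t,
        (((mkW hwm hwb : E) τ).1 * coordI u (k+1) τ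
          + (u τ).1 * Dmap u (k+1) τ (mkW hwm hwb)) ∂μ01
        = ∫ τ in Set.Ioc 0 t, ((-1:ℝ)^k / (k.factorial : ℝ))
            * ((u τ).1 * (∫ ρ in Set.Ioc 0 τ, w ρ * (aF u τ - aF u ρ)^k ∂μ01)) ∂μ01 := by
      refine integral_congr_ae (ae_restrict_of_ae ?_)
      filter_upwards [mkW_fst hwm hwb] with τ hτ
      rw [hτ, ih τ]
      ring
    rw [ea, integral_const_mul]
    have hswap := swapGen (integrable_fst u) (w_int hwm hwb) (aF_sm u) (aF_bd u) k 0 t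
    rw [hswap]
    have ed : Set.EqOn
        (fun ρ => w ρ * (∫ τ in Set.Ioc ρ t, (u τ).1 * (aF u τ - aF u ρ)^k ∂μ01))
        (fun ρ => (1/((k:ℝ)+1)) * (w ρ * (aF u t - aF u ρ)^(k+1)))
        (Set.Ioc 0 t) := by
      intro ρ hρ
      simp only
      rw [Kid u (le_of_lt hρ.1) k t hρ.2]
      field_simp
    rw [setIntegral_congr_fun measurableSet_Ioc ed, integral_const_mul]
    have hfac : ((k+1).factorial : ℝ) = ((k:ℝ)+1) * (k.factorial : ℝ) := by
      rw [Nat.factorial_succ]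
      push_cast
      ring
    rw [hfac]
    field_simp
    ring
end W

lemma null_of_subIcc {S : Set ℝ} (h : S ∩ Set.Icc 0 1 ⊆ {0}) : μ01 S = 0 := by
  unfold μ01
  rw [Measure.restrict_apply' measurableSet_Icc]
  refine le_antisymm (le_trans (measure_mono h) ?_) (by simp)
  simp [Real.volume_singleton]

lemma setIntegral_null {f : ℝ → ℝ} {S : Set ℝ} (h : μ01 S = 0) :
    ∫ τ in S, f τ ∂μ01 = 0 := by
  rw [Measure.restrict_eq_zero.mpr h]
  exact integral_zero_measure f

/-- the extension of the vanishing of `aF` to all times. -/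
lemma aF_zero_ext (u : E) (h01 : ∀ t ∈ Set.Icc (0:ℝ) 1, aF u t = 0) : ∀ t, aF u t = 0 := by
  intro t
  rcases le_or_gt t 0 with ht | ht
  · unfold aF
    rw [Set.Ioc_eq_empty (by exact not_lt.2 ht)]
    simp
  rcases le_or_gt t 1 with ht1 | ht1
  · exact h01 t ⟨le_of_lt ht, ht1⟩
  · have e1 : ∫ τ in Set.Ioc (1:ℝ) t, (u τ).1 ∂μ01 = aF u t - aF u 1 :=
      aF_add u zero_le_one (le_of_lt ht1)
    have e2 : ∫ τ in Set.Ioc (1:ℝ) t, (u τ).1 ∂μ01 = 0 := by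
      refine setIntegral_null (null_of_subIcc ?_)
      intro x hx
      exact absurd hx.2.2 (not_le.2 hx.1.1)
    have e3 := h01 1 ⟨zero_le_one, le_rfl⟩
    rw [e2] at e1
    linarith [e1.symm, e3]

lemma u1_ae_zero_of_aF_zero (u : E) (h01 : ∀ t ∈ Set.Icc (0:ℝ) 1, aF u t = 0) :
    (fun τ => (u τ).1) =ᵐ[μ01] 0 := by
  have haF : ∀ t, aF u t = 0 := aF_zero_ext u h01
  -- on all Ioc intervals
  have hIoc : ∀ a b : ℝ, ∫ τ in Set.Ioc a b, (u τ).1 ∂μ01 = 0 := by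
    intro a b
    rcases le_or_gt b 0 with hb | hb
    · refine setIntegral_null (null_of_subIcc ?_)
      intro x hx
      have h1 : x ≤ 0 := le_trans hx.1.2 hb
      have h2 : 0 ≤ x := hx.2.1
      simp [le_antisymm h1 h2]
    · rcases le_or_gt b a with hba | hab
      · rw [Set.Ioc_eq_empty (not_lt.2 hba)]
        simp
      · set a' := max a 0 with ha'
        have ha'0 : 0 ≤ a' := le_max_right _ _
        have ha'b : a' ≤ b := max_le (le_of_lt hab) (le_of_lt hb)
        have haa' : a ≤ a' := le_max_left _ _
        have hsplit : Set.Ioc a a' ∪ Set.Ioc a' b = Set.Ioc a b :=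
          Set.Ioc_union_Ioc_eq_Ioc haa' ha'b
        have hd : Disjoint (Set.Ioc a a') (Set.Ioc a' b) :=
          Set.disjoint_left.2 fun x hx hx' => absurd hx'.1 (not_lt.2 hx.2)
        have := setIntegral_union hd measurableSet_Ioc
          (integrable_fst u).integrableOn (integrable_fst u).integrableOn
          (f := fun τ => (u τ).1) (μ := μ01)
        rw [hsplit] at this
        rw [this]
        have e1 : ∫ τ in Set.Ioc a a', (u τ).1 ∂μ01 = 0 := by
          refine setIntegral_null (null_of_subIcc ?_)
          intro x hx
          have h1 : x ≤ 0 := by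
            rcases le_or_gt a 0 with h | h
            · have := hx.1.2; rw [ha'] at this
              rw [max_eq_right h] at this
              exact this
            · have := hx.1.2; rw [ha'] at this
              rw [max_eq_left (le_of_lt h)] at this
              exact absurd (lt_of_lt_of_le hx.1.1 this) (lt_irrefl a)
          exact le_antisymm h1 hx.2.1
        have e2 : ∫ τ in Set.Ioc a' b, (u τ).1 ∂μ01 = 0 := by
          rw [aF_add u ha'0 ha'b, haF b, haF a']
          ring
        rw [e1, e2]
        ring
    -- total integral
  have htotal : ∫ τ, (u τ).1 ∂μ01 = 0 := by
    have h1 := integral_add_compl (measurableSet_Ioc (a := (-1:ℝ)) (b := (2:ℝ)))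
      (integrable_fst u)
    have h2 : ∫ τ in (Set.Ioc (-1:ℝ) 2)ᶜ, (u τ).1 ∂μ01 = 0 := by
      refine setIntegral_null (null_of_subIcc ?_)
      intro x hx
      exfalso
      exact hx.1 ⟨by linarith [hx.2.1], by linarith [hx.2.2]⟩
    rw [hIoc (-1) 2, h2] at h1
    simpa using h1.symm
  -- π-system induction
  have hall : ∀ S : Set ℝ, MeasurableSet S → ∫ τ in S, (u τ).1 ∂μ01 = 0 := by
    have hgen : (inferInstance : MeasurableSpace ℝ)
        = MeasurableSpace.generateFrom { S : Set ℝ | ∃ l u, l < u ∧ Set.Ioc l u = S } := by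
      rw [BorelSpace.measurable_eq (α := ℝ)]
      exact borel_eq_generateFrom_Ioc ℝ
    have hpi : IsPiSystem { S : Set ℝ | ∃ l u, l < u ∧ Set.Ioc l u = S } := by
      rintro s ⟨ls, us, hls, rfl⟩ t ⟨lt', ut, hlt, rfl⟩ hst
      rw [Set.Ioc_inter_Ioc]
      refine ⟨max ls lt', min us ut, ?_, rfl⟩
      rcases Set.nonempty_def.mp hst with ⟨x, hx⟩
      rw [Set.Ioc_inter_Ioc] at hx
      exact lt_of_lt_of_le hx.1 hx.2
    intro S hS
    refine MeasurableSpace.induction_on_inter (C := fun S _ => ∫ τ in S, (u τ).1 ∂μ01 = 0) hgen hpi ?_ ?_ ?_ ?_ S hS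
    · simp
    · rintro t ⟨l, r, hlr, rfl⟩
      exact hIoc l r
    · intro t htm ht
      have := integral_add_compl htm (integrable_fst u)
      rw [ht, htotal] at this
      linarith [this]
    · intro f hfd hfm hf
      rw [integral_iUnion hfm hfd (integrable_fst u).integrableOn]
      simp [hf]
  exact (integrable_fst u).ae_eq_zero_of_forall_setIntegral_eq_zero
    fun s hs _ => hall s hs

lemma aF_contOn (u : E) : ContinuousOn (aF u) (Set.Icc 0 1) :=
  continuousOn_prim (integrable_fst u)

lemma aF_zero (u : E) : aF u 0 = 0 := by
  unfold aF
  rw [Set.Ioc_self]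
  simp

lemma poly_zero_of_ae (u : E) (hu' : ¬ ((fun τ => (u τ).1) =ᵐ[μ01] 0))
    (P : Polynomial ℝ)
    (hae : ∀ᵐ σ ∂(μ01.restrict (Set.Ioc 0 1)), P.eval (aF u σ) = 0) : P = 0 := by
  by_contra hP
  have hcont : ContinuousOn (fun σ => P.eval (aF u σ)) (Set.Icc 0 1) :=
    P.continuous.comp_continuousOn (aF_contOn u)
  rw [ae_iff] at hae
  have hall : ∀ σ ∈ Set.Icc (0:ℝ) 1, P.eval (aF u σ) = 0 := by
    by_contra hno
    push_neg at hno
    obtain ⟨σ₀, hσ₀, hne⟩ := hno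
    have hmem : {y : ℝ | y ≠ 0} ∈ nhds (P.eval (aF u σ₀)) :=
      isOpen_compl_singleton.mem_nhds hne
    have hev : ∀ᶠ x in nhdsWithin σ₀ (Set.Icc 0 1), P.eval (aF u x) ≠ 0 :=
      (hcont σ₀ hσ₀).eventually hmem
    obtain ⟨ε, hε, hsub⟩ := Metric.mem_nhdsWithin_iff.1 hev
    -- construct a nondegenerate interval inside
    obtain ⟨l, r, hlr, hIoo⟩ : ∃ l r : ℝ, l < r ∧
        Set.Ioo l r ⊆ Metric.ball σ₀ ε ∩ Set.Icc 0 1 ∩ Set.Ioc 0 1 := by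
      rcases eq_or_lt_of_le hσ₀.1 with h0 | h0
      · refine ⟨0, min ε 1, lt_min hε one_pos, fun x hx => ?_⟩
        have hx1 : 0 < x := hx.1
        have hx2 : x < ε := lt_of_lt_of_le hx.2 (min_le_left _ _)
        have hx3 : x ≤ 1 := le_of_lt (lt_of_lt_of_le hx.2 (min_le_right _ _))
        refine ⟨⟨?_, le_of_lt hx1, hx3⟩, hx1, hx3⟩
        rw [Metric.mem_ball, Real.dist_eq, ← h0, sub_zero, abs_of_pos hx1]
        exact hx2
      · refine ⟨max (σ₀ - ε) 0, σ₀, max_lt (by linarith) h0, fun x hx => ?_⟩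
        have hx0 : 0 < x := lt_of_le_of_lt (le_max_right _ _) hx.1
        have hxσ : x < σ₀ := hx.2
        have hxε : σ₀ - ε < x := lt_of_le_of_lt (le_max_left _ _) hx.1
        have hx1 : x ≤ 1 := le_trans (le_of_lt hxσ) hσ₀.2
        refine ⟨⟨?_, le_of_lt hx0, hx1⟩, hx0, hx1⟩
        rw [Metric.mem_ball, Real.dist_eq, abs_of_nonpos (by linarith), neg_sub]
        linarith
    have hVsub : Set.Ioo l r ⊆ {σ | ¬ P.eval (aF u σ) = 0} := by
      intro x hx
      exact hsub ⟨(hIoo hx).1.1, (hIoo hx).1.2⟩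
    have hnull : (μ01.restrict (Set.Ioc 0 1)) (Set.Ioo l r) = 0 :=
      measure_mono_null hVsub hae
    rw [Measure.restrict_apply' measurableSet_Ioc] at hnull
    unfold μ01 at hnull
    rw [Measure.restrict_apply' measurableSet_Icc] at hnull
    have hinter : Set.Ioo l r ∩ Set.Ioc 0 1 ∩ Set.Icc 0 1 = Set.Ioo l r := by
      rw [Set.inter_assoc, Set.inter_eq_left]
      intro x hx
      have h1 := (hIoo hx).2
      exact ⟨h1, (hIoo hx).1.2⟩
    rw [hinter, Real.volume_Ioo] at hnull
    rw [ENNReal.ofReal_eq_zero] at hnull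
    linarith
  -- image of [0,1] under aF is a finite preconnected set: a subsingleton
  have himg : aF u '' Set.Icc 0 1 ⊆ {x | P.IsRoot x} := by
    rintro y ⟨σ, hσ, rfl⟩
    exact hall σ hσ
  have hfin : Set.Finite (aF u '' Set.Icc 0 1) :=
    (Polynomial.finite_setOf_isRoot hP).subset himg
  have hconn : IsPreconnected (aF u '' Set.Icc 0 1) :=
    (isPreconnected_Icc).image _ (aF_contOn u)
  have hsub : ∀ x ∈ aF u '' Set.Icc 0 1, ∀ y ∈ aF u '' Set.Icc 0 1, x = y := by
    intro x hx y hy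
    by_contra hxy
    rcases lt_or_gt_of_ne hxy with h | h
    · exact ((Set.Icc_infinite h).mono (hconn.Icc_subset hx hy)) hfin
    · exact ((Set.Icc_infinite h).mono (hconn.Icc_subset hy hx)) hfin
  have h01 : ∀ t ∈ Set.Icc (0:ℝ) 1, aF u t = 0 := by
    intro t ht
    have h1 : aF u t ∈ aF u '' Set.Icc 0 1 := ⟨t, ht, rfl⟩
    have h2 : aF u 0 ∈ aF u '' Set.Icc 0 1 :=
      ⟨0, ⟨le_rfl, zero_le_one⟩, rfl⟩
    have := hsub _ h1 _ h2
    rw [this, aF_zero]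
  exact hu' (u1_ae_zero_of_aF_zero u h01)

/-- Coefficient extraction for sums of powers of `C α - X`. -/
lemma coeffs_zero {s : ℕ} (α : ℝ) (c : Fin s → ℝ)
    (h : (∑ j : Fin s, Polynomial.C (c j) * (Polynomial.C α - Polynomial.X)^(j:ℕ))
      = 0) : ∀ j, c j = 0 := by
  classical
  by_contra hno
  push_neg at hno
  obtain ⟨j₀, hj₀⟩ := hno
  set S : Finset (Fin s) := Finset.univ.filter (fun j => c j ≠ 0) with hS
  have hSne : (S.image (fun j : Fin s => (j:ℕ))).Nonempty :=
    ⟨(j₀ : ℕ), Finset.mem_image_of_mem _ (Finset.mem_filter.2 ⟨Finset.mem_univ _, hj₀⟩)⟩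
  set m : ℕ := (S.image (fun j : Fin s => (j:ℕ))).max' hSne with hm
  obtain ⟨jm, hjmS, hjm⟩ := Finset.mem_image.1 ((S.image (fun j : Fin s => (j:ℕ))).max'_mem hSne)
  have hle : ∀ j ∈ S, (j : ℕ) ≤ m :=
    fun j hj => Finset.le_max' _ _ (Finset.mem_image_of_mem _ hj)
  -- compute coefficient m
  have hpow : ∀ n : ℕ, ((Polynomial.C α - Polynomial.X : Polynomial ℝ)^n)
      = Polynomial.C ((-1:ℝ)^n) * (Polynomial.X - Polynomial.C α)^n := by
    intro n
    have e1 : (Polynomial.C α - Polynomial.X : Polynomial ℝ)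
        = -(Polynomial.X - Polynomial.C α) := by ring
    rw [e1, neg_pow]
    congr 1
    simp
  have hdeg : ∀ n : ℕ, ((Polynomial.X - Polynomial.C α : Polynomial ℝ)^n).natDegree = n := by
    intro n
    rw [Polynomial.natDegree_pow, Polynomial.natDegree_X_sub_C, mul_one]
  have hcoeff : ∀ n : ℕ, n < m →
      ((Polynomial.C α - Polynomial.X : Polynomial ℝ)^n).coeff m = 0 := by
    intro n hn
    rw [hpow, Polynomial.coeff_C_mul]
    rw [Polynomial.coeff_eq_zero_of_natDegree_lt (by rw [hdeg]; exact hn)]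
    ring
  have hcoeffm : ((Polynomial.C α - Polynomial.X : Polynomial ℝ)^m).coeff m = (-1:ℝ)^m := by
    rw [hpow, Polynomial.coeff_C_mul]
    have := (Polynomial.monic_X_sub_C α).pow m
    have h2 : ((Polynomial.X - Polynomial.C α : Polynomial ℝ)^m).coeff m = 1 := by
      have := this.coeff_natDegree
      rwa [hdeg] at this
    rw [h2, mul_one]
  have hzero := congrArg (fun p => Polynomial.coeff p m) h
  simp only [Polynomial.finset_sum_coeff, Polynomial.coeff_C_mul, Polynomial.coeff_zero] at hzero
  have hsum : ∑ j : Fin s, c j * ((Polynomial.C α - Polynomial.X : Polynomial ℝ)^(j:ℕ)).coeff m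
      = c jm * (-1:ℝ)^m := by
    rw [Finset.sum_eq_single jm]
    · rw [show ((jm:ℕ)) = m from hjm, hcoeffm]
    · intro j _ hjne
      by_cases hcj : c j = 0
      · rw [hcj]; ring
      · have hjS : j ∈ S := Finset.mem_filter.2 ⟨Finset.mem_univ _, hcj⟩
        have h1 : (j : ℕ) ≤ m := hle j hjS
        have h2 : (j : ℕ) ≠ m := by
          intro hc
          apply hjne
          apply Fin.ext
          exact hc.trans (show ((jm:ℕ)) = m from hjm).symm
        rw [hcoeff _ (lt_of_le_of_ne h1 h2)]
        ring
    · intro hjm'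
      exact absurd (Finset.mem_univ jm) hjm'
  rw [hsum] at hzero
  have hcm : c jm = 0 := by
    have hne : ((-1:ℝ)^m) ≠ 0 := by
      simp
    field_simp at hzero
    simpa [hne] using hzero
  exact (Finset.mem_filter.1 hjmS).2 hcm

section Hard

variable (s : ℕ) (u : E)

/-- The key moment computation. -/
lemma moment_eq (lam : Fin (s+1) → ℝ) {w : ℝ → ℝ} {Cw : ℝ}
    (hwm : Measurable w) (hwb : ∀ x, |w x| ≤ Cw) :
    ∑ i : Fin (s+1), lam i * Dmap u (i : ℕ) 1 (mkW hwm hwb)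
      = ∫ ρ in Set.Ioc 0 1, w ρ *
          (∑ j : Fin s, (lam j.succ * (-1:ℝ)^(j:ℕ) / ((j:ℕ).factorial : ℝ))
            * (aF u 1 - aF u ρ)^(j:ℕ)) ∂μ01 := by
  have hterm : ∀ j : Fin s,
      Integrable (fun ρ => w ρ * ((lam j.succ * (-1:ℝ)^(j:ℕ) / ((j:ℕ).factorial : ℝ))
        * (aF u 1 - aF u ρ)^(j:ℕ))) μ01 := by
    intro j
    refine int_bdd_right (w_int hwm hwb) ?_
      (B := |lam j.succ * (-1:ℝ)^(j:ℕ) / ((j:ℕ).factorial : ℝ)| * Mk u (j:ℕ)) ?_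
    · refine (StronglyMeasurable.const_mul ?_ _).aestronglyMeasurable
      exact ((stronglyMeasurable_const.sub (aF_sm u)).pow _)
    · intro ρ
      rw [abs_mul]
      refine mul_le_mul_of_nonneg_left ?_ (abs_nonneg _)
      have := aF_pow_bd u (aF u 1) ⟨1, rfl⟩ (j:ℕ) ρ
      calc |(aF u 1 - aF u ρ)^(j:ℕ)| = |(aF u ρ - aF u 1)^(j:ℕ)| := by
            rw [abs_pow, abs_pow, abs_sub_comm]
        _ ≤ Mk u (j:ℕ) := this
  rw [Fin.sum_univ_succ, Fin.val_zero]
  rw [dmap_w_zero u hwm hwb 1, mul_zero, zero_add]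
  have e1 : ∀ j : Fin s, lam j.succ * Dmap u ((j.succ : Fin (s+1)) : ℕ) 1 (mkW hwm hwb)
      = ∫ ρ in Set.Ioc 0 1, w ρ * ((lam j.succ * (-1:ℝ)^(j:ℕ) / ((j:ℕ).factorial : ℝ))
          * (aF u 1 - aF u ρ)^(j:ℕ)) ∂μ01 := by
    intro j
    have hv : ((j.succ : Fin (s+1)) : ℕ) = (j:ℕ) + 1 := Fin.val_succ j
    rw [hv, dmap_closed u hwm hwb (j:ℕ) 1]
    rw [← integral_const_mul, ← integral_const_mul]
    refine setIntegral_congr_fun measurableSet_Ioc fun ρ _ => ?_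
    ring
  rw [Finset.sum_congr rfl fun j _ => e1 j]
  rw [← integral_finset_sum _ (fun j _ => (hterm j).integrableOn)]
  refine setIntegral_congr_fun measurableSet_Ioc fun ρ _ => ?_
  rw [Finset.mul_sum]

lemma hard_surj (hu' : ¬ ((fun τ => (u τ).1) =ᵐ[μ01] 0)) :
    Function.Surjective ⇑(Lfd s u) := by
  by_contra hns
  rw [Function.Surjective] at hns
  push_neg at hns
  obtain ⟨y, hy⟩ := hns
  -- get an annihilating functional
  set W : Submodule ℝ (Fin (s+1) → ℝ) :=
    LinearMap.range ((Lfd s u) : E →ₗ[ℝ] (Fin (s+1) → ℝ)) with hW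
  have hyW : y ∉ W := by
    intro hmem
    obtain ⟨h, hh⟩ := hmem
    exact hy h hh
  have hmky : (Submodule.Quotient.mk y : (Fin (s+1) → ℝ) ⧸ W) ≠ 0 :=
    fun hc => hyW ((Submodule.Quotient.mk_eq_zero W).1 hc)
  have : ¬ ∀ φ : Module.Dual ℝ ((Fin (s+1) → ℝ) ⧸ W),
      φ (Submodule.Quotient.mk y) = 0 := by
    rw [Module.forall_dual_apply_eq_zero_iff]
    exact hmky
  obtain ⟨φ, hφ⟩ := not_forall.1 this
  set f : (Fin (s+1) → ℝ) →ₗ[ℝ] ℝ := φ.comp W.mkQ with hf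
  have hfW : ∀ h : E, f (Lfd s u h) = 0 := by
    intro h
    have hmem : Lfd s u h ∈ W := ⟨h, rfl⟩
    show φ (W.mkQ (Lfd s u h)) = 0
    rw [show W.mkQ (Lfd s u h) = 0 from (Submodule.Quotient.mk_eq_zero W).2 hmem]
    exact map_zero φ
  have hfy : f y ≠ 0 := hφ
  set lam : Fin (s+1) → ℝ := fun i => f (fun j => if i = j then 1 else 0) with hlam
  have hf_eq : ∀ x, f x = ∑ i, x i * lam i := by
    intro x
    rw [LinearMap.pi_apply_eq_sum_univ f x]
    refine Finset.sum_congr rfl fun i _ => ?_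
    rw [smul_eq_mul, hlam]
  have hann : ∀ h : E, ∑ i, lam i * Dmap u (i : ℕ) 1 h = 0 := by
    intro h
    have h1 := hfW h
    rw [hf_eq] at h1
    rw [← h1]
    refine Finset.sum_congr rfl fun i _ => ?_
    rw [Lfd_apply, mul_comm]
  -- define the polynomial
  set α : ℝ := aF u 1 with hα
  set c : Fin s → ℝ := fun j => lam j.succ * (-1:ℝ)^(j:ℕ) / ((j:ℕ).factorial : ℝ) with hc
  set P : Polynomial ℝ :=
    ∑ j : Fin s, Polynomial.C (c j) * (Polynomial.C α - Polynomial.X)^(j:ℕ) with hP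
  have hPeval : ∀ y : ℝ, P.eval y = ∑ j : Fin s, c j * (α - y)^(j:ℕ) := by
    intro y
    rw [hP, Polynomial.eval_finset_sum]
    refine Finset.sum_congr rfl fun j _ => ?_
    simp [Polynomial.eval_mul, Polynomial.eval_pow, Polynomial.eval_sub]
  -- φf bounded measurable
  set φf : ℝ → ℝ := fun σ => P.eval (aF u σ) with hφf
  have hφfm : Measurable φf := by
    exact (P.continuous.measurable).comp (aF_sm u).measurable
  obtain ⟨Cb, hCb⟩ : ∃ Cb, ∀ x ∈ Set.Icc (-(∫ τ, |(u τ).1| ∂μ01)) (∫ τ, |(u τ).1| ∂μ01),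
      ‖P.eval x‖ ≤ Cb :=
    (isCompact_Icc).exists_bound_of_continuousOn P.continuous.continuousOn
  have hφfb : ∀ σ, |φf σ| ≤ Cb := by
    intro σ
    have h1 := abs_le.1 (aF_bd u σ)
    have := hCb (aF u σ) ⟨h1.1, h1.2⟩
    rwa [Real.norm_eq_abs] at this
  -- the moment identity specialised at w := φf
  have hmom := moment_eq s u lam hφfm hφfb
  have hint : ∫ ρ in Set.Ioc 0 1, φf ρ * φf ρ ∂μ01 = 0 := by
    have h3 : ∫ ρ in Set.Ioc 0 1, φf ρ *
        (∑ j : Fin s, (lam j.succ * (-1:ℝ)^(j:ℕ) / ((j:ℕ).factorial : ℝ))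
          * (aF u 1 - aF u ρ)^(j:ℕ)) ∂μ01 = 0 := by
      rw [← hmom]
      exact hann (mkW hφfm hφfb)
    have h2 : ∫ ρ in Set.Ioc 0 1, φf ρ *
        (∑ j : Fin s, (lam j.succ * (-1:ℝ)^(j:ℕ) / ((j:ℕ).factorial : ℝ))
          * (aF u 1 - aF u ρ)^(j:ℕ)) ∂μ01
        = ∫ ρ in Set.Ioc 0 1, φf ρ * φf ρ ∂μ01 := by
      refine setIntegral_congr_fun measurableSet_Ioc fun ρ _ => ?_
      have : φf ρ = ∑ j : Fin s, (lam j.succ * (-1:ℝ)^(j:ℕ) / ((j:ℕ).factorial : ℝ))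
          * (aF u 1 - aF u ρ)^(j:ℕ) := by
        rw [hφf]
        simp only
        rw [hPeval (aF u ρ)]
      rw [← this]
    rw [h2] at h3
    exact h3
  -- conclude φf = 0 a.e.
  have hsq_int : Integrable (fun ρ => φf ρ * φf ρ) μ01 :=
    int_bdd_right (w_int hφfm hφfb) hφfm.aestronglyMeasurable hφfb
  have hae2 : (fun ρ => φf ρ * φf ρ) =ᵐ[μ01.restrict (Set.Ioc 0 1)] 0 := by
    rw [← integral_eq_zero_iff_of_nonneg (fun ρ => mul_self_nonneg (φf ρ))
      hsq_int.integrableOn]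
    exact hint
  have haeφ : ∀ᵐ σ ∂(μ01.restrict (Set.Ioc 0 1)), P.eval (aF u σ) = 0 := by
    filter_upwards [hae2] with σ hσ
    have : φf σ * φf σ = 0 := hσ
    exact mul_self_eq_zero.1 this
  have hP0 : P = 0 := poly_zero_of_ae u hu' P haeφ
  have hcz : ∀ j : Fin s, c j = 0 := coeffs_zero α c (hP.symm.trans hP0)
  have hlam_succ : ∀ j : Fin s, lam j.succ = 0 := by
    intro j
    have h1 := hcz j
    rw [hc] at h1
    have h2 : ((-1:ℝ)^(j:ℕ)) ≠ 0 := by simp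
    have h3 : (((j:ℕ).factorial : ℝ)) ≠ 0 := by
      exact_mod_cast Nat.factorial_ne_zero _
    have h4 : lam j.succ * (-1:ℝ)^(j:ℕ) = 0 := by
      rcases div_eq_zero_iff.1 h1 with h | h
      · exact h
      · exact absurd h h3
    rcases mul_eq_zero.1 h4 with h | h
    · exact h
    · exact absurd h h2
  -- the constant direction kills `lam 0`
  set v1 : E := (memLp_one_iff_integrable.mpr
    (integrable_const (((1:ℝ), (0:ℝ)) : ℝ × ℝ))).toLp _ with hv1
  have hv1coe : (v1 : ℝ → ℝ × ℝ) =ᵐ[μ01] fun _ => ((1:ℝ), (0:ℝ)) :=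
    MemLp.coeFn_toLp _
  have hD0 : Dmap u 0 1 v1 = 1 := by
    show (∫ τ in Set.Ioc 0 1, (v1 τ).1 ∂μ01) = 1
    have e1 : ∫ τ in Set.Ioc 0 1, (v1 τ).1 ∂μ01 = ∫ _ in Set.Ioc (0:ℝ) 1, (1:ℝ) ∂μ01 := by
      refine integral_congr_ae (ae_restrict_of_ae ?_)
      filter_upwards [hv1coe] with τ hτ
      rw [hτ]
    rw [e1, setIntegral_const]
    have e2 : μ01 (Set.Ioc 0 1) = 1 := by
      unfold μ01
      rw [Measure.restrict_apply' measurableSet_Icc,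
        Set.inter_eq_left.2 Set.Ioc_subset_Icc_self, Real.volume_Ioc]
      norm_num
    rw [measureReal_def, e2]
    simp
  have h0 := hann v1
  rw [Fin.sum_univ_succ, Fin.val_zero, hD0, mul_one] at h0
  have hsum0 : ∑ j : Fin s, lam j.succ * Dmap u ((j.succ : Fin (s+1)) : ℕ) 1 v1 = 0 := by
    refine Finset.sum_eq_zero fun j _ => ?_
    rw [hlam_succ j, zero_mul]
  rw [hsum0, add_zero] at h0
  -- all `lam` vanish: contradiction with `f y ≠ 0`
  have hlam_all : ∀ i : Fin (s+1), lam i = 0 := by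
    intro i
    refine Fin.cases ?_ ?_ i
    · exact h0
    · exact hlam_succ
  apply hfy
  rw [hf_eq]
  refine Finset.sum_eq_zero fun i _ => ?_
  rw [hlam_all i, mul_zero]

end Hard

lemma easy_notsurj (s : ℕ) (hs : 3 ≤ s) (u : E)
    (hu : (fun τ => (u τ).1) =ᵐ[μ01] 0) : ¬ Function.Surjective ⇑(Lfd s u) := by
  have hc2 : ∀ τ, coordI u 2 τ = 0 := by
    intro τ
    show -∫ ρ in Set.Ioc 0 τ, (u ρ).1 * coordI u 1 ρ ∂μ01 = 0
    have e1 : ∫ ρ in Set.Ioc 0 τ, (u ρ).1 * coordI u 1 ρ ∂μ01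
        = ∫ _ in Set.Ioc (0:ℝ) τ, (0:ℝ) ∂μ01 := by
      refine integral_congr_ae (ae_restrict_of_ae ?_)
      filter_upwards [hu] with ρ hρ
      have : (u ρ).1 = 0 := hρ
      rw [this]
      simp
    rw [e1]
    simp
  have hD3 : ∀ h : E, Dmap u 3 1 h = 0 := by
    intro h
    show -∫ τ in Set.Ioc 0 1, ((h τ).1 * coordI u 2 τ + (u τ).1 * Dmap u 2 τ h) ∂μ01 = 0
    have e1 : ∫ τ in Set.Ioc 0 1, ((h τ).1 * coordI u 2 τ + (u τ).1 * Dmap u 2 τ h) ∂μ01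
        = ∫ _ in Set.Ioc (0:ℝ) 1, (0:ℝ) ∂μ01 := by
      refine integral_congr_ae (ae_restrict_of_ae ?_)
      filter_upwards [hu] with τ hτ
      have h1 : (u τ).1 = 0 := hτ
      rw [hc2 τ, h1]
      simp
    rw [e1]
    simp
  intro hS
  obtain ⟨h, hh⟩ := hS (Pi.single (⟨3, by omega⟩ : Fin (s+1)) 1)
  have h3 := congrFun hh (⟨3, by omega⟩ : Fin (s+1))
  rw [Lfd_apply] at h3
  rw [Pi.single_eq_same] at h3
  have : Dmap u ((⟨3, by omega⟩ : Fin (s+1)) : ℕ) 1 h = Dmap u 3 1 h := rfl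
  rw [this, hD3 h] at h3
  exact zero_ne_one h3

lemma ae_iff_ae (u : E) : ((fun τ => (u τ).1) =ᵐ[μ01] 0) ↔ ∀ᵐ t ∂μ01, (u t).1 = 0 := by
  constructor <;>
    · intro h
      filter_upwards [h] with t ht
      simpa using ht

end Fil

/-- In a type I filiform group of step s ≥ 3, a control is singular iff its first
component vanishes almost everywhere. -/
theorem stmt13 (s : ℕ) (hs : 3 ≤ s) (u : Lp (ℝ × ℝ) 1 μ01) :
    IsSingularI s u ↔ ∀ᵐ t ∂μ01, (u t).1 = 0 := by
  rw [Fil.isSingular_iff s u, ← Fil.ae_iff_ae u]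
  constructor
  · intro hns
    by_contra hae
    exact hns (Fil.hard_surj s u hae)
  · intro hae
    exact Fil.easy_notsurj s hs u hae
end

section
/- Let A₁,...,A_s : [0,1] → ℝ be absolutely continuous functions with A_s constant and A_i'(t) = u₁(t)·A_{i+1}(t) a.e. for i = 1,...,s−1, where u₁ ∈ L¹([0,1],ℝ). Suppose A₁ ≡ 0 on [0,1] and the set C₀ = {t : u₁(t) ≠ 0} has positive Lebesgue measure. Then A₁,...,A_s all vanish at almost every Lebesgue point of u₁ lying in C₀; in particular the constant A_s is zero. -/
open MeasureTheory Set Filter Metric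
open scoped ENNReal

lemma step_aux (u₁ : ℝ → ℝ) (B C : ℝ → ℝ)
    (hu : IntegrableOn u₁ (Set.Icc 0 1))
    (hB : ∀ t ∈ Set.Icc (0:ℝ) 1, B t = B 0 + ∫ τ in Set.Ioc 0 t, u₁ τ * C τ)
    (hgI : IntegrableOn (fun τ => u₁ τ * C τ) (Set.Icc 0 1) volume)
    (hZ : ∀ᵐ t ∂(volume.restrict (Set.Icc (0:ℝ) 1)), u₁ t ≠ 0 → B t = 0) :
    ∀ᵐ t ∂(volume.restrict (Set.Icc (0:ℝ) 1)), u₁ t ≠ 0 → C t = 0 := by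
  set I : Set ℝ := Set.Icc 0 1 with hIdef
  set g : ℝ → ℝ := fun τ => u₁ τ * C τ with hgdef
  obtain ⟨u, hum, huae⟩ : ∃ u : ℝ → ℝ, StronglyMeasurable u ∧ u₁ =ᵐ[volume.restrict I] u :=
    ⟨hu.aestronglyMeasurable.mk u₁, hu.aestronglyMeasurable.stronglyMeasurable_mk,
      hu.aestronglyMeasurable.ae_eq_mk⟩
  have hP : ∀ᵐ t ∂(volume.restrict I), u₁ t = u t ∧ (u₁ t ≠ 0 → B t = 0) := huae.and hZ
  set N := toMeasurable (volume.restrict I) {t | ¬ (u₁ t = u t ∧ (u₁ t ≠ 0 → B t = 0))} with hNdef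
  have hNmeas : MeasurableSet N := measurableSet_toMeasurable _ _
  have hN0 : volume.restrict I N = 0 := by
    rw [hNdef, measure_toMeasurable]; exact hP
  set T := (I ∩ {t | u t ≠ 0}) \ N with hTdef
  have hTmeas : MeasurableSet T := by
    refine MeasurableSet.diff (measurableSet_Icc.inter ?_) hNmeas
    exact hum.measurable (measurableSet_singleton (0:ℝ)).compl
  have hTB : ∀ t ∈ T, B t = 0 ∧ u₁ t ≠ 0 ∧ t ∈ I := by
    rintro t ⟨⟨htI, htu⟩, htN⟩
    have hPt : u₁ t = u t ∧ (u₁ t ≠ 0 → B t = 0) := by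
      by_contra hc; exact htN (subset_toMeasurable _ _ hc)
    have h1 : u₁ t ≠ 0 := by rw [hPt.1]; exact htu
    exact ⟨hPt.2 h1, h1, htI⟩
  have hmemT : ∀ᵐ t ∂(volume.restrict I), (u₁ t ≠ 0 → t ∈ T) := by
    filter_upwards [hP, measure_eq_zero_iff_ae_notMem.1 hN0, ae_restrict_mem measurableSet_Icc]
      with t hPt hNt htI hu1
    exact ⟨⟨htI, show u t ≠ 0 by rw [← hPt.1]; exact hu1⟩, hNt⟩
  have hG : Integrable (I.indicator g) volume := (integrable_indicator_iff measurableSet_Icc).2 hgI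
  set G := I.indicator g with hGdef
  have hdens := Besicovitch.ae_tendsto_measure_inter_div_of_measurableSet volume hTmeas
  have hleb := (Besicovitch.vitaliFamily (volume : Measure ℝ)).ae_tendsto_average_norm_sub
    hG.locallyIntegrable
  have hnot01 : ∀ᵐ t ∂(volume.restrict I), t ≠ 0 ∧ t ≠ 1 := by
    have h01 : (volume.restrict I) ({0, 1} : Set ℝ) = 0 := by
      rw [Measure.restrict_apply ((measurableSet_singleton (1:ℝ)).insert 0)]
      exact measure_mono_null Set.inter_subset_left
        (((Set.countable_singleton (1:ℝ)).insert 0).measure_zero volume)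
    filter_upwards [measure_eq_zero_iff_ae_notMem.1 h01] with t ht
    simp only [Set.mem_insert_iff, Set.mem_singleton_iff, not_or] at ht
    exact ht
  filter_upwards [hmemT, ae_restrict_of_ae hdens, ae_restrict_of_ae hleb,
    ae_restrict_mem measurableSet_Icc, hnot01] with x hxT hxdens hxleb hxI hx01
  intro hu1x
  have hxTm : x ∈ T := hxT hu1x
  have hxIoo : x ∈ Set.Ioo (0:ℝ) 1 :=
    ⟨lt_of_le_of_ne hxI.1 (Ne.symm hx01.1), lt_of_le_of_ne hxI.2 hx01.2⟩
  have hGx : G x = g x := Set.indicator_of_mem hxI g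
  suffices hgx : g x = 0 by
    rcases mul_eq_zero.1 hgx with h | h
    · exact absurd h hu1x
    · exact h
  by_contra hgx0
  set c := |g x| with hc
  have hcpos : 0 < c := abs_pos.2 hgx0
  have hxdens1 : Tendsto (fun r => volume (T ∩ closedBall x r) / volume (closedBall x r))
      (nhdsWithin 0 (Set.Ioi 0)) (nhds 1) := by
    have h1 : T.indicator (1 : ℝ → ℝ≥0∞) x = 1 := Set.indicator_of_mem hxTm 1
    rwa [h1] at hxdens
  have hxleb1 : Tendsto (fun r : ℝ => ⨍ y in closedBall x r, ‖G y - G x‖)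
      (nhdsWithin 0 (Set.Ioi 0)) (nhds 0) :=
    hxleb.comp (Besicovitch.tendsto_filterAt volume x)
  have e1 : ∀ᶠ r in nhdsWithin (0:ℝ) (Set.Ioi 0),
      ENNReal.ofReal (3/4) < volume (T ∩ closedBall x r) / volume (closedBall x r) :=
    hxdens1.eventually (eventually_gt_nhds (ENNReal.ofReal_lt_one.2 (by norm_num)))
  have e2 : ∀ᶠ r in nhdsWithin (0:ℝ) (Set.Ioi 0),
      ⨍ y in closedBall x r, ‖G y - G x‖ < c/8 :=
    hxleb1.eventually (eventually_lt_nhds (by positivity))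
  have e3 : ∀ᶠ r in nhdsWithin (0:ℝ) (Set.Ioi 0), r < min x (1 - x) :=
    eventually_nhdsWithin_of_eventually_nhds
      (eventually_lt_nhds (lt_min hxIoo.1 (by linarith [hxIoo.2])))
  obtain ⟨r, ⟨h1, h2, h3⟩, hr⟩ :=
    ((e1.and (e2.and e3)).and self_mem_nhdsWithin).exists
  replace hr : (0:ℝ) < r := hr
  have hrx : r < x := lt_of_lt_of_le h3 (min_le_left _ _)
  have hrx' : r < 1 - x := lt_of_lt_of_le h3 (min_le_right _ _)
  have hball : closedBall x r ⊆ I := by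
    intro y hy
    rw [mem_closedBall, Real.dist_eq, abs_le] at hy
    exact ⟨by linarith [hy.1], by linarith [hy.2]⟩
  have hvol : volume (closedBall x r) = ENNReal.ofReal (2*r) := by
    rw [Real.volume_closedBall]
  -- find τ in T to the right of x + r/2
  have hτex : ∃ τ, (τ ∈ T ∩ closedBall x r) ∧ x + r/2 < τ := by
    by_contra hno
    push_neg at hno
    have hsub : T ∩ closedBall x r ⊆ Set.Icc (x - r) (x + r/2) := by
      rintro y ⟨hyT, hyb⟩
      rw [mem_closedBall, Real.dist_eq, abs_le] at hyb
      exact ⟨by linarith [hyb.1], hno y ⟨hyT, by rw [mem_closedBall, Real.dist_eq, abs_le]; exact hyb⟩⟩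
    have hle : volume (T ∩ closedBall x r) ≤ ENNReal.ofReal (3/4) * ENNReal.ofReal (2*r) := by
      calc volume (T ∩ closedBall x r) ≤ volume (Set.Icc (x - r) (x + r/2)) := measure_mono hsub
        _ = ENNReal.ofReal (x + r/2 - (x - r)) := Real.volume_Icc
        _ = ENNReal.ofReal ((3/4) * (2*r)) := by ring_nf
        _ = ENNReal.ofReal (3/4) * ENNReal.ofReal (2*r) := ENNReal.ofReal_mul (by norm_num)
    have hlt : ENNReal.ofReal (3/4) * ENNReal.ofReal (2*r) < volume (T ∩ closedBall x r) := by
      rw [hvol] at h1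
      exact (ENNReal.lt_div_iff_mul_lt (Or.inl ((ENNReal.ofReal_pos.2 (by linarith)).ne'))
        (Or.inl ENNReal.ofReal_ne_top)).1 h1
    exact absurd hle (not_le.2 hlt)
  obtain ⟨τ, ⟨hτT, hτball⟩, hτgt⟩ := hτex
  have hτI : τ ∈ I := hball hτball
  have hτx : x < τ := by linarith
  have hτr : τ ≤ x + r := by
    have hd : |τ - x| ≤ r := by rw [← Real.dist_eq]; exact mem_closedBall.1 hτball
    linarith [(abs_le.1 hd).2]
  -- the integral of g over Ioc x τ vanishes
  have hI0x : IntegrableOn g (Set.Ioc 0 x) volume :=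
    hgI.mono_set (fun y hy => ⟨le_of_lt hy.1, hy.2.trans hxI.2⟩)
  have hIxτ : IntegrableOn g (Set.Ioc x τ) volume :=
    hgI.mono_set (fun y hy => ⟨hxI.1.trans (le_of_lt hy.1), hy.2.trans hτI.2⟩)
  have hBx : B x = 0 := (hTB x hxTm).1
  have hBτ : B τ = 0 := (hTB τ hτT).1
  have hsum : (∫ y in Set.Ioc 0 x, g y) + (∫ y in Set.Ioc x τ, g y) = ∫ y in Set.Ioc 0 τ, g y := by
    rw [← Set.Ioc_union_Ioc_eq_Ioc hxI.1 (le_of_lt hτx)]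
    exact (setIntegral_union (Set.Ioc_disjoint_Ioc_of_le le_rfl) measurableSet_Ioc hI0x hIxτ).symm
  have hint0 : ∫ y in Set.Ioc x τ, g y = 0 := by
    have hhx := hB x hxI
    have hhτ := hB τ hτI
    rw [hBx] at hhx
    rw [hBτ] at hhτ
    have : (∫ y in Set.Ioc 0 x, g y) = ∫ y in Set.Ioc 0 τ, g y := by
      simp only [hgdef] at hhx hhτ ⊢
      linarith
    linarith [hsum]
  have hsubball : Set.Ioc x τ ⊆ closedBall x r := by
    intro y hy
    rw [mem_closedBall, Real.dist_eq, abs_le]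
    exact ⟨by linarith [hy.1], by linarith [hy.2]⟩
  have hGeq : Set.EqOn g G (Set.Ioc x τ) := fun y hy =>
    (Set.indicator_of_mem (hball (hsubball hy)) g).symm
  have hintG0 : ∫ y in Set.Ioc x τ, G y = 0 := by
    rw [← setIntegral_congr_fun measurableSet_Ioc hGeq]
    exact hint0
  have hvolIoc : (volume (Set.Ioc x τ)).toReal = τ - x := by
    rw [Real.volume_Ioc, ENNReal.toReal_ofReal (by linarith)]
  have hGint : IntegrableOn G (Set.Ioc x τ) volume := hG.integrableOn
  have hconst : IntegrableOn (fun _ : ℝ => G x) (Set.Ioc x τ) volume :=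
    integrableOn_const (by rw [Real.volume_Ioc]; exact ENNReal.ofReal_ne_top)
  have h0 : ∫ _ in Set.Ioc x τ, G x = (τ - x) * G x := by
    rw [setIntegral_const, measureReal_def, hvolIoc, smul_eq_mul]
  have h1' : ∫ y in Set.Ioc x τ, (G x - G y) = (τ - x) * G x := by
    rw [integral_sub hconst hGint, hintG0, h0, sub_zero]
  have hnormint : IntegrableOn (fun y => ‖G y - G x‖) (closedBall x r) volume :=
    ((hG.integrableOn).sub (integrableOn_const (by
      rw [hvol]; exact ENNReal.ofReal_ne_top))).norm
  have key : c * (τ - x) ≤ ∫ y in closedBall x r, ‖G y - G x‖ := by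
    calc c * (τ - x) = |G x| * (τ - x) := by rw [hc, hGx]
      _ = |(τ - x) * G x| := by
          rw [abs_mul, abs_of_pos (by linarith : (0:ℝ) < τ - x)]; ring
      _ = ‖∫ y in Set.Ioc x τ, (G x - G y)‖ := by rw [h1', Real.norm_eq_abs]
      _ ≤ ∫ y in Set.Ioc x τ, ‖G x - G y‖ := norm_integral_le_integral_norm _
      _ = ∫ y in Set.Ioc x τ, ‖G y - G x‖ := by simp_rw [norm_sub_rev]
      _ ≤ ∫ y in closedBall x r, ‖G y - G x‖ :=
          setIntegral_mono_set hnormint (Eventually.of_forall fun y => norm_nonneg _)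
            (HasSubset.Subset.eventuallyLE hsubball)
  have hvt : (volume (closedBall x r)).toReal = 2*r := by
    rw [hvol, ENNReal.toReal_ofReal (by linarith)]
  rw [setAverage_eq, measureReal_def, hvt, smul_eq_mul] at h2
  rw [inv_mul_lt_iff₀ (by linarith : (0:ℝ) < 2*r)] at h2
  nlinarith [key, h2, hcpos, hr, hτgt]

/-- `t` is a Lebesgue point of `u₁`. -/
def IsLebesguePoint (u₁ : ℝ → ℝ) (t : ℝ) : Prop :=
  Filter.Tendsto (fun ε : ℝ => ⨍ τ in Set.Ioo (t - ε) (t + ε), |u₁ τ - u₁ t|)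
    (nhdsWithin 0 (Set.Ioi 0)) (nhds 0)

/-- If A₁,…,A_s are absolutely continuous on [0,1] with A_s constant,
A_i' = u₁·A_{i+1} a.e., A₁ ≡ 0, and u₁ ≠ 0 on a set of positive measure, then all the
A_i vanish at almost every Lebesgue point of u₁ where u₁ ≠ 0; in particular A_s ≡ 0. -/
theorem stmt19 (s : ℕ) (hs : 1 ≤ s) (u₁ : ℝ → ℝ)
    (hu : IntegrableOn u₁ (Set.Icc 0 1))
    (A : ℕ → ℝ → ℝ)
    (hAC : ∀ i ∈ Finset.Icc 1 (s-1), ∀ t ∈ Set.Icc (0:ℝ) 1,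
      A i t = A i 0 + ∫ τ in Set.Ioc 0 t, u₁ τ * A (i+1) τ)
    (hAcont : ∀ i ∈ Finset.Icc 1 s, ContinuousOn (A i) (Set.Icc 0 1))
    (hAs : ∀ t t' : ℝ, A s t = A s t')
    (hA1 : ∀ t ∈ Set.Icc (0:ℝ) 1, A 1 t = 0)
    (hC : 0 < volume {t ∈ Set.Icc (0:ℝ) 1 | u₁ t ≠ 0}) :
    (∀ᵐ t ∂(volume.restrict (Set.Icc (0:ℝ) 1)),
      (u₁ t ≠ 0 ∧ IsLebesguePoint u₁ t) → ∀ i ∈ Finset.Icc 1 s, A i t = 0) ∧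
    (∀ t, A s t = 0) := by
  have hZ : ∀ i, 1 ≤ i → i ≤ s →
      ∀ᵐ t ∂(volume.restrict (Set.Icc (0:ℝ) 1)), u₁ t ≠ 0 → A i t = 0 := by
    intro i
    induction i with
    | zero => intro h; exact absurd h (by omega)
    | succ n ih =>
      intro _ hle
      rcases Nat.eq_zero_or_pos n with hn0 | hn1
      · subst hn0
        filter_upwards [ae_restrict_mem measurableSet_Icc] with t htI _
        exact hA1 t htI
      · have hBae := ih hn1 (by omega)
        have hmem : n ∈ Finset.Icc 1 (s-1) := by rw [Finset.mem_Icc]; omega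
        have hmem' : n + 1 ∈ Finset.Icc 1 s := by rw [Finset.mem_Icc]; omega
        have hgI : IntegrableOn (fun τ => u₁ τ * A (n+1) τ) (Set.Icc 0 1) volume :=
          hu.mul_continuousOn (hAcont (n+1) hmem') isCompact_Icc
        exact step_aux u₁ (A n) (A (n+1)) hu (hAC n hmem) hgI hBae
  constructor
  · have hall : ∀ᵐ t ∂(volume.restrict (Set.Icc (0:ℝ) 1)),
        ∀ i, i ∈ Finset.Icc 1 s → (u₁ t ≠ 0 → A i t = 0) := by
      rw [ae_all_iff]
      intro i
      by_cases hi : i ∈ Finset.Icc 1 s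
      · rw [Finset.mem_Icc] at hi
        exact (hZ i hi.1 hi.2).mono (fun t h _ hu1 => h hu1)
      · exact Eventually.of_forall (fun t hm => absurd hm hi)
    filter_upwards [hall] with t ht hcond i hi
    exact ht i hi hcond.1
  · have hZs := hZ s hs le_rfl
    rw [ae_restrict_iff' measurableSet_Icc] at hZs
    have hex : ∃ t₀, A s t₀ = 0 := by
      by_contra hno
      push_neg at hno
      have hsub : {t ∈ Set.Icc (0:ℝ) 1 | u₁ t ≠ 0} ⊆
          {t | ¬ (t ∈ Set.Icc (0:ℝ) 1 → (u₁ t ≠ 0 → A s t = 0))} := by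
        rintro t ⟨htI, htu⟩ hcon
        exact hno t (hcon htI htu)
      exact hC.ne' (measure_mono_null hsub (ae_iff.1 hZs))
    obtain ⟨t₀, ht₀⟩ := hex
    exact fun t => (hAs t t₀).trans ht₀
end
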